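/- arXiv:1106.3936 — 9 statements merged into one kernel-verified Lean document; each statement's English description precedes it below -/
import Mathlib

section
/- Suppose m⁻, m⁺ ≥ 1 are integers, α_i^± ∈ ℝ with Σ_{i=1}^{m⁻}|α_i^-| < 1 and Σ_{i=1}^{m⁺}|α_i^+| < 1, and η_i^± ∈ [-1,1] with η_i^+ ≠ 1 and η_i^- ≠ -1. Then for every continuous function h : [-1,1] → ℝ there exists a unique twice continuously differentiable function u : [-1,1] → ℝ such that u''(x) = h(x) for all x ∈ [-1,1] and u satisfies the multi-point boundary conditions u(−1) = Σ_{i=1}^{m⁻} α_i^- u(η_i^-) and u(1) = Σ_{i=1}^{m⁺} α_i^+ u(η_i^+). -/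
open Set Real

noncomputable section

/-- `u` is twice continuously differentiable on `[-1,1]`, with first derivative `u'`
and second derivative `u''` there. -/
def C2I (u u' u'' : ℝ → ℝ) : Prop :=
  (∀ x ∈ Set.Icc (-1:ℝ) 1, HasDerivWithinAt u (u' x) (Set.Icc (-1:ℝ) 1) x) ∧
  (∀ x ∈ Set.Icc (-1:ℝ) 1, HasDerivWithinAt u' (u'' x) (Set.Icc (-1:ℝ) 1) x) ∧
  ContinuousOn u'' (Set.Icc (-1:ℝ) 1)

/-- FTC: the primitive of a continuous function on `[-1,1]` has derivative within `[-1,1]`. -/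
lemma ftc_icc (F : ℝ → ℝ) (hF : ContinuousOn F (Set.Icc (-1:ℝ) 1)) {x : ℝ}
    (hx : x ∈ Set.Icc (-1:ℝ) 1) :
    HasDerivWithinAt (fun y => ∫ t in (-1:ℝ)..y, F t) (F x) (Set.Icc (-1:ℝ) 1) x := by
  haveI : Fact (x ∈ Set.Icc (-1:ℝ) 1) := ⟨hx⟩
  apply intervalIntegral.integral_hasDerivWithinAt_right
    (t := Set.Icc (-1:ℝ) 1)
  · apply ContinuousOn.intervalIntegrable
    apply hF.mono
    exact (Set.ordConnected_Icc).uIcc_subset (Set.left_mem_Icc.2 (by norm_num)) hx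
  · exact hF.stronglyMeasurableAtFilter_nhdsWithin measurableSet_Icc x
  · exact hF x hx

/-- A function with zero derivative within `[-1,1]` is constant there. -/
lemma const_of_deriv0 (f : ℝ → ℝ)
    (hf : ∀ x ∈ Set.Icc (-1:ℝ) 1, HasDerivWithinAt f 0 (Set.Icc (-1:ℝ) 1) x)
    {x y : ℝ} (hx : x ∈ Set.Icc (-1:ℝ) 1) (hy : y ∈ Set.Icc (-1:ℝ) 1) : f x = f y := by
  have hud : UniqueDiffOn ℝ (Set.Icc (-1:ℝ) 1) := uniqueDiffOn_Icc (by norm_num)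
  apply (convex_Icc (-1:ℝ) 1).is_const_of_fderivWithin_eq_zero
    (fun z hz => (hf z hz).differentiableWithinAt) ?_ hx hy
  intro z hz
  have h0 : HasFDerivWithinAt f (0 : ℝ →L[ℝ] ℝ) (Set.Icc (-1:ℝ) 1) z := by
    have hz0 : ContinuousLinearMap.toSpanSingleton ℝ (0:ℝ) = 0 := by
      ext; simp
    have := (hf z hz).hasFDerivWithinAt
    rwa [hz0] at this
  exact h0.fderivWithin (hud z hz)

/-- Solvability of the 2×2 linear system for the boundary conditions. -/
lemma solve_sys (Am Bm Ap Bp c₁ c₂ : ℝ) (hAm : Am < 1) (hAp : Ap < 1)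
    (hBm : -1 < Bm) (hBp : Bp < 1) :
    ∃ a b : ℝ, a * (1 - Am) - b * (1 + Bm) = c₁ ∧ a * (1 - Ap) + b * (1 - Bp) = c₂ := by
  have hD : 0 < (1 - Am) * (1 - Bp) + (1 - Ap) * (1 + Bm) :=
    add_pos (mul_pos (by linarith) (by linarith)) (mul_pos (by linarith) (by linarith))
  refine ⟨(c₁ * (1 - Bp) + c₂ * (1 + Bm)) / ((1 - Am) * (1 - Bp) + (1 - Ap) * (1 + Bm)),
      ((1 - Am) * c₂ - (1 - Ap) * c₁) / ((1 - Am) * (1 - Bp) + (1 - Ap) * (1 + Bm)), ?_, ?_⟩ <;>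
    · simp only [div_mul_eq_mul_div, ← sub_div, ← add_div]
      rw [div_eq_iff hD.ne']
      ring

/-- Uniqueness of the 2×2 homogeneous system. -/
lemma uniq_sys (Am Bm Ap Bp A B : ℝ) (hAm : Am < 1) (hAp : Ap < 1)
    (hBm : -1 < Bm) (hBp : Bp < 1)
    (e1 : A * (1 - Am) - B * (1 + Bm) = 0) (e2 : A * (1 - Ap) + B * (1 - Bp) = 0) :
    A = 0 ∧ B = 0 := by
  have hD : 0 < (1 - Am) * (1 - Bp) + (1 - Ap) * (1 + Bm) :=
    add_pos (mul_pos (by linarith) (by linarith)) (mul_pos (by linarith) (by linarith))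
  have hA : A * ((1 - Am) * (1 - Bp) + (1 - Ap) * (1 + Bm)) = 0 := by
    linear_combination e1 * (1 - Bp) + e2 * (1 + Bm)
  have hA0 : A = 0 := by
    rcases mul_eq_zero.1 hA with h | h
    · exact h
    · exact absurd h hD.ne'
  constructor
  · exact hA0
  · rw [hA0] at e1
    have : B * (1 + Bm) = 0 := by linarith
    rcases mul_eq_zero.1 this with h | h
    · exact h
    · exact absurd h (by linarith)

theorem stmt0
    (mneg mpos : ℕ) (hmneg : 1 ≤ mneg) (hmpos : 1 ≤ mpos)
    (αneg : Fin mneg → ℝ) (αpos : Fin mpos → ℝ)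
    (ηneg : Fin mneg → ℝ) (ηpos : Fin mpos → ℝ)
    (hηneg : ∀ i, ηneg i ∈ Set.Icc (-1:ℝ) 1 ∧ ηneg i ≠ -1)
    (hηpos : ∀ i, ηpos i ∈ Set.Icc (-1:ℝ) 1 ∧ ηpos i ≠ 1)
    (hαneg : ∑ i, |αneg i| < 1) (hαpos : ∑ i, |αpos i| < 1)
    (h : ℝ → ℝ) (hh : ContinuousOn h (Set.Icc (-1:ℝ) 1)) :
    (∃ u u' u'' : ℝ → ℝ, C2I u u' u'' ∧
      (∀ x ∈ Set.Icc (-1:ℝ) 1, u'' x = h x) ∧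
      u (-1) = ∑ i, αneg i * u (ηneg i) ∧ u 1 = ∑ i, αpos i * u (ηpos i)) ∧
    (∀ u₁ u₁' u₁'' u₂ u₂' u₂'' : ℝ → ℝ,
      C2I u₁ u₁' u₁'' → (∀ x ∈ Set.Icc (-1:ℝ) 1, u₁'' x = h x) →
      u₁ (-1) = ∑ i, αneg i * u₁ (ηneg i) → u₁ 1 = ∑ i, αpos i * u₁ (ηpos i) →
      C2I u₂ u₂' u₂'' → (∀ x ∈ Set.Icc (-1:ℝ) 1, u₂'' x = h x) →
      u₂ (-1) = ∑ i, αneg i * u₂ (ηneg i) → u₂ 1 = ∑ i, αpos i * u₂ (ηpos i) →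
      Set.EqOn u₁ u₂ (Set.Icc (-1:ℝ) 1)) := by
  set I : Set ℝ := Set.Icc (-1:ℝ) 1 with hI
  have hm1 : (-1:ℝ) ∈ I := Set.left_mem_Icc.2 (by norm_num)
  have hp1 : (1:ℝ) ∈ I := Set.right_mem_Icc.2 (by norm_num)
  -- coefficient bounds
  set Am := ∑ i, αneg i with hAmdef
  set Bm := ∑ i, αneg i * ηneg i with hBmdef
  set Ap := ∑ i, αpos i with hApdef
  set Bp := ∑ i, αpos i * ηpos i with hBpdef
  have hAm : Am < 1 :=
    lt_of_le_of_lt (Finset.sum_le_sum fun i _ => le_abs_self _) hαneg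
  have hAp : Ap < 1 :=
    lt_of_le_of_lt (Finset.sum_le_sum fun i _ => le_abs_self _) hαpos
  have hBmabs : |Bm| < 1 := by
    refine lt_of_le_of_lt ((Finset.abs_sum_le_sum_abs _ _).trans
      (Finset.sum_le_sum fun i _ => ?_)) hαneg
    rw [abs_mul]
    have h1 : |ηneg i| ≤ 1 := abs_le.2 ⟨(hηneg i).1.1, (hηneg i).1.2⟩
    nlinarith [abs_nonneg (αneg i)]
  have hBpabs : |Bp| < 1 := by
    refine lt_of_le_of_lt ((Finset.abs_sum_le_sum_abs _ _).trans
      (Finset.sum_le_sum fun i _ => ?_)) hαpos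
    rw [abs_mul]
    have h1 : |ηpos i| ≤ 1 := abs_le.2 ⟨(hηpos i).1.1, (hηpos i).1.2⟩
    nlinarith [abs_nonneg (αpos i)]
  have hBm : -1 < Bm := neg_lt_of_abs_lt hBmabs
  have hBp : Bp < 1 := lt_of_abs_lt hBpabs
  -- particular solution
  set g : ℝ → ℝ := fun x => ∫ t in (-1:ℝ)..x, h t with hgdef
  have hg : ∀ x ∈ I, HasDerivWithinAt g (h x) I x := fun x hx => ftc_icc h hh hx
  have hgc : ContinuousOn g I := fun x hx => (hg x hx).continuousWithinAt
  set v : ℝ → ℝ := fun x => ∫ t in (-1:ℝ)..x, g t with hvdef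
  have hv : ∀ x ∈ I, HasDerivWithinAt v (g x) I x := fun x hx => ftc_icc g hgc hx
  have hvm1 : v (-1) = 0 := intervalIntegral.integral_same
  -- solve the boundary system
  obtain ⟨a, b, e1, e2⟩ := solve_sys Am Bm Ap Bp (∑ i, αneg i * v (ηneg i))
    (∑ i, αpos i * v (ηpos i) - v 1) hAm hAp hBm hBp
  constructor
  · -- existence
    refine ⟨fun x => v x + a + b * x, fun x => g x + b, h, ⟨?_, ?_, hh⟩, fun x _ => rfl, ?_, ?_⟩
    · intro x hx
      have h1 := ((hv x hx).add_const a).add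
        ((hasDerivWithinAt_id x I).const_mul b)
      exact h1.congr_deriv (by ring)
    · intro x hx
      simpa using (hg x hx).add_const b
    · have expand : ∑ i, αneg i * (v (ηneg i) + a + b * ηneg i)
          = (∑ i, αneg i * v (ηneg i)) + a * Am + b * Bm := by
        rw [hAmdef, hBmdef, Finset.mul_sum, Finset.mul_sum, ← Finset.sum_add_distrib,
          ← Finset.sum_add_distrib]
        exact Finset.sum_congr rfl fun i _ => by ring
      simp only [expand, hvm1]
      linarith
    · have expand : ∑ i, αpos i * (v (ηpos i) + a + b * ηpos i)
          = (∑ i, αpos i * v (ηpos i)) + a * Ap + b * Bp := by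
        rw [hApdef, hBpdef, Finset.mul_sum, Finset.mul_sum, ← Finset.sum_add_distrib,
          ← Finset.sum_add_distrib]
        exact Finset.sum_congr rfl fun i _ => by ring
      simp only [expand]
      linarith
  · -- uniqueness
    intro u₁ u₁' u₁'' u₂ u₂' u₂'' hc1 hu1 hb1m hb1p hc2 hu2 hb2m hb2p
    obtain ⟨hc1a, hc1b, -⟩ := hc1
    obtain ⟨hc2a, hc2b, -⟩ := hc2
    set w : ℝ → ℝ := fun x => u₁ x - u₂ x with hwdef
    -- w' := u₁' - u₂' is constant on I
    have hw'0 : ∀ x ∈ I, HasDerivWithinAt (fun y => u₁' y - u₂' y) 0 I x := by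
      intro x hx
      have := (hc1b x hx).sub (hc2b x hx)
      rw [hu1 x hx, hu2 x hx, sub_self] at this
      exact this
    set B : ℝ := u₁' (-1) - u₂' (-1) with hBdef
    have hw' : ∀ x ∈ I, u₁' x - u₂' x = B := fun x hx =>
      const_of_deriv0 _ hw'0 hx hm1
    -- w - B*x is constant
    have hφ0 : ∀ x ∈ I, HasDerivWithinAt (fun y => w y - B * y) 0 I x := by
      intro x hx
      have h1 := ((hc1a x hx).sub (hc2a x hx)).sub
        ((hasDerivWithinAt_id x I).const_mul B)
      rw [show u₁' x - u₂' x - B * 1 = 0 from by rw [hw' x hx]; ring] at h1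
      exact h1
    set A : ℝ := w (-1) - B * (-1) with hAdef
    have hw : ∀ x ∈ I, w x = A + B * x := by
      intro x hx
      have := const_of_deriv0 _ hφ0 hx hm1
      rw [hAdef]; linarith
    -- boundary conditions for w
    have ebm : w (-1) = ∑ i, αneg i * w (ηneg i) := by
      simp only [hwdef]
      rw [hb1m, hb2m, ← Finset.sum_sub_distrib]
      exact Finset.sum_congr rfl fun i _ => by ring
    have ebp : w 1 = ∑ i, αpos i * w (ηpos i) := by
      simp only [hwdef]
      rw [hb1p, hb2p, ← Finset.sum_sub_distrib]
      exact Finset.sum_congr rfl fun i _ => by ring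
    have sm : ∑ i, αneg i * w (ηneg i) = A * Am + B * Bm := by
      rw [hAmdef, hBmdef, Finset.mul_sum, Finset.mul_sum, ← Finset.sum_add_distrib]
      exact Finset.sum_congr rfl fun i _ => by rw [hw _ (hηneg i).1]; ring
    have sp : ∑ i, αpos i * w (ηpos i) = A * Ap + B * Bp := by
      rw [hApdef, hBpdef, Finset.mul_sum, Finset.mul_sum, ← Finset.sum_add_distrib]
      exact Finset.sum_congr rfl fun i _ => by rw [hw _ (hηpos i).1]; ring
    have e1' : A * (1 - Am) - B * (1 + Bm) = 0 := by
      have := ebm; rw [sm, hw _ hm1] at this; linarith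
    have e2' : A * (1 - Ap) + B * (1 - Bp) = 0 := by
      have := ebp; rw [sp, hw _ hp1] at this; linarith
    obtain ⟨hA0, hB0⟩ := uniq_sys Am Bm Ap Bp A B hAm hAp hBm hBp e1' e2'
    intro x hx
    have := hw x hx
    rw [hA0, hB0] at this
    simp only [hwdef] at this
    linarith
end
end

section
/- Let λ > 0 and let u be a twice continuously differentiable function on [-1,1], not identically zero, satisfying −u'' = λ r u on (−1,1). Define E(x) := u'(x)² + λ r(x) u(x)². Then c_min · E(0) ≤ E(x) ≤ c_max · E(0) for all x ∈ [-1,1]. -/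
open Set Real

noncomputable section

/-- `r` is continuously differentiable on `[-1,1]`, with derivative `r'` there. -/
def C1I (r r' : ℝ → ℝ) : Prop :=
  (∀ x ∈ Set.Icc (-1:ℝ) 1, HasDerivWithinAt r (r' x) (Set.Icc (-1:ℝ) 1) x) ∧
  ContinuousOn r' (Set.Icc (-1:ℝ) 1)

lemma aux_anti (E : ℝ → ℝ) (K : ℝ) (hK : 0 ≤ K) (hE0 : 0 ≤ E 0)
    (hm : AntitoneOn (fun t => E t * Real.exp (-K * t)) (Set.Icc (-1:ℝ) 1)) :
    (∀ x ∈ Set.Icc (0:ℝ) 1, E x ≤ Real.exp (2*K) * E 0) ∧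
    (∀ x ∈ Set.Icc (-1:ℝ) 0, Real.exp (-(2*K)) * E 0 ≤ E x) := by
  have h0mem : (0:ℝ) ∈ Set.Icc (-1:ℝ) 1 := by norm_num
  constructor
  · intro x hx
    have hxmem : x ∈ Set.Icc (-1:ℝ) 1 := ⟨by linarith [hx.1], hx.2⟩
    have h1 : E x * Real.exp (-K*x) ≤ E 0 := by
      simpa using hm h0mem hxmem hx.1
    calc E x = (E x * Real.exp (-K*x)) * Real.exp (K*x) := by
          rw [mul_assoc, ← Real.exp_add, neg_mul, neg_add_cancel, Real.exp_zero, mul_one]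
      _ ≤ E 0 * Real.exp (K*x) := mul_le_mul_of_nonneg_right h1 (Real.exp_pos _).le
      _ ≤ E 0 * Real.exp (2*K) := by
          apply mul_le_mul_of_nonneg_left _ hE0
          exact Real.exp_le_exp.2 (by nlinarith [hx.2])
      _ = Real.exp (2*K) * E 0 := mul_comm _ _
  · intro x hx
    have hxmem : x ∈ Set.Icc (-1:ℝ) 1 := ⟨hx.1, by linarith [hx.2]⟩
    have h1 : E 0 ≤ E x * Real.exp (-K*x) := by
      simpa using hm hxmem h0mem hx.2
    calc Real.exp (-(2*K)) * E 0 ≤ Real.exp (K*x) * E 0 := by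
          apply mul_le_mul_of_nonneg_right _ hE0
          exact Real.exp_le_exp.2 (by nlinarith [hx.1])
      _ = E 0 * Real.exp (K*x) := mul_comm _ _
      _ ≤ (E x * Real.exp (-K*x)) * Real.exp (K*x) :=
          mul_le_mul_of_nonneg_right h1 (Real.exp_pos _).le
      _ = E x := by
          rw [mul_assoc, ← Real.exp_add, neg_mul, neg_add_cancel, Real.exp_zero, mul_one]

lemma aux_mono (E : ℝ → ℝ) (K : ℝ) (hK : 0 ≤ K) (hE0 : 0 ≤ E 0)
    (hm : MonotoneOn (fun t => E t * Real.exp (K * t)) (Set.Icc (-1:ℝ) 1)) :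
    (∀ x ∈ Set.Icc (0:ℝ) 1, Real.exp (-(2*K)) * E 0 ≤ E x) ∧
    (∀ x ∈ Set.Icc (-1:ℝ) 0, E x ≤ Real.exp (2*K) * E 0) := by
  have hanti : AntitoneOn (fun t => E (-t) * Real.exp (-K * t)) (Set.Icc (-1:ℝ) 1) := by
    intro a ha b hb hab
    have ha' : -a ∈ Set.Icc (-1:ℝ) 1 := ⟨by linarith [ha.2], by linarith [ha.1]⟩
    have hb' : -b ∈ Set.Icc (-1:ℝ) 1 := ⟨by linarith [hb.2], by linarith [hb.1]⟩
    have := hm hb' ha' (by linarith)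
    simpa [mul_neg, neg_mul] using this
  have h := aux_anti (fun t => E (-t)) K hK (by simpa using hE0) hanti
  constructor
  · intro x hx
    have := h.2 (-x) ⟨by linarith [hx.2], by linarith [hx.1]⟩
    simpa using this
  · intro x hx
    have := h.1 (-x) ⟨by linarith [hx.2], by linarith [hx.1]⟩
    simpa using this

theorem stmt1
    (r r' : ℝ → ℝ) (hr : C1I r r') (hrpos : ∀ x ∈ Set.Icc (-1:ℝ) 1, 0 < r x)
    (rmin Mp Mm cmin cmax : ℝ)
    (hrmin : IsLeast (r '' Set.Icc (-1:ℝ) 1) rmin)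
    (hMp : IsGreatest ((fun x => max (r' x) 0) '' Set.Icc (-1:ℝ) 1) Mp)
    (hMm : IsGreatest ((fun x => max (-(r' x)) 0) '' Set.Icc (-1:ℝ) 1) Mm)
    (hcmin : cmin = min (Real.exp (-(2 * Mp) / rmin)) (Real.exp (-(2 * Mm) / rmin)))
    (hcmax : cmax = cmin⁻¹)
    (l : ℝ) (hl : 0 < l)
    (u u' u'' : ℝ → ℝ) (hu : C2I u u' u'')
    (hnt : ∃ x ∈ Set.Icc (-1:ℝ) 1, u x ≠ 0)
    (hode : ∀ x ∈ Set.Ioo (-1:ℝ) 1, -(u'' x) = l * r x * u x)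
    (E : ℝ → ℝ) (hE : ∀ x, E x = (u' x) ^ 2 + l * r x * (u x) ^ 2) :
    ∀ x ∈ Set.Icc (-1:ℝ) 1, cmin * E 0 ≤ E x ∧ E x ≤ cmax * E 0 := by
  obtain ⟨hu1, hu2, hu3⟩ := hu
  obtain ⟨hr1, hr2⟩ := hr
  have h0I : (0:ℝ) ∈ Set.Icc (-1:ℝ) 1 := by norm_num
  -- basic facts about rmin, Mp, Mm
  have hrminpos : 0 < rmin := by
    obtain ⟨x0, hx0, heq⟩ := hrmin.1
    exact heq ▸ hrpos x0 hx0
  have hrmin_le : ∀ x ∈ Set.Icc (-1:ℝ) 1, rmin ≤ r x := fun x hx =>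
    hrmin.2 (Set.mem_image_of_mem r hx)
  have hMp0 : 0 ≤ Mp := by
    obtain ⟨x0, hx0, heq⟩ := hMp.1
    simp only at heq
    rw [← heq]; exact le_max_right _ _
  have hMm0 : 0 ≤ Mm := by
    obtain ⟨x0, hx0, heq⟩ := hMm.1
    simp only at heq
    rw [← heq]; exact le_max_right _ _
  have hr'le : ∀ x ∈ Set.Icc (-1:ℝ) 1, r' x ≤ Mp := fun x hx =>
    le_trans (le_max_left _ 0) (hMp.2 (Set.mem_image_of_mem _ hx))
  have hr'ge : ∀ x ∈ Set.Icc (-1:ℝ) 1, -Mm ≤ r' x := fun x hx => by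
    have := le_trans (le_max_left (-(r' x)) 0) (hMm.2 (Set.mem_image_of_mem _ hx))
    linarith
  have hEnn : ∀ x ∈ Set.Icc (-1:ℝ) 1, 0 ≤ E x := fun x hx => by
    rw [hE]
    have := hrpos x hx
    positivity
  have hE0 : 0 ≤ E 0 := hEnn 0 h0I
  -- derivative of E
  have hEderiv : ∀ x ∈ Set.Icc (-1:ℝ) 1, HasDerivWithinAt E
      (u'' x * u' x + u' x * u'' x +
        l * (r' x * (u x * u x) + r x * (u' x * u x + u x * u' x)))
      (Set.Icc (-1:ℝ) 1) x := by
    intro x hx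
    have hA := (hu2 x hx).mul (hu2 x hx)
    have hB := (hu1 x hx).mul (hu1 x hx)
    have hC := ((hr1 x hx).mul hB).const_mul l
    have hsum := hA.add hC
    have hfun : E = fun t => u' t * u' t + l * (r t * (u t * u t)) := by
      funext t; rw [hE t]; ring
    rw [hfun]
    exact hsum
  have hEcont : ContinuousOn E (Set.Icc (-1:ℝ) 1) := fun x hx =>
    ((hEderiv x hx).differentiableWithinAt).continuousWithinAt
  have hEIoo : ∀ x ∈ Set.Ioo (-1:ℝ) 1, HasDerivAt E (l * r' x * u x ^ 2) x := by
    intro x hx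
    have hx' : x ∈ Set.Icc (-1:ℝ) 1 := Set.Ioo_subset_Icc_self hx
    have h := (hEderiv x hx').hasDerivAt (Icc_mem_nhds hx.1 hx.2)
    have hu'' : u'' x = -(l * r x * u x) := by
      have := hode x hx; linarith
    refine h.congr_deriv ?_
    rw [hu'']; ring
  -- energy comparison inequality
  have hkey : ∀ x ∈ Set.Ioo (-1:ℝ) 1, l * u x ^ 2 * rmin ≤ E x := by
    intro x hx
    have hx' : x ∈ Set.Icc (-1:ℝ) 1 := Set.Ioo_subset_Icc_self hx
    rw [hE]
    nlinarith [hrmin_le x hx', sq_nonneg (u' x), sq_nonneg (u x), hl.le,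
      mul_nonneg (mul_nonneg hl.le (sq_nonneg (u x))) (sub_nonneg.2 (hrmin_le x hx'))]
  set Kp := Mp / rmin with hKpdef
  set Km := Mm / rmin with hKmdef
  have hKp0 : 0 ≤ Kp := div_nonneg hMp0 hrminpos.le
  have hKm0 : 0 ≤ Km := div_nonneg hMm0 hrminpos.le
  have hexpcont : ∀ c : ℝ, ContinuousOn (fun t => Real.exp (c * t)) (Set.Icc (-1:ℝ) 1) :=
    fun c => (Real.continuous_exp.comp (continuous_const.mul continuous_id)).continuousOn
  -- antitone Fp
  have hFp : AntitoneOn (fun t => E t * Real.exp (-Kp * t)) (Set.Icc (-1:ℝ) 1) := by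
    apply antitoneOn_of_deriv_nonpos (convex_Icc _ _) (hEcont.mul (hexpcont (-Kp)))
    · rw [interior_Icc]
      intro x hx
      exact ((hEIoo x hx).mul (((hasDerivAt_id x).const_mul (-Kp)).exp)).differentiableAt.differentiableWithinAt
    · rw [interior_Icc]
      intro x hx
      have hx' : x ∈ Set.Icc (-1:ℝ) 1 := Set.Ioo_subset_Icc_self hx
      have hd : HasDerivAt (fun t => E t * Real.exp (-Kp * t))
          (l * r' x * u x ^ 2 * Real.exp (-Kp * x) + E x * (Real.exp (-Kp * x) * (-Kp * 1))) x :=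
        (hEIoo x hx).mul (((hasDerivAt_id x).const_mul (-Kp)).exp)
      rw [show (E * fun t => Real.exp (-Kp * t)) = (fun t => E t * Real.exp (-Kp * t)) from rfl, hd.deriv]
      have key : l * r' x * u x ^ 2 ≤ Kp * E x := by
        rw [hKpdef, div_mul_eq_mul_div, le_div_iff₀ hrminpos]
        nlinarith [hkey x hx, hr'le x hx', hMp0,
          mul_nonneg (sub_nonneg.2 (hr'le x hx'))
            (mul_nonneg (mul_nonneg hl.le (sq_nonneg (u x))) hrminpos.le),
          mul_le_mul_of_nonneg_left (hkey x hx) hMp0]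
      nlinarith [mul_le_mul_of_nonneg_right key (Real.exp_pos (-Kp * x)).le]
  -- monotone Fm
  have hFm : MonotoneOn (fun t => E t * Real.exp (Km * t)) (Set.Icc (-1:ℝ) 1) := by
    apply monotoneOn_of_deriv_nonneg (convex_Icc _ _) (hEcont.mul (hexpcont Km))
    · rw [interior_Icc]
      intro x hx
      exact ((hEIoo x hx).mul (((hasDerivAt_id x).const_mul Km).exp)).differentiableAt.differentiableWithinAt
    · rw [interior_Icc]
      intro x hx
      have hx' : x ∈ Set.Icc (-1:ℝ) 1 := Set.Ioo_subset_Icc_self hx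
      have hd : HasDerivAt (fun t => E t * Real.exp (Km * t))
          (l * r' x * u x ^ 2 * Real.exp (Km * x) + E x * (Real.exp (Km * x) * (Km * 1))) x :=
        (hEIoo x hx).mul (((hasDerivAt_id x).const_mul Km).exp)
      rw [show (E * fun t => Real.exp (Km * t)) = (fun t => E t * Real.exp (Km * t)) from rfl, hd.deriv]
      have key : -(Km * E x) ≤ l * r' x * u x ^ 2 := by
        rw [hKmdef, div_mul_eq_mul_div, neg_le, le_div_iff₀ hrminpos]
        nlinarith [hkey x hx, hr'ge x hx', hMm0,
          mul_nonneg (sub_nonneg.2 (neg_le.2 (hr'ge x hx')))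
            (mul_nonneg (mul_nonneg hl.le (sq_nonneg (u x))) hrminpos.le),
          mul_le_mul_of_nonneg_left (hkey x hx) hMm0]
      nlinarith [mul_le_mul_of_nonneg_right key (Real.exp_pos (Km * x)).le]
  -- comparison constants
  have hcminpos : 0 < cmin := by
    rw [hcmin]
    exact lt_min (Real.exp_pos _) (Real.exp_pos _)
  have hKpeq : -(2 * Mp) / rmin = -(2 * Kp) := by
    rw [hKpdef]; field_simp
  have hKmeq : -(2 * Mm) / rmin = -(2 * Km) := by
    rw [hKmdef]; field_simp
  have hcmin_p : cmin ≤ Real.exp (-(2 * Kp)) := by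
    rw [hcmin, ← hKpeq]; exact min_le_left _ _
  have hcmin_m : cmin ≤ Real.exp (-(2 * Km)) := by
    rw [hcmin, ← hKmeq]; exact min_le_right _ _
  have hcmax_p : Real.exp (2 * Kp) ≤ cmax := by
    rw [hcmax]
    calc Real.exp (2 * Kp) = (Real.exp (-(2 * Kp)))⁻¹ := by rw [Real.exp_neg, inv_inv]
      _ ≤ cmin⁻¹ := by
          apply inv_anti₀ hcminpos hcmin_p
  have hcmax_m : Real.exp (2 * Km) ≤ cmax := by
    rw [hcmax]
    calc Real.exp (2 * Km) = (Real.exp (-(2 * Km)))⁻¹ := by rw [Real.exp_neg, inv_inv]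
      _ ≤ cmin⁻¹ := by
          apply inv_anti₀ hcminpos hcmin_m
  obtain ⟨hP1, hP2⟩ := aux_anti E Kp hKp0 hE0 hFp
  obtain ⟨hM1, hM2⟩ := aux_mono E Km hKm0 hE0 hFm
  intro x hx
  rcases le_total 0 x with hx0 | hx0
  · have hxp : x ∈ Set.Icc (0:ℝ) 1 := ⟨hx0, hx.2⟩
    constructor
    · calc cmin * E 0 ≤ Real.exp (-(2 * Km)) * E 0 :=
            mul_le_mul_of_nonneg_right hcmin_m hE0
        _ ≤ E x := hM1 x hxp
    · calc E x ≤ Real.exp (2 * Kp) * E 0 := hP1 x hxp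
        _ ≤ cmax * E 0 := mul_le_mul_of_nonneg_right hcmax_p hE0
  · have hxm : x ∈ Set.Icc (-1:ℝ) 0 := ⟨hx.1, hx0⟩
    constructor
    · calc cmin * E 0 ≤ Real.exp (-(2 * Kp)) * E 0 :=
            mul_le_mul_of_nonneg_right hcmin_p hE0
        _ ≤ E x := hP2 x hxm
    · calc E x ≤ Real.exp (2 * Km) * E 0 := hM2 x hxm
        _ ≤ cmax * E 0 := mul_le_mul_of_nonneg_right hcmax_m hE0
end
end

section
/- Let λ > 0, θ ∈ ℝ, and let w = w(λ,θ). Then for all x ∈ [-1,1]: λ r_min c_min ≤ w'(x)² + λ r(x) w(x)² ≤ λ r_max c_max. Consequently |w(x)| ≤ (r_max c_max / r_min)^{1/2} and |w'(x)| ≤ (r_max c_max)^{1/2} λ^{1/2} for all x ∈ [-1,1]. -/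
open Set Real

noncomputable section

lemma mono_aux (E E' : ℝ → ℝ) (K : ℝ)
    (hE : ∀ x ∈ Set.Icc (-1:ℝ) 1, HasDerivWithinAt E (E' x) (Set.Icc (-1:ℝ) 1) x)
    (h : ∀ x ∈ Set.Icc (-1:ℝ) 1, 0 ≤ E' x + K * E x) :
    MonotoneOn (fun x => E x * Real.exp (K * x)) (Set.Icc (-1:ℝ) 1) := by
  apply monotoneOn_of_hasDerivWithinAt_nonneg (convex_Icc _ _)
    (f' := fun x => (E' x + K * E x) * Real.exp (K * x))
  · exact ContinuousOn.mul (fun x hx => (hE x hx).continuousWithinAt)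
      (Real.continuous_exp.comp (continuous_const.mul continuous_id)).continuousOn
  · intro x hx
    have hx' : x ∈ Set.Icc (-1:ℝ) 1 := interior_subset hx
    have h1 : HasDerivWithinAt E (E' x) (interior (Set.Icc (-1:ℝ) 1)) x :=
      (hE x hx').mono interior_subset
    have h2 : HasDerivAt (fun y => Real.exp (K * y)) (Real.exp (K * x) * K) x := by
      simpa using ((hasDerivAt_id x).const_mul K).exp
    have h3 := h1.mul h2.hasDerivWithinAt
    exact h3.congr_deriv (by ring)
  · intro x hx
    exact mul_nonneg (h x (interior_subset hx)) (Real.exp_pos _).le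

lemma anti_aux (E E' : ℝ → ℝ) (K : ℝ)
    (hE : ∀ x ∈ Set.Icc (-1:ℝ) 1, HasDerivWithinAt E (E' x) (Set.Icc (-1:ℝ) 1) x)
    (h : ∀ x ∈ Set.Icc (-1:ℝ) 1, E' x + K * E x ≤ 0) :
    AntitoneOn (fun x => E x * Real.exp (K * x)) (Set.Icc (-1:ℝ) 1) := by
  apply antitoneOn_of_hasDerivWithinAt_nonpos (convex_Icc _ _)
    (f' := fun x => (E' x + K * E x) * Real.exp (K * x))
  · exact ContinuousOn.mul (fun x hx => (hE x hx).continuousWithinAt)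
      (Real.continuous_exp.comp (continuous_const.mul continuous_id)).continuousOn
  · intro x hx
    have hx' : x ∈ Set.Icc (-1:ℝ) 1 := interior_subset hx
    have h1 : HasDerivWithinAt E (E' x) (interior (Set.Icc (-1:ℝ) 1)) x :=
      (hE x hx').mono interior_subset
    have h2 : HasDerivAt (fun y => Real.exp (K * y)) (Real.exp (K * x) * K) x := by
      simpa using ((hasDerivAt_id x).const_mul K).exp
    have h3 := h1.mul h2.hasDerivWithinAt
    exact h3.congr_deriv (by ring)
  · intro x hx
    exact mul_nonpos_of_nonpos_of_nonneg (h x (interior_subset hx)) (Real.exp_pos _).le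

lemma exp_cancel_le {a b c : ℝ} (h : a * Real.exp c ≤ b) : a ≤ b * Real.exp (-c) := by
  have := mul_le_mul_of_nonneg_right h (Real.exp_pos (-c)).le
  rwa [mul_assoc, ← Real.exp_add, add_neg_cancel, Real.exp_zero, mul_one] at this

lemma le_exp_cancel {a b c : ℝ} (h : a ≤ b * Real.exp c) : a * Real.exp (-c) ≤ b := by
  have := mul_le_mul_of_nonneg_right h (Real.exp_pos (-c)).le
  rwa [mul_assoc, ← Real.exp_add, add_neg_cancel, Real.exp_zero, mul_one] at this

set_option maxHeartbeats 1000000 in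
theorem stmt2
    (r r' : ℝ → ℝ) (hr : C1I r r') (hrpos : ∀ x ∈ Set.Icc (-1:ℝ) 1, 0 < r x)
    (rmin rmax Mp Mm cmin cmax : ℝ)
    (hrmin : IsLeast (r '' Set.Icc (-1:ℝ) 1) rmin)
    (hrmax : IsGreatest (r '' Set.Icc (-1:ℝ) 1) rmax)
    (hMp : IsGreatest ((fun x => max (r' x) 0) '' Set.Icc (-1:ℝ) 1) Mp)
    (hMm : IsGreatest ((fun x => max (-(r' x)) 0) '' Set.Icc (-1:ℝ) 1) Mm)
    (hcmin : cmin = min (Real.exp (-(2 * Mp) / rmin)) (Real.exp (-(2 * Mm) / rmin)))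
    (hcmax : cmax = cmin⁻¹)
    (l θ : ℝ) (hl : 0 < l)
    (w w' w'' : ℝ → ℝ) (hw : C2I w w' w'')
    (hwode : ∀ x ∈ Set.Icc (-1:ℝ) 1, -(w'' x) = l * r x * w x)
    (hw0 : w 0 = Real.sin θ) (hw'0 : w' 0 = Real.sqrt (l * r 0) * Real.cos θ) :
    ∀ x ∈ Set.Icc (-1:ℝ) 1,
      (l * rmin * cmin ≤ (w' x) ^ 2 + l * r x * (w x) ^ 2 ∧
        (w' x) ^ 2 + l * r x * (w x) ^ 2 ≤ l * rmax * cmax) ∧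
      |w x| ≤ Real.sqrt (rmax * cmax / rmin) ∧
      |w' x| ≤ Real.sqrt (rmax * cmax) * Real.sqrt l := by
  have h0I : (0:ℝ) ∈ Set.Icc (-1:ℝ) 1 := by constructor <;> norm_num
  -- basic facts about constants
  have hrminpos : 0 < rmin := by
    obtain ⟨x0, hx0, he⟩ := hrmin.1
    rw [← he]; exact hrpos x0 hx0
  have hrlb : ∀ x ∈ Set.Icc (-1:ℝ) 1, rmin ≤ r x := fun x hx => hrmin.2 ⟨x, hx, rfl⟩
  have hrub : ∀ x ∈ Set.Icc (-1:ℝ) 1, r x ≤ rmax := fun x hx => hrmax.2 ⟨x, hx, rfl⟩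
  have hrmaxpos : 0 < rmax := lt_of_lt_of_le hrminpos (le_trans (hrlb 0 h0I) (hrub 0 h0I))
  have hMp0 : 0 ≤ Mp := by
    obtain ⟨x0, hx0, he⟩ := hMp.1
    rw [← he]; exact le_max_right _ _
  have hMm0 : 0 ≤ Mm := by
    obtain ⟨x0, hx0, he⟩ := hMm.1
    rw [← he]; exact le_max_right _ _
  have hr'ub : ∀ x ∈ Set.Icc (-1:ℝ) 1, r' x ≤ Mp := fun x hx =>
    le_trans (le_max_left _ _) (hMp.2 ⟨x, hx, rfl⟩)
  have hr'lb : ∀ x ∈ Set.Icc (-1:ℝ) 1, -Mm ≤ r' x := fun x hx => by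
    have := le_trans (le_max_left _ _) (hMm.2 ⟨x, hx, rfl⟩)
    linarith
  have hcminpos : 0 < cmin := by
    rw [hcmin]; exact lt_min (Real.exp_pos _) (Real.exp_pos _)
  have hcmaxpos : 0 < cmax := by rw [hcmax]; exact inv_pos.mpr hcminpos
  set Kp := Mp / rmin with hKp
  set Km := Mm / rmin with hKm
  have hKp0 : 0 ≤ Kp := div_nonneg hMp0 hrminpos.le
  have hKm0 : 0 ≤ Km := div_nonneg hMm0 hrminpos.le
  have hKpr : Kp * rmin = Mp := div_mul_cancel₀ _ hrminpos.ne'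
  have hKmr : Km * rmin = Mm := div_mul_cancel₀ _ hrminpos.ne'
  -- exp comparisons
  have h2Kp : -(2 * Mp) / rmin = -(2 * Kp) := by rw [← hKpr]; field_simp
  have h2Km : -(2 * Mm) / rmin = -(2 * Km) := by rw [← hKmr]; field_simp
  have hcm1 : cmin ≤ Real.exp (-(2 * Kp)) := by
    rw [← h2Kp, hcmin]; exact min_le_left _ _
  have hcm2 : cmin ≤ Real.exp (-(2 * Km)) := by
    rw [← h2Km, hcmin]; exact min_le_right _ _
  have hexpnKp : cmin ≤ Real.exp (-Kp) :=
    le_trans hcm1 (Real.exp_le_exp.mpr (by linarith))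
  have hexpnKm : cmin ≤ Real.exp (-Km) :=
    le_trans hcm2 (Real.exp_le_exp.mpr (by linarith))
  have hexpKp : Real.exp Kp ≤ cmax := by
    have h1 : (Real.exp (-(2 * Kp)))⁻¹ ≤ cmin⁻¹ := by gcongr
    rw [Real.exp_neg, inv_inv] at h1
    rw [hcmax]
    exact le_trans (Real.exp_le_exp.mpr (by linarith)) h1
  have hexpKm : Real.exp Km ≤ cmax := by
    have h1 : (Real.exp (-(2 * Km)))⁻¹ ≤ cmin⁻¹ := by gcongr
    rw [Real.exp_neg, inv_inv] at h1
    rw [hcmax]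
    exact le_trans (Real.exp_le_exp.mpr (by linarith)) h1
  -- the energy and its derivative
  have hE : ∀ x ∈ Set.Icc (-1:ℝ) 1,
      HasDerivWithinAt (fun y => (w' y)^2 + l * r y * (w y)^2)
        (l * r' x * (w x)^2) (Set.Icc (-1:ℝ) 1) x := by
    intro x hx
    have h1 := (hw.2.1 x hx).pow 2
    have h2 := ((hr.1 x hx).const_mul l).mul ((hw.1 x hx).pow 2)
    have h3 := h1.add h2
    have hode := hwode x hx
    have hw'' : w'' x = -(l * r x * w x) := by linarith
    exact h3.congr_deriv (by rw [hw'']; simp only [Pi.pow_apply]; push_cast; ring)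
  -- energy at 0
  have hE0 : (w' 0)^2 + l * r 0 * (w 0)^2 = l * r 0 := by
    rw [hw0, hw'0]
    have hs : Real.sqrt (l * r 0) ^ 2 = l * r 0 :=
      Real.sq_sqrt (mul_nonneg hl.le (hrpos 0 h0I).le)
    have ht := Real.sin_sq_add_cos_sq θ
    rw [mul_pow, hs]
    linear_combination (l * r 0) * ht
  have hE0lb : l * rmin ≤ (w' 0)^2 + l * r 0 * (w 0)^2 := by
    rw [hE0]
    exact mul_le_mul_of_nonneg_left (hrlb 0 h0I) hl.le
  have hE0ub : (w' 0)^2 + l * r 0 * (w 0)^2 ≤ l * rmax := by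
    rw [hE0]
    exact mul_le_mul_of_nonneg_left (hrub 0 h0I) hl.le
  -- differential inequalities
  have hup : ∀ x ∈ Set.Icc (-1:ℝ) 1,
      l * r' x * (w x)^2 + (-Kp) * ((w' x)^2 + l * r x * (w x)^2) ≤ 0 := by
    intro x hx
    have h1 := hr'ub x hx
    have h2 := hrlb x hx
    have hA : 0 ≤ l * (w x)^2 * (Mp - r' x) :=
      mul_nonneg (mul_nonneg hl.le (sq_nonneg (w x))) (sub_nonneg.mpr h1)
    have hB : 0 ≤ l * Kp * (w x)^2 * (r x - rmin) :=
      mul_nonneg (mul_nonneg (mul_nonneg hl.le hKp0) (sq_nonneg (w x))) (sub_nonneg.mpr h2)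
    have hC : 0 ≤ Kp * (w' x)^2 := mul_nonneg hKp0 (sq_nonneg (w' x))
    have hD : l * (w x)^2 * Mp = l * Kp * (w x)^2 * rmin := by rw [← hKpr]; ring
    linarith
  have hlo : ∀ x ∈ Set.Icc (-1:ℝ) 1,
      0 ≤ l * r' x * (w x)^2 + Km * ((w' x)^2 + l * r x * (w x)^2) := by
    intro x hx
    have h1 := hr'lb x hx
    have h2 := hrlb x hx
    have hA : 0 ≤ l * (w x)^2 * (r' x + Mm) :=
      mul_nonneg (mul_nonneg hl.le (sq_nonneg (w x))) (by linarith)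
    have hB : 0 ≤ l * Km * (w x)^2 * (r x - rmin) :=
      mul_nonneg (mul_nonneg (mul_nonneg hl.le hKm0) (sq_nonneg (w x))) (sub_nonneg.mpr h2)
    have hC : 0 ≤ Km * (w' x)^2 := mul_nonneg hKm0 (sq_nonneg (w' x))
    have hD : l * (w x)^2 * Mm = l * Km * (w x)^2 * rmin := by rw [← hKmr]; ring
    linarith
  have hanti := anti_aux _ _ (-Kp) hE hup
  have hmono := mono_aux _ _ Km hE hlo
  -- upper bound on the energy
  have hupper : ∀ x ∈ Set.Icc (-1:ℝ) 1,
      (w' x)^2 + l * r x * (w x)^2 ≤ l * rmax * cmax := by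
    intro x hx
    rcases le_total 0 x with hx0 | hx0
    · have hax := hanti h0I hx hx0
      simp only [mul_zero, Real.exp_zero, mul_one] at hax
      have h4 : ((w' x)^2 + l * r x * (w x)^2) ≤
          ((w' 0)^2 + l * r 0 * (w 0)^2) * Real.exp (-(-Kp * x)) := by
        exact exp_cancel_le hax
      have h5 : Real.exp (-(-Kp * x)) ≤ cmax := by
        refine le_trans (Real.exp_le_exp.mpr ?_) hexpKp
        have h6 : Kp * x ≤ Kp * 1 := mul_le_mul_of_nonneg_left hx.2 hKp0
        linarith
      calc (w' x)^2 + l * r x * (w x)^2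
          ≤ ((w' 0)^2 + l * r 0 * (w 0)^2) * Real.exp (-(-Kp * x)) := h4
        _ ≤ (l * rmax) * cmax := by
            apply mul_le_mul hE0ub h5 (Real.exp_pos _).le (by positivity)
    · have hax := hmono hx h0I hx0
      simp only [mul_zero, Real.exp_zero, mul_one] at hax
      have h4 : ((w' x)^2 + l * r x * (w x)^2) ≤
          ((w' 0)^2 + l * r 0 * (w 0)^2) * Real.exp (-(Km * x)) :=
        exp_cancel_le hax
      have h5 : Real.exp (-(Km * x)) ≤ cmax := by
        refine le_trans (Real.exp_le_exp.mpr ?_) hexpKm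
        have h6 : Km * (-x) ≤ Km * 1 := mul_le_mul_of_nonneg_left (by linarith [hx.1]) hKm0
        linarith
      calc (w' x)^2 + l * r x * (w x)^2
          ≤ ((w' 0)^2 + l * r 0 * (w 0)^2) * Real.exp (-(Km * x)) := h4
        _ ≤ (l * rmax) * cmax := by
            apply mul_le_mul hE0ub h5 (Real.exp_pos _).le (by positivity)
  -- lower bound on the energy
  have hlower : ∀ x ∈ Set.Icc (-1:ℝ) 1,
      l * rmin * cmin ≤ (w' x)^2 + l * r x * (w x)^2 := by
    intro x hx
    rcases le_total 0 x with hx0 | hx0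
    · have hax := hmono h0I hx hx0
      simp only [mul_zero, Real.exp_zero, mul_one] at hax
      have h4 : ((w' 0)^2 + l * r 0 * (w 0)^2) * Real.exp (-(Km * x)) ≤
          (w' x)^2 + l * r x * (w x)^2 := le_exp_cancel hax
      have h5 : cmin ≤ Real.exp (-(Km * x)) := by
        refine le_trans hexpnKm (Real.exp_le_exp.mpr ?_)
        have h6 : Km * x ≤ Km * 1 := mul_le_mul_of_nonneg_left hx.2 hKm0
        linarith
      calc l * rmin * cmin
          ≤ ((w' 0)^2 + l * r 0 * (w 0)^2) * Real.exp (-(Km * x)) := by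
            exact mul_le_mul hE0lb h5 hcminpos.le (by nlinarith [mul_pos hl hrminpos])
        _ ≤ _ := h4
    · have hax := hanti hx h0I hx0
      simp only [mul_zero, Real.exp_zero, mul_one] at hax
      have h4 : ((w' 0)^2 + l * r 0 * (w 0)^2) * Real.exp (-(-Kp * x)) ≤
          (w' x)^2 + l * r x * (w x)^2 := le_exp_cancel hax
      have h5 : cmin ≤ Real.exp (-(-Kp * x)) := by
        refine le_trans hexpnKp (Real.exp_le_exp.mpr ?_)
        have h6 : Kp * (-x) ≤ Kp * 1 := mul_le_mul_of_nonneg_left (by linarith [hx.1]) hKp0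
        linarith
      calc l * rmin * cmin
          ≤ ((w' 0)^2 + l * r 0 * (w 0)^2) * Real.exp (-(-Kp * x)) := by
            exact mul_le_mul hE0lb h5 hcminpos.le (by nlinarith [mul_pos hl hrminpos])
        _ ≤ _ := h4
  -- conclusion
  intro x hx
  have hU := hupper x hx
  have hL := hlower x hx
  refine ⟨⟨hL, hU⟩, ?_, ?_⟩
  · have hw2 : (w x)^2 ≤ rmax * cmax / rmin := by
      rw [le_div_iff₀ hrminpos]
      nlinarith [sq_nonneg (w' x), mul_nonneg (mul_nonneg hl.le (sq_nonneg (w x)))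
        (sub_nonneg.mpr (hrlb x hx)), mul_pos hl hrminpos]
    calc |w x| = Real.sqrt ((w x)^2) := (Real.sqrt_sq_eq_abs _).symm
      _ ≤ Real.sqrt (rmax * cmax / rmin) := Real.sqrt_le_sqrt hw2
  · have hw'2 : (w' x)^2 ≤ (rmax * cmax) * l := by
      nlinarith [mul_nonneg (mul_nonneg hl.le (hrpos x hx).le) (sq_nonneg (w x))]
    calc |w' x| = Real.sqrt ((w' x)^2) := (Real.sqrt_sq_eq_abs _).symm
      _ ≤ Real.sqrt ((rmax * cmax) * l) := Real.sqrt_le_sqrt hw'2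
      _ = Real.sqrt (rmax * cmax) * Real.sqrt l := Real.sqrt_mul (by positivity) _
end
end

section
/- Let Λ₁ := (4 r_max c_max)² / (r_min³ c_min²) and c₁ := (1/4) r_min c_min. Then for every λ ≥ Λ₁ and every θ ∈ ℝ, the solution w = w(λ,θ) satisfies ∫₀¹ w(x)² r(x) dx ≥ c₁ and ∫_{−1}^0 w(x)² r(x) dx ≥ c₁. -/
open Set Real

noncomputable section

set_option maxHeartbeats 4000000 in
theorem stmt3
    (r r' : ℝ → ℝ) (hr : C1I r r') (hrpos : ∀ x ∈ Set.Icc (-1:ℝ) 1, 0 < r x)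
    (rmin rmax Mp Mm cmin cmax : ℝ)
    (hrmin : IsLeast (r '' Set.Icc (-1:ℝ) 1) rmin)
    (hrmax : IsGreatest (r '' Set.Icc (-1:ℝ) 1) rmax)
    (hMp : IsGreatest ((fun x => max (r' x) 0) '' Set.Icc (-1:ℝ) 1) Mp)
    (hMm : IsGreatest ((fun x => max (-(r' x)) 0) '' Set.Icc (-1:ℝ) 1) Mm)
    (hcmin : cmin = min (Real.exp (-(2 * Mp) / rmin)) (Real.exp (-(2 * Mm) / rmin)))
    (hcmax : cmax = cmin⁻¹)
    (Λ₁ c₁ : ℝ)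
    (hΛ₁ : Λ₁ = (4 * rmax * cmax) ^ 2 / (rmin ^ 3 * cmin ^ 2))
    (hc₁ : c₁ = (1 / 4) * rmin * cmin)
    (l θ : ℝ) (hl : Λ₁ ≤ l)
    (w w' w'' : ℝ → ℝ) (hw : C2I w w' w'')
    (hwode : ∀ x ∈ Set.Icc (-1:ℝ) 1, -(w'' x) = l * r x * w x)
    (hw0 : w 0 = Real.sin θ) (hw'0 : w' 0 = Real.sqrt (l * r 0) * Real.cos θ) :
    c₁ ≤ ∫ x in (0:ℝ)..1, (w x) ^ 2 * r x ∧
    c₁ ≤ ∫ x in (-1:ℝ)..0, (w x) ^ 2 * r x := by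
  obtain ⟨hw1, hw2, hw3⟩ := hw
  obtain ⟨hr1, hr2⟩ := hr
  have h0I : (0:ℝ) ∈ Set.Icc (-1:ℝ) 1 := by constructor <;> norm_num
  have h1I : (1:ℝ) ∈ Set.Icc (-1:ℝ) 1 := by constructor <;> norm_num
  have hm1I : (-1:ℝ) ∈ Set.Icc (-1:ℝ) 1 := by constructor <;> norm_num
  have hrminpos : 0 < rmin := by
    obtain ⟨x, hx, hxe⟩ := hrmin.1
    exact hxe ▸ hrpos x hx
  have hrminle : ∀ x ∈ Set.Icc (-1:ℝ) 1, rmin ≤ r x := fun x hx => hrmin.2 ⟨x, hx, rfl⟩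
  have hrmaxle : ∀ x ∈ Set.Icc (-1:ℝ) 1, r x ≤ rmax := fun x hx => hrmax.2 ⟨x, hx, rfl⟩
  have hrminmax : rmin ≤ rmax := le_trans (hrminle 0 h0I) (hrmaxle 0 h0I)
  have hrmaxpos : 0 < rmax := lt_of_lt_of_le hrminpos hrminmax
  have hMppos : 0 ≤ Mp := le_trans (le_max_right _ _) (hMp.2 ⟨0, h0I, rfl⟩)
  have hMmpos : 0 ≤ Mm := le_trans (le_max_right _ _) (hMm.2 ⟨0, h0I, rfl⟩)
  have hMple : ∀ x ∈ Set.Icc (-1:ℝ) 1, r' x ≤ Mp :=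
    fun x hx => le_trans (le_max_left _ _) (hMp.2 ⟨x, hx, rfl⟩)
  have hMmle : ∀ x ∈ Set.Icc (-1:ℝ) 1, -(r' x) ≤ Mm :=
    fun x hx => le_trans (le_max_left _ _) (hMm.2 ⟨x, hx, rfl⟩)
  have hcminpos : 0 < cmin := by
    rw [hcmin]; exact lt_min (Real.exp_pos _) (Real.exp_pos _)
  have hcmaxpos : 0 < cmax := by rw [hcmax]; exact inv_pos.2 hcminpos
  have hl0 : 0 < l := by
    refine lt_of_lt_of_le ?_ hl
    rw [hΛ₁]
    refine div_pos (pow_pos ?_ 2) ?_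
    · positivity
    · positivity
  -- cmin/cmax vs exp bounds
  have hcminp : cmin ≤ Real.exp (-(Mp/rmin)) := by
    rw [hcmin]
    refine le_trans (min_le_left _ _) (Real.exp_le_exp.2 ?_)
    rw [neg_div, neg_le_neg_iff, div_le_div_iff_of_pos_right hrminpos]
    linarith
  have hcminm : cmin ≤ Real.exp (-(Mm/rmin)) := by
    rw [hcmin]
    refine le_trans (min_le_right _ _) (Real.exp_le_exp.2 ?_)
    rw [neg_div, neg_le_neg_iff, div_le_div_iff_of_pos_right hrminpos]
    linarith
  have hcmaxp : Real.exp (Mp/rmin) ≤ cmax := by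
    have h1 : cmin ≤ Real.exp (-(Mp/rmin)) := hcminp
    rw [hcmax]
    calc Real.exp (Mp/rmin) = (Real.exp (-(Mp/rmin)))⁻¹ := by
            rw [Real.exp_neg, inv_inv]
      _ ≤ cmin⁻¹ := by
            apply inv_anti₀ hcminpos h1
  have hcmaxm : Real.exp (Mm/rmin) ≤ cmax := by
    rw [hcmax]
    calc Real.exp (Mm/rmin) = (Real.exp (-(Mm/rmin)))⁻¹ := by
            rw [Real.exp_neg, inv_inv]
      _ ≤ cmin⁻¹ := by
            apply inv_anti₀ hcminpos hcminm
  -- continuity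
  have hwc : ContinuousOn w (Set.Icc (-1:ℝ) 1) := fun x hx => (hw1 x hx).continuousWithinAt
  have hw'c : ContinuousOn w' (Set.Icc (-1:ℝ) 1) := fun x hx => (hw2 x hx).continuousWithinAt
  have hrc : ContinuousOn r (Set.Icc (-1:ℝ) 1) := fun x hx => (hr1 x hx).continuousWithinAt
  -- the energy
  set E : ℝ → ℝ := fun x => (w x)^2 + (w' x)^2 / (l * r x) with hEdef
  have hEx : ∀ x, E x = (w x)^2 + (w' x)^2 / (l * r x) := fun x => rfl
  have hEcont : ContinuousOn E (Set.Icc (-1:ℝ) 1) := by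
    refine (hwc.pow 2).add (((hw'c.pow 2)).div (continuousOn_const.mul hrc) ?_)
    exact fun x hx => (mul_pos hl0 (hrpos x hx)).ne'
  have hEnonneg : ∀ x ∈ Set.Icc (-1:ℝ) 1, 0 ≤ E x := fun x hx =>
    add_nonneg (sq_nonneg _) (div_nonneg (sq_nonneg _) (mul_pos hl0 (hrpos x hx)).le)
  have hEub : ∀ x ∈ Set.Icc (-1:ℝ) 1, (w' x)^2 / (l * r x) ≤ E x := fun x hx =>
    le_add_of_nonneg_left (sq_nonneg _)
  have hE0 : E 0 = 1 := by
    have h0 : 0 < l * r 0 := mul_pos hl0 (hrpos 0 h0I)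
    rw [hEx 0, hw0, hw'0]
    rw [mul_pow, Real.sq_sqrt h0.le]
    rw [mul_comm (l * r 0) (Real.cos θ ^ 2), mul_div_assoc, div_self h0.ne', mul_one]
    exact Real.sin_sq_add_cos_sq θ
  -- derivative of E
  have hEderiv : ∀ x ∈ Set.Icc (-1:ℝ) 1,
      HasDerivWithinAt E (-((w' x)^2 * r' x) / (l * (r x)^2)) (Set.Icc (-1:ℝ) 1) x := by
    intro x hx
    have hrx := hrpos x hx
    have hlr : l * r x ≠ 0 := (mul_pos hl0 hrx).ne'
    have hode : w'' x = -(l * r x * w x) := by have := hwode x hx; linarith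
    have d1 : HasDerivWithinAt (fun y => (w y)^2) (2 * w x * w' x) (Set.Icc (-1:ℝ) 1) x := by
      have := (hw1 x hx).fun_pow 2
      simpa [pow_one] using this
    have d2 : HasDerivWithinAt (fun y => (w' y)^2) (2 * w' x * w'' x) (Set.Icc (-1:ℝ) 1) x := by
      have := (hw2 x hx).fun_pow 2
      simpa [pow_one] using this
    have d3 : HasDerivWithinAt (fun y => l * r y) (l * r' x) (Set.Icc (-1:ℝ) 1) x :=
      (hr1 x hx).const_mul l
    have d4 := d2.div d3 hlr
    have d5 := d1.add d4
    rw [hEdef]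
    refine d5.congr_deriv ?_
    rw [hode]
    field_simp
    ring
  -- monotone / antitone weighted energies
  have hFmono : MonotoneOn (fun x => E x * Real.exp ((Mp/rmin) * x)) (Set.Icc (-1:ℝ) 1) := by
    refine monotoneOn_of_hasDerivWithinAt_nonneg (convex_Icc _ _)
      (hEcont.mul ((Real.continuous_exp.comp (continuous_const.mul continuous_id)).continuousOn))
      (f' := fun x => -((w' x)^2 * r' x) / (l * (r x)^2) * Real.exp ((Mp/rmin) * x)
        + E x * (Real.exp ((Mp/rmin) * x) * (Mp/rmin * 1))) ?_ ?_
    · intro x hx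
      have hxI : x ∈ Set.Icc (-1:ℝ) 1 := interior_subset hx
      have hd := (hEderiv x hxI).mono interior_subset
      have hexp : HasDerivAt (fun y => Real.exp ((Mp/rmin) * y))
          (Real.exp ((Mp/rmin) * x) * (Mp/rmin * 1)) x :=
        (((hasDerivAt_id x).const_mul (Mp/rmin))).exp
      exact hd.mul hexp.hasDerivWithinAt
    · intro x hx
      rw [interior_Icc] at hx
      have hxI : x ∈ Set.Icc (-1:ℝ) 1 := Ioo_subset_Icc_self hx
      have hrx := hrpos x hxI
      have he : (0:ℝ) < Real.exp ((Mp/rmin) * x) := Real.exp_pos _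
      have hExn := hEnonneg x hxI
      have hub := hEub x hxI
      have hr'le : r' x ≤ Mp := hMple x hxI
      have key : 0 ≤ -((w' x)^2 * r' x) / (l * (r x)^2) + E x * (Mp/rmin) := by
        rcases le_or_gt (r' x) 0 with h | h
        · have h1 : 0 ≤ -((w' x)^2 * r' x) / (l * (r x)^2) :=
            div_nonneg (by nlinarith [sq_nonneg (w' x)]) (by positivity)
          have h2 : 0 ≤ E x * (Mp/rmin) :=
            mul_nonneg hExn (div_nonneg hMppos hrminpos.le)
          linarith
        · have e1 : (w' x)^2 * r' x / (l * (r x)^2) = ((w' x)^2/(l * r x)) * (r' x / r x) := by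
            rw [div_mul_div_comm]
            ring
          have h3 : (w' x)^2 * r' x / (l * (r x)^2) ≤ E x * (Mp/rmin) := by
            rw [e1]
            refine mul_le_mul hub ?_ ?_ hExn
            · exact div_le_div₀ hMppos hr'le hrminpos (hrminle x hxI)
            · positivity
          have h4 : -((w' x)^2 * r' x) / (l * (r x)^2) = -((w' x)^2 * r' x / (l * (r x)^2)) := by
            ring
          rw [h4]
          linarith
      nlinarith [mul_nonneg key he.le]
  have hGanti : AntitoneOn (fun x => E x * Real.exp (-(Mm/rmin) * x)) (Set.Icc (-1:ℝ) 1) := by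
    refine antitoneOn_of_hasDerivWithinAt_nonpos (convex_Icc _ _)
      (hEcont.mul ((Real.continuous_exp.comp (continuous_const.mul continuous_id)).continuousOn))
      (f' := fun x => -((w' x)^2 * r' x) / (l * (r x)^2) * Real.exp (-(Mm/rmin) * x)
        + E x * (Real.exp (-(Mm/rmin) * x) * (-(Mm/rmin) * 1))) ?_ ?_
    · intro x hx
      have hxI : x ∈ Set.Icc (-1:ℝ) 1 := interior_subset hx
      have hd := (hEderiv x hxI).mono interior_subset
      have hexp : HasDerivAt (fun y => Real.exp (-(Mm/rmin) * y))
          (Real.exp (-(Mm/rmin) * x) * (-(Mm/rmin) * 1)) x :=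
        (((hasDerivAt_id x).const_mul (-(Mm/rmin)))).exp
      exact hd.mul hexp.hasDerivWithinAt
    · intro x hx
      rw [interior_Icc] at hx
      have hxI : x ∈ Set.Icc (-1:ℝ) 1 := Ioo_subset_Icc_self hx
      have hrx := hrpos x hxI
      have he : (0:ℝ) < Real.exp (-(Mm/rmin) * x) := Real.exp_pos _
      have hExn := hEnonneg x hxI
      have hub := hEub x hxI
      have hr'le : -(r' x) ≤ Mm := hMmle x hxI
      have key : -((w' x)^2 * r' x) / (l * (r x)^2) - E x * (Mm/rmin) ≤ 0 := by
        rcases le_or_gt 0 (r' x) with h | h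
        · have h1 : -((w' x)^2 * r' x) / (l * (r x)^2) ≤ 0 := by
            apply div_nonpos_of_nonpos_of_nonneg
            · nlinarith [sq_nonneg (w' x)]
            · positivity
          have h2 : 0 ≤ E x * (Mm/rmin) :=
            mul_nonneg hExn (div_nonneg hMmpos hrminpos.le)
          linarith
        · have e1 : (w' x)^2 * (-(r' x)) / (l * (r x)^2)
              = ((w' x)^2/(l * r x)) * ((-(r' x)) / r x) := by
            rw [div_mul_div_comm]
            ring
          have h3 : (w' x)^2 * (-(r' x)) / (l * (r x)^2) ≤ E x * (Mm/rmin) := by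
            rw [e1]
            refine mul_le_mul hub ?_ ?_ hExn
            · exact div_le_div₀ hMmpos hr'le hrminpos (hrminle x hxI)
            · exact div_nonneg (by linarith) hrx.le
          have h4 : -((w' x)^2 * r' x) / (l * (r x)^2)
              = (w' x)^2 * (-(r' x)) / (l * (r x)^2) := by ring
          rw [h4]
          linarith
      nlinarith [mul_nonpos_of_nonpos_of_nonneg key he.le]
  -- pointwise bounds on E
  have hEbound : ∀ x ∈ Set.Icc (-1:ℝ) 1, cmin ≤ E x ∧ E x ≤ cmax := by
    intro x hx
    have hexpid : ∀ t : ℝ, Real.exp (-t) * Real.exp t = 1 := fun t => by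
      rw [← Real.exp_add]; simp
    rcases le_or_gt 0 x with hx0 | hx0
    · have hF := hFmono h0I hx hx0
      have hG := hGanti h0I hx hx0
      simp only [mul_zero, Real.exp_zero, mul_one, hE0, one_mul] at hF hG
      constructor
      · -- cmin ≤ exp(-(Mp/rmin)) ≤ exp(-(Mp/rmin * x)) ≤ E x
        have h1 : Real.exp (-((Mp/rmin) * x)) ≤ E x := by
          nlinarith [hF, hexpid ((Mp/rmin) * x), Real.exp_pos ((Mp/rmin) * x),
            Real.exp_pos (-((Mp/rmin) * x))]
        refine le_trans (le_trans hcminp (Real.exp_le_exp.2 ?_)) h1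
        have hq : 0 ≤ Mp/rmin := div_nonneg hMppos hrminpos.le
        nlinarith [hx.2]
      · have h1 : E x ≤ Real.exp ((Mm/rmin) * x) := by
          have h2 : E x * Real.exp (-(Mm/rmin) * x) ≤ 1 := hG
          have h3 : Real.exp (-(Mm/rmin) * x) = Real.exp (-((Mm/rmin) * x)) := by
            ring_nf
          nlinarith [h2, hexpid ((Mm/rmin) * x), Real.exp_pos ((Mm/rmin) * x),
            Real.exp_pos (-((Mm/rmin) * x)), h3]
        refine le_trans h1 (le_trans (Real.exp_le_exp.2 ?_) hcmaxm)
        have hq : 0 ≤ Mm/rmin := div_nonneg hMmpos hrminpos.le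
        nlinarith [hx.2]
    · have hF := hFmono hx h0I hx0.le
      have hG := hGanti hx h0I hx0.le
      simp only [mul_zero, Real.exp_zero, mul_one, hE0, one_mul] at hF hG
      constructor
      · -- 1 ≤ E x * exp(-(Mm/rmin) x) so E x ≥ exp((Mm/rmin) x) ≥ exp(-(Mm/rmin))
        have h1 : Real.exp ((Mm/rmin) * x) ≤ E x := by
          have h3 : Real.exp (-(Mm/rmin) * x) = Real.exp (-((Mm/rmin) * x)) := by
            ring_nf
          nlinarith [hG, hexpid ((Mm/rmin) * x), Real.exp_pos ((Mm/rmin) * x),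
            Real.exp_pos (-((Mm/rmin) * x)), h3]
        refine le_trans (le_trans hcminm (Real.exp_le_exp.2 ?_)) h1
        have hq : 0 ≤ Mm/rmin := div_nonneg hMmpos hrminpos.le
        nlinarith [hx.1]
      · -- E x * exp((Mp/rmin) x) ≤ 1 so E x ≤ exp(-(Mp/rmin) x) ≤ exp(Mp/rmin)
        have h1 : E x ≤ Real.exp (-((Mp/rmin) * x)) := by
          nlinarith [hF, hexpid ((Mp/rmin) * x), Real.exp_pos ((Mp/rmin) * x),
            Real.exp_pos (-((Mp/rmin) * x))]
        refine le_trans h1 (le_trans (Real.exp_le_exp.2 ?_) hcmaxp)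
        have hq : 0 ≤ Mp/rmin := div_nonneg hMppos hrminpos.le
        nlinarith [hx.1]
  -- boundary term bound
  have hbd : ∀ c ∈ Set.Icc (-1:ℝ) 1, |w c * w' c| ≤ Real.sqrt (l * rmax) * cmax / 2 := by
    intro c hc
    have hrc0 : 0 < l * r c := mul_pos hl0 (hrpos c hc)
    have hs : 0 < Real.sqrt (l * r c) := Real.sqrt_pos.2 hrc0
    have hs2 : Real.sqrt (l * r c) ^ 2 = l * r c := Real.sq_sqrt hrc0.le
    have e1 : (w' c)^2 / (l * r c) * (l * r c) = (w' c)^2 := div_mul_cancel₀ _ hrc0.ne'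
    have e2 : (w' c)^2 / (l * r c) * (Real.sqrt (l * r c))^2 = (w' c)^2 := by
      rw [hs2]; exact e1
    have h2 : 2 * Real.sqrt (l * r c) * (|w c| * |w' c|) ≤ Real.sqrt (l * r c)^2 * E c := by
      rw [hEx c]
      nlinarith [sq_nonneg (Real.sqrt (l * r c) * |w c| - |w' c|), hs, e2,
        sq_abs (w c), sq_abs (w' c)]
    have h1 : |w c * w' c| ≤ Real.sqrt (l * r c) * E c / 2 := by
      rw [abs_mul, ← mul_le_mul_iff_right₀ (show (0:ℝ) < 2 * Real.sqrt (l * r c) by positivity)]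
      calc 2 * Real.sqrt (l * r c) * (|w c| * |w' c|) ≤ Real.sqrt (l * r c)^2 * E c := h2
        _ = 2 * Real.sqrt (l * r c) * (Real.sqrt (l * r c) * E c / 2) := by ring
    refine le_trans h1 ?_
    have hsle : Real.sqrt (l * r c) ≤ Real.sqrt (l * rmax) :=
      Real.sqrt_le_sqrt (mul_le_mul_of_nonneg_left (hrmaxle c hc) hl0.le)
    have hEle : E c ≤ cmax := (hEbound c hc).2
    have hEn : 0 ≤ E c := hEnonneg c hc
    have h5 : Real.sqrt (l * r c) * E c ≤ Real.sqrt (l * rmax) * cmax :=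
      mul_le_mul hsle hEle hEn (Real.sqrt_nonneg _)
    exact (div_le_div_iff_of_pos_right (by norm_num : (0:ℝ) < 2)).2 h5
  -- the square-root bound from l ≥ Λ₁
  have hBt : Real.sqrt (l * rmax) * cmax ≤ l * (rmin * cmin) / 4 := by
    have hΛ' : Λ₁ * (rmin^3 * cmin^2) = (4 * rmax * cmax)^2 := by
      rw [hΛ₁]
      field_simp
    have h2 : l * rmax ≤ (l * rmin * cmin / (4 * cmax))^2 := by
      rw [div_pow, le_div_iff₀ (by positivity)]
      have f4 : (4 * rmax * cmax)^2 ≤ l * (rmin^3 * cmin^2) := by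
        rw [← hΛ']
        exact mul_le_mul_of_nonneg_right hl (by positivity)
      nlinarith [f4, hl0, hrminpos, hrminmax, hcmaxpos, hrmaxpos, hcminpos,
        mul_le_mul_of_nonneg_left f4 hl0.le]
    have h1 : Real.sqrt (l * rmax) ≤ l * rmin * cmin / (4 * cmax) := by
      calc Real.sqrt (l * rmax) ≤ Real.sqrt ((l * rmin * cmin / (4 * cmax))^2) :=
            Real.sqrt_le_sqrt h2
        _ = l * rmin * cmin / (4 * cmax) := Real.sqrt_sq (by positivity)
    have := mul_le_mul_of_nonneg_right h1 hcmaxpos.le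
    calc Real.sqrt (l * rmax) * cmax ≤ (l * rmin * cmin / (4 * cmax)) * cmax := this
      _ = l * (rmin * cmin) / 4 := by field_simp
  -- main estimate on an interval of length one
  have key : ∀ a b : ℝ, a ∈ Set.Icc (-1:ℝ) 1 → b ∈ Set.Icc (-1:ℝ) 1 → a ≤ b → b - a = 1 →
      c₁ ≤ ∫ x in a..b, (w x)^2 * r x := by
    intro a b haI hbI hab hlen
    have hsub : Set.Icc a b ⊆ Set.Icc (-1:ℝ) 1 := Set.Icc_subset_Icc haI.1 hbI.2
    have hsub' : Set.Ioo a b ⊆ Set.Ioo (-1:ℝ) 1 := Set.Ioo_subset_Ioo haI.1 hbI.2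
    have cw : ContinuousOn w (Set.Icc a b) := hwc.mono hsub
    have cw' : ContinuousOn w' (Set.Icc a b) := hw'c.mono hsub
    have cr : ContinuousOn r (Set.Icc a b) := hrc.mono hsub
    have cE : ContinuousOn E (Set.Icc a b) := hEcont.mono hsub
    have hint1 : IntervalIntegrable (fun x => (w x)^2 * r x) MeasureTheory.volume a b := by
      apply ContinuousOn.intervalIntegrable
      rw [Set.uIcc_of_le hab]
      exact (cw.pow 2).mul cr
    have hint2 : IntervalIntegrable (fun x => (w' x)^2) MeasureTheory.volume a b := by
      apply ContinuousOn.intervalIntegrable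
      rw [Set.uIcc_of_le hab]
      exact cw'.pow 2
    have hintE : IntervalIntegrable (fun x => E x * r x) MeasureTheory.volume a b := by
      apply ContinuousOn.intervalIntegrable
      rw [Set.uIcc_of_le hab]
      exact cE.mul cr
    -- FTC / integration by parts
    have hftc : ∫ x in a..b, ((w' x)^2 - l * ((w x)^2 * r x)) = w b * w' b - w a * w' a := by
      apply intervalIntegral.integral_eq_sub_of_hasDeriv_right_of_le hab (cw.mul cw')
      · intro x hx
        have hxI : x ∈ Set.Icc (-1:ℝ) 1 := hsub (Set.Ioo_subset_Icc_self hx)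
        have hxnhd : Set.Icc (-1:ℝ) 1 ∈ nhds x := Icc_mem_nhds (hsub' hx).1 (hsub' hx).2
        have d1 : HasDerivAt w (w' x) x := (hw1 x hxI).hasDerivAt hxnhd
        have d2 : HasDerivAt w' (w'' x) x := (hw2 x hxI).hasDerivAt hxnhd
        have hode : w'' x = -(l * r x * w x) := by have := hwode x hxI; linarith
        have d3 : HasDerivAt (fun y => w y * w' y) ((w' x)^2 - l * ((w x)^2 * r x)) x := by
          refine (d1.mul d2).congr_deriv ?_
          rw [hode]
          ring
        exact d3.hasDerivWithinAt
      · exact hint2.sub (hint1.const_mul l)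
    have hI1 : ∫ x in a..b, (w' x)^2
        = (w b * w' b - w a * w' a) + l * ∫ x in a..b, (w x)^2 * r x := by
      rw [intervalIntegral.integral_sub hint2 (hint1.const_mul l),
        intervalIntegral.integral_const_mul] at hftc
      linarith
    have hI2 : ∫ x in a..b, E x * r x
        = (∫ x in a..b, (w x)^2 * r x) + (1/l) * ∫ x in a..b, (w' x)^2 := by
      have hcongr : Set.EqOn (fun x => E x * r x)
          (fun x => (w x)^2 * r x + (1/l) * (w' x)^2) (Set.uIcc a b) := by
        intro x hx
        rw [Set.uIcc_of_le hab] at hx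
        have hrx := hrpos x (hsub hx)
        simp only [hEx x]
        field_simp
      rw [intervalIntegral.integral_congr hcongr,
        intervalIntegral.integral_add hint1 (hint2.const_mul (1/l)),
        intervalIntegral.integral_const_mul]
    have hlow : cmin * rmin ≤ ∫ x in a..b, E x * r x := by
      have hconst : ∫ _x in a..b, cmin * rmin = cmin * rmin := by
        rw [intervalIntegral.integral_const, hlen]
        simp
      rw [← hconst]
      apply intervalIntegral.integral_mono_on hab
        (intervalIntegrable_const) hintE
      intro x hx
      have hxI := hsub hx
      exact mul_le_mul (hEbound x hxI).1 (hrminle x hxI) hrminpos.le (hEnonneg x hxI)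
    -- boundary bound
    have habs : |w b * w' b - w a * w' a| ≤ Real.sqrt (l * rmax) * cmax := by
      calc |w b * w' b - w a * w' a| ≤ |w b * w' b| + |w a * w' a| := abs_sub _ _
        _ ≤ Real.sqrt (l * rmax) * cmax / 2 + Real.sqrt (l * rmax) * cmax / 2 :=
            add_le_add (hbd b hbI) (hbd a haI)
        _ = Real.sqrt (l * rmax) * cmax := by ring
    have hBl : (w b * w' b - w a * w' a) / l ≤ rmin * cmin / 4 := by
      have h1 : w b * w' b - w a * w' a ≤ Real.sqrt (l * rmax) * cmax := le_of_abs_le habs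
      have h2 : (w b * w' b - w a * w' a) / l ≤ (Real.sqrt (l * rmax) * cmax) / l :=
        (div_le_div_iff_of_pos_right hl0).2 h1
      have h3 : (Real.sqrt (l * rmax) * cmax) / l ≤ (l * (rmin * cmin) / 4) / l :=
        (div_le_div_iff_of_pos_right hl0).2 hBt
      have h4 : (l * (rmin * cmin) / 4) / l = rmin * cmin / 4 := by
        field_simp
      linarith
    have hmain : (∫ x in a..b, E x * r x)
        = 2 * (∫ x in a..b, (w x)^2 * r x) + (w b * w' b - w a * w' a) / l := by
      rw [hI2, hI1]
      field_simp
      ring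
    have hrc0 : 0 < rmin * cmin := mul_pos hrminpos hcminpos
    rw [hc₁]
    nlinarith [hlow, hmain, hBl, hrc0]
  constructor
  · exact key 0 1 h0I h1I (by norm_num) (by norm_num)
  · exact key (-1) 0 hm1I h0I (by norm_num) (by norm_num)
end
end

section
/- Let c₁ := (1/4) r_min c_min, Λ₁ := (4 r_max c_max)² / (r_min³ c_min²), and Λ₃ := max{ r_max/(4c₁²), Λ₁ }. Let λ ≥ Λ₃, θ ∈ ℝ, and w = w(λ,θ). Let w_θ be the solution of −w_θ'' = λ r w_θ with w_θ(0) = cos θ, w_θ'(0) = −(λ r(0))^{1/2} sin θ, and let w_λ be the solution of −w_λ'' = λ r w_λ + r w with w_λ(0) = 0, w_λ'(0) = (1/2) λ^{−1/2} r(0)^{1/2} cos θ. If ν ∈ {−1, 1} and w(ν) = 0, then w'(ν) · w_θ(ν) > 0 and ν · w'(ν) · w_λ(ν) > 0. -/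
open Set Real

noncomputable section

lemma monoOn_aux (f f' : ℝ → ℝ)
    (hf : ∀ x ∈ Set.Icc (-1:ℝ) 1, HasDerivWithinAt f (f' x) (Set.Icc (-1:ℝ) 1) x)
    (h0 : ∀ x ∈ Set.Icc (-1:ℝ) 1, 0 ≤ f' x) :
    MonotoneOn f (Set.Icc (-1:ℝ) 1) := by
  have key : ∀ x ∈ interior (Set.Icc (-1:ℝ) 1), HasDerivAt f (f' x) x := by
    rw [interior_Icc]
    intro x hx
    exact (hf x (Set.Ioo_subset_Icc_self hx)).hasDerivAt (Icc_mem_nhds hx.1 hx.2)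
  apply monotoneOn_of_deriv_nonneg (convex_Icc _ _)
    (fun x hx => (hf x hx).continuousWithinAt)
    (fun x hx => (key x hx).differentiableAt.differentiableWithinAt)
  intro x hx
  rw [(key x hx).deriv]
  rw [interior_Icc] at hx
  exact h0 x (Set.Ioo_subset_Icc_self hx)

lemma constOn_aux (f f' : ℝ → ℝ)
    (hf : ∀ x ∈ Set.Icc (-1:ℝ) 1, HasDerivWithinAt f (f' x) (Set.Icc (-1:ℝ) 1) x)
    (h0 : ∀ x ∈ Set.Icc (-1:ℝ) 1, f' x = 0) :
    ∀ x ∈ Set.Icc (-1:ℝ) 1, f x = f 0 := by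
  have h1 := monoOn_aux f f' hf (fun x hx => (h0 x hx).ge)
  have h2 := monoOn_aux (fun x => -f x) (fun x => -f' x)
    (fun x hx => (hf x hx).neg) (fun x hx => by simp [h0 x hx])
  intro x hx
  have h01 : (0:ℝ) ∈ Set.Icc (-1:ℝ) 1 := by norm_num
  rcases le_total x 0 with h | h
  · have a1 := h1 hx h01 h
    have a2 := h2 hx h01 h
    simp only [neg_le_neg_iff] at a2
    linarith
  · have a1 := h1 h01 hx h
    have a2 := h2 h01 hx h
    simp only [neg_le_neg_iff] at a2
    linarith

lemma ftc_aux (a b : ℝ) (hab : a ≤ b) (hsub : Set.Icc a b ⊆ Set.Icc (-1:ℝ) 1)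
    (f f' : ℝ → ℝ)
    (hf : ∀ x ∈ Set.Icc (-1:ℝ) 1, HasDerivWithinAt f (f' x) (Set.Icc (-1:ℝ) 1) x)
    (hf' : ContinuousOn f' (Set.Icc (-1:ℝ) 1)) :
    ∫ y in a..b, f' y = f b - f a := by
  have h1 : (-1:ℝ) ≤ a := (hsub (Set.left_mem_Icc.mpr hab)).1
  have h2 : b ≤ 1 := (hsub (Set.right_mem_Icc.mpr hab)).2
  apply intervalIntegral.integral_eq_sub_of_hasDeriv_right_of_le hab
  · exact ContinuousOn.mono (fun x hx => (hf x hx).continuousWithinAt) hsub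
  · intro x hx
    have hx' : x ∈ Set.Ioo (-1:ℝ) 1 := ⟨lt_of_le_of_lt h1 hx.1, lt_of_lt_of_le hx.2 h2⟩
    exact ((hf x (Set.Ioo_subset_Icc_self hx')).hasDerivAt
      (Icc_mem_nhds hx'.1 hx'.2)).hasDerivWithinAt
  · apply ContinuousOn.intervalIntegrable
    rw [Set.uIcc_of_le hab]
    exact hf'.mono hsub

set_option maxHeartbeats 2000000 in
theorem stmt6
    (r r' : ℝ → ℝ) (hr : C1I r r') (hrpos : ∀ x ∈ Set.Icc (-1:ℝ) 1, 0 < r x)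
    (rmin rmax Mp Mm cmin cmax : ℝ)
    (hrmin : IsLeast (r '' Set.Icc (-1:ℝ) 1) rmin)
    (hrmax : IsGreatest (r '' Set.Icc (-1:ℝ) 1) rmax)
    (hMp : IsGreatest ((fun x => max (r' x) 0) '' Set.Icc (-1:ℝ) 1) Mp)
    (hMm : IsGreatest ((fun x => max (-(r' x)) 0) '' Set.Icc (-1:ℝ) 1) Mm)
    (hcmin : cmin = min (Real.exp (-(2 * Mp) / rmin)) (Real.exp (-(2 * Mm) / rmin)))
    (hcmax : cmax = cmin⁻¹)
    (c₁ Λ₁ Λ₃ : ℝ)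
    (hc₁ : c₁ = (1 / 4) * rmin * cmin)
    (hΛ₁ : Λ₁ = (4 * rmax * cmax) ^ 2 / (rmin ^ 3 * cmin ^ 2))
    (hΛ₃ : Λ₃ = max (rmax / (4 * c₁ ^ 2)) Λ₁)
    (l θ : ℝ) (hl : Λ₃ ≤ l)
    (w w' w'' : ℝ → ℝ) (hw : C2I w w' w'')
    (hwode : ∀ x ∈ Set.Icc (-1:ℝ) 1, -(w'' x) = l * r x * w x)
    (hw0 : w 0 = Real.sin θ) (hw'0 : w' 0 = Real.sqrt (l * r 0) * Real.cos θ)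
    (wθ wθ' wθ'' : ℝ → ℝ) (hwθ : C2I wθ wθ' wθ'')
    (hwθode : ∀ x ∈ Set.Icc (-1:ℝ) 1, -(wθ'' x) = l * r x * wθ x)
    (hwθ0 : wθ 0 = Real.cos θ) (hwθ'0 : wθ' 0 = -(Real.sqrt (l * r 0) * Real.sin θ))
    (wl wl' wl'' : ℝ → ℝ) (hwl : C2I wl wl' wl'')
    (hwlode : ∀ x ∈ Set.Icc (-1:ℝ) 1, -(wl'' x) = l * r x * wl x + r x * w x)
    (hwl0 : wl 0 = 0)
    (hwl'0 : wl' 0 = (1 / 2) * (Real.sqrt l)⁻¹ * Real.sqrt (r 0) * Real.cos θ)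
    (ν : ℝ) (hν : ν = -1 ∨ ν = 1) (hwv : w ν = 0) :
    0 < w' ν * wθ ν ∧ 0 < ν * (w' ν * wl ν) := by
  have h01 : (0:ℝ) ∈ Set.Icc (-1:ℝ) 1 := by norm_num
  have hν1 : ν ∈ Set.Icc (-1:ℝ) 1 := by rcases hν with h | h <;> rw [h] <;> norm_num
  have hr0 : 0 < r 0 := hrpos 0 h01
  have hrminpos : 0 < rmin := by
    obtain ⟨x₀, hx₀, hv⟩ := hrmin.1
    rw [← hv]; exact hrpos x₀ hx₀
  have hrmaxpos : 0 < rmax := by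
    obtain ⟨x₀, hx₀, hv⟩ := hrmax.1
    rw [← hv]; exact hrpos x₀ hx₀
  have hcminpos : 0 < cmin := by rw [hcmin]; positivity
  have hc₁pos : 0 < c₁ := by rw [hc₁]; positivity
  have hl0 : 0 < l := by
    have h1 : 0 < rmax / (4 * c₁ ^ 2) := by positivity
    have h2 : rmax / (4 * c₁ ^ 2) ≤ Λ₃ := hΛ₃ ▸ le_max_left _ _
    linarith
  have hlr0 : 0 < l * r 0 := by positivity
  -- Part 1: Wronskian with wθ is constant
  have hWr : ∀ x ∈ Set.Icc (-1:ℝ) 1,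
      HasDerivWithinAt (fun x => w x * wθ' x - w' x * wθ x) ((fun _ => (0:ℝ)) x)
        (Set.Icc (-1:ℝ) 1) x := by
    intro x hx
    have h := ((hw.1 x hx).mul (hwθ.2.1 x hx)).sub ((hw.2.1 x hx).mul (hwθ.1 x hx))
    refine h.congr_deriv ?_
    have e1 := hwode x hx
    have e2 := hwθode x hx
    linear_combination (wθ x) * e1 - (w x) * e2
  have hWc := constOn_aux _ _ hWr (fun _ _ => rfl) ν hν1
  have hW0 : w 0 * wθ' 0 - w' 0 * wθ 0 = -Real.sqrt (l * r 0) := by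
    rw [hw0, hw'0, hwθ0, hwθ'0]
    linear_combination (-(Real.sqrt (l * r 0))) * sin_sq_add_cos_sq θ
  have part1 : 0 < w' ν * wθ ν := by
    have : w ν * wθ' ν - w' ν * wθ ν = -Real.sqrt (l * r 0) := by rw [hWc, hW0]
    rw [hwv] at this
    have hs : 0 < Real.sqrt (l * r 0) := Real.sqrt_pos.mpr hlr0
    linarith
  refine ⟨part1, ?_⟩
  -- Part 2
  -- basic facts about Mp, Mm, r
  have hMp0 : 0 ≤ Mp := by
    obtain ⟨x₀, hx₀, hv⟩ := hMp.1
    rw [← hv]; exact le_max_right _ _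
  have hMm0 : 0 ≤ Mm := by
    obtain ⟨x₀, hx₀, hv⟩ := hMm.1
    rw [← hv]; exact le_max_right _ _
  have hr'ub : ∀ x ∈ Set.Icc (-1:ℝ) 1, r' x ≤ Mp := fun x hx =>
    le_trans (le_max_left _ _) (hMp.2 ⟨x, hx, rfl⟩)
  have hr'lb : ∀ x ∈ Set.Icc (-1:ℝ) 1, -Mm ≤ r' x := by
    intro x hx
    have := hMm.2 ⟨x, hx, rfl⟩
    have h2 : -(r' x) ≤ max (-(r' x)) 0 := le_max_left _ _
    simp only at this
    linarith
  have hrlb : ∀ x ∈ Set.Icc (-1:ℝ) 1, rmin ≤ r x := fun x hx => hrmin.2 ⟨x, hx, rfl⟩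
  -- Energy function
  set E : ℝ → ℝ := fun x => l * r x * (w x)^2 + (w' x)^2 with hEdef
  set E' : ℝ → ℝ := fun x => l * r' x * (w x)^2 with hE'def
  have hE : ∀ x ∈ Set.Icc (-1:ℝ) 1, HasDerivWithinAt E (E' x) (Set.Icc (-1:ℝ) 1) x := by
    intro x hx
    have h := ((((hr.1 x hx).const_mul l)).mul ((hw.1 x hx).pow 2)).add ((hw.2.1 x hx).pow 2)
    refine h.congr_deriv ?_
    have e1 := hwode x hx
    show _ = l * r' x * (w x)^2
    rw [Pi.pow_apply]
    linear_combination (-(2 * w' x)) * e1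
  have hE0 : E 0 = l * r 0 := by
    have hs := Real.sq_sqrt hlr0.le
    simp only [hEdef, hw0, hw'0]
    linear_combination (l * r 0) * sin_sq_add_cos_sq θ + (Real.cos θ)^2 * hs
  -- Energy lower bound via Gronwall
  have hKm0 : 0 ≤ Mm / rmin := by positivity
  have hKp0 : 0 ≤ Mp / rmin := by positivity
  have hEb : ∀ x ∈ Set.Icc (-1:ℝ) 1, cmin * (l * r 0) ≤ E x := by
    intro x hx
    rcases le_total 0 x with hx0 | hx0
    · -- use G = E * exp(Mm/rmin * x), monotone
      set K := Mm / rmin with hK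
      have hG : ∀ y ∈ Set.Icc (-1:ℝ) 1,
          HasDerivWithinAt (fun y => E y * Real.exp (K * y))
            (E' y * Real.exp (K * y) + E y * (Real.exp (K * y) * K)) (Set.Icc (-1:ℝ) 1) y := by
        intro y hy
        have hexp : HasDerivAt (fun y => Real.exp (K * y)) (Real.exp (K * y) * K) y := by
          simpa using (HasDerivAt.exp ((hasDerivAt_id y).const_mul K))
        exact (hE y hy).mul hexp.hasDerivWithinAt
      have hmono := monoOn_aux _ _ hG (by
        intro y hy
        have hKr : Mm ≤ K * r y := by
          rw [hK, div_mul_eq_mul_div, le_div_iff₀ hrminpos]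
          exact mul_le_mul_of_nonneg_left (hrlb y hy) hMm0
        have key : 0 ≤ E' y + K * E y := by
          have t1 : 0 ≤ l * (w y)^2 * (r' y + Mm) := by
            apply mul_nonneg (by positivity)
            linarith [hr'lb y hy]
          have t2 : 0 ≤ l * (w y)^2 * (K * r y - Mm) := by
            apply mul_nonneg (by positivity)
            linarith
          have t3 : 0 ≤ K * (w' y)^2 := by positivity
          simp only [hE'def, hEdef]
          nlinarith [t1, t2, t3]
        have := mul_nonneg key (Real.exp_pos (K * y)).le
        nlinarith [this])
      have hle := hmono h01 hx hx0
      simp only [mul_zero, Real.exp_zero, mul_one] at hle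
      rw [hE0] at hle
      -- E x ≥ (l * r 0) * exp (-(K*x)) ≥ cmin * (l * r 0)
      have hcx : cmin ≤ Real.exp (-(K * x)) := by
        have h1 : cmin ≤ Real.exp (-(2 * Mm) / rmin) := hcmin ▸ min_le_right _ _
        have h2 : K * x ≤ 2 * Mm / rmin := by
          rw [hK, div_mul_eq_mul_div, div_le_div_iff₀ hrminpos hrminpos]
          nlinarith [mul_nonneg (mul_nonneg hMm0 hrminpos.le) (sub_nonneg.mpr hx.2),
            mul_nonneg hMm0 hrminpos.le]
        have : -(2 * Mm) / rmin ≤ -(K * x) := by rw [neg_div]; linarith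
        exact le_trans h1 (Real.exp_le_exp.mpr this)
      have hEx : (l * r 0) * Real.exp (-(K * x)) ≤ E x := by
        have h3 := mul_le_mul_of_nonneg_right hle (Real.exp_pos (-(K * x))).le
        have h4 : E x * Real.exp (K * x) * Real.exp (-(K * x)) = E x := by
          rw [mul_assoc, ← Real.exp_add, add_neg_cancel, Real.exp_zero, mul_one]
        linarith [h3, h4.le, h4.ge]
      calc cmin * (l * r 0) ≤ Real.exp (-(K * x)) * (l * r 0) := by
            apply mul_le_mul_of_nonneg_right hcx hlr0.le
        _ = (l * r 0) * Real.exp (-(K * x)) := by ring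
        _ ≤ E x := hEx
    · -- use H = E * exp (-(Mp/rmin) * x), antitone
      set K := Mp / rmin with hK
      have hG : ∀ y ∈ Set.Icc (-1:ℝ) 1,
          HasDerivWithinAt (fun y => -(E y * Real.exp (-K * y)))
            (-(E' y * Real.exp (-K * y) + E y * (Real.exp (-K * y) * (-K))))
            (Set.Icc (-1:ℝ) 1) y := by
        intro y hy
        have hexp : HasDerivAt (fun y => Real.exp (-K * y)) (Real.exp (-K * y) * (-K)) y := by
          simpa using (HasDerivAt.exp ((hasDerivAt_id y).const_mul (-K)))
        exact ((hE y hy).mul hexp.hasDerivWithinAt).neg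
      have hmono := monoOn_aux _ _ hG (by
        intro y hy
        have hKr : Mp ≤ K * r y := by
          rw [hK, div_mul_eq_mul_div, le_div_iff₀ hrminpos]
          exact mul_le_mul_of_nonneg_left (hrlb y hy) hMp0
        have key : E' y - K * E y ≤ 0 := by
          have t1 : 0 ≤ l * (w y)^2 * (Mp - r' y) := by
            apply mul_nonneg (by positivity)
            linarith [hr'ub y hy]
          have t2 : 0 ≤ l * (w y)^2 * (K * r y - Mp) := by
            apply mul_nonneg (by positivity)
            linarith
          have t3 : 0 ≤ K * (w' y)^2 := by positivity
          simp only [hE'def, hEdef]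
          nlinarith [t1, t2, t3]
        have := mul_nonneg (neg_nonneg.mpr key) (Real.exp_pos (-K * y)).le
        nlinarith [this])
      have hle := hmono hx h01 hx0
      simp only [neg_le_neg_iff] at hle
      rw [hE0] at hle
      simp only [mul_zero, Real.exp_zero, mul_one] at hle
      -- l * r 0 ≤ E x * exp (-K * x), so E x ≥ (l r 0) exp (K x) ≥ cmin (l r 0)
      have hcx : cmin ≤ Real.exp (K * x) := by
        have h1 : cmin ≤ Real.exp (-(2 * Mp) / rmin) := hcmin ▸ min_le_left _ _
        have h2 : -(2 * Mp) / rmin ≤ K * x := by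
          rw [hK, div_mul_eq_mul_div, div_le_div_iff₀ hrminpos hrminpos]
          nlinarith [mul_nonneg (mul_nonneg hMp0 hrminpos.le) (sub_nonneg.mpr (neg_le_iff_add_nonneg.mp hx.1)),
            mul_nonneg (mul_nonneg hMp0 hrminpos.le) (show (0:ℝ) ≤ x + 1 by linarith [hx.1]),
            mul_nonneg hMp0 hrminpos.le]
        exact le_trans h1 (Real.exp_le_exp.mpr h2)
      have hEx : (l * r 0) * Real.exp (K * x) ≤ E x := by
        have h3 := mul_le_mul_of_nonneg_right hle (Real.exp_pos (K * x)).le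
        have h4 : E x * Real.exp (-K * x) * Real.exp (K * x) = E x := by
          rw [mul_assoc, ← Real.exp_add, neg_mul, neg_add_cancel, Real.exp_zero, mul_one]
        linarith [h3, h4.le, h4.ge]
      calc cmin * (l * r 0) ≤ Real.exp (K * x) * (l * r 0) := by
            apply mul_le_mul_of_nonneg_right hcx hlr0.le
        _ = (l * r 0) * Real.exp (K * x) := by ring
        _ ≤ E x := hEx
  -- continuity facts
  have hwC : ContinuousOn w (Set.Icc (-1:ℝ) 1) := fun x hx => (hw.1 x hx).continuousWithinAt
  have hw'C : ContinuousOn w' (Set.Icc (-1:ℝ) 1) := fun x hx => (hw.2.1 x hx).continuousWithinAt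
  have hrC : ContinuousOn r (Set.Icc (-1:ℝ) 1) := fun x hx => (hr.1 x hx).continuousWithinAt
  -- P = w w', P' = w'^2 - l r w^2
  set P : ℝ → ℝ := fun x => w x * w' x with hPdef
  set Q : ℝ → ℝ := fun x => (w' x)^2 - l * r x * (w x)^2 with hQdef
  have hP : ∀ x ∈ Set.Icc (-1:ℝ) 1, HasDerivWithinAt P (Q x) (Set.Icc (-1:ℝ) 1) x := by
    intro x hx
    have h := (hw.1 x hx).mul (hw.2.1 x hx)
    refine h.congr_deriv ?_
    have e1 := hwode x hx
    show _ = (w' x)^2 - l * r x * (w x)^2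
    linear_combination (-(w x)) * e1
  have hQC : ContinuousOn Q (Set.Icc (-1:ℝ) 1) := by
    apply ContinuousOn.sub (hw'C.pow 2)
    exact (continuousOn_const.mul hrC).mul (hwC.pow 2)
  -- F = w wl' - w' wl, F' = -(r w^2)
  set F : ℝ → ℝ := fun x => w x * wl' x - w' x * wl x with hFdef
  set F' : ℝ → ℝ := fun x => -(r x * (w x)^2) with hF'def
  have hF : ∀ x ∈ Set.Icc (-1:ℝ) 1, HasDerivWithinAt F (F' x) (Set.Icc (-1:ℝ) 1) x := by
    intro x hx
    have h := ((hw.1 x hx).mul (hwl.2.1 x hx)).sub ((hw.2.1 x hx).mul (hwl.1 x hx))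
    refine h.congr_deriv ?_
    have e1 := hwode x hx
    have e2 := hwlode x hx
    show _ = -(r x * (w x)^2)
    linear_combination (wl x) * e1 - (w x) * e2
  have hF'C : ContinuousOn F' (Set.Icc (-1:ℝ) 1) := ((hrC.mul (hwC.pow 2))).neg
  have hEC : ContinuousOn E (Set.Icc (-1:ℝ) 1) := by
    apply ContinuousOn.add _ (hw'C.pow 2)
    exact (continuousOn_const.mul hrC).mul (hwC.pow 2)
  -- key identity: 2 l F 0 = P 0
  have hkey0 : 2 * l * F 0 = P 0 := by
    simp only [hFdef, hPdef, hw0, hw'0, hwl0, hwl'0]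
    have hsl : Real.sqrt l * Real.sqrt l = l := Real.mul_self_sqrt hl0.le
    have hsm : Real.sqrt (l * r 0) = Real.sqrt l * Real.sqrt (r 0) := Real.sqrt_mul hl0.le _
    have hslpos : 0 < Real.sqrt l := Real.sqrt_pos.mpr hl0
    field_simp
    linear_combination (-(Real.cos θ * Real.sin θ * Real.sqrt (r 0))) * hsl - (Real.cos θ * Real.sin θ * Real.sqrt l) * hsm
  -- per-case FTC
  rcases hν with hν | hν <;> subst hν
  · -- ν = -1
    have hab : (-1:ℝ) ≤ 0 := by norm_num
    have hsub : Set.Icc (-1:ℝ) 0 ⊆ Set.Icc (-1:ℝ) 1 := Set.Icc_subset_Icc le_rfl (by norm_num)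
    have eqP := ftc_aux (-1) 0 hab hsub P Q hP hQC
    have eqF := ftc_aux (-1) 0 hab hsub F F' hF hF'C
    have hPm1 : P (-1) = 0 := by simp [hPdef, hwv]
    set J : ℝ := ∫ y in (-1:ℝ)..0, r y * (w y)^2 with hJdef
    have hiQ : IntervalIntegrable Q MeasureTheory.volume (-1) 0 := by
      apply ContinuousOn.intervalIntegrable
      rw [Set.uIcc_of_le hab]; exact hQC.mono hsub
    have hiJ : IntervalIntegrable (fun y => r y * (w y)^2) MeasureTheory.volume (-1) 0 := by
      apply ContinuousOn.intervalIntegrable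
      rw [Set.uIcc_of_le hab]; exact (hrC.mul (hwC.pow 2)).mono hsub
    have hiE : IntervalIntegrable E MeasureTheory.volume (-1) 0 := by
      apply ContinuousOn.intervalIntegrable
      rw [Set.uIcc_of_le hab]; exact hEC.mono hsub
    -- ∫ E = ∫ Q + 2 l J
    have hEeq : ∫ y in (-1:ℝ)..0, E y = (P 0 - P (-1)) + 2 * l * J := by
      have hcg : ∫ y in (-1:ℝ)..0, E y = ∫ y in (-1:ℝ)..0, (Q y + 2 * l * (r y * (w y)^2)) := by
        apply intervalIntegral.integral_congr
        intro y hy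
        simp only [hEdef, hQdef]; ring
      rw [hcg, intervalIntegral.integral_add hiQ (hiJ.const_mul (2*l)), eqP,
        intervalIntegral.integral_const_mul]
    have hElb : cmin * (l * r 0) * (0 - (-1)) ≤ ∫ y in (-1:ℝ)..0, E y := by
      have := intervalIntegral.integral_mono_on hab
        (intervalIntegrable_const (c := cmin * (l * r 0))) hiE
        (fun x hx => hEb x (hsub hx))
      simpa using this
    have hFm1 : F (-1) = F 0 + J := by
      have : ∫ y in (-1:ℝ)..0, F' y = -J := by
        simp only [hF'def, hJdef]
        rw [intervalIntegral.integral_neg]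
      rw [this] at eqF; linarith
    have hFpos : 0 < F (-1) := by
      have h2lJ : cmin * (l * r 0) - P 0 ≤ 2 * l * J := by
        rw [hEeq, hPm1] at hElb; linarith
      have : 2 * l * F (-1) = 2 * l * F 0 + 2 * l * J := by rw [hFm1]; ring
      nlinarith [hkey0, hcminpos, hlr0, hl0]
    have : F (-1) = -(w' (-1) * wl (-1)) := by simp [hFdef, hwv]
    have hneg : w' (-1) * wl (-1) < 0 := by linarith [this ▸ hFpos]
    nlinarith [hneg]
  · -- ν = 1
    have hab : (0:ℝ) ≤ 1 := by norm_num
    have hsub : Set.Icc (0:ℝ) 1 ⊆ Set.Icc (-1:ℝ) 1 := Set.Icc_subset_Icc (by norm_num) le_rfl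
    have eqP := ftc_aux 0 1 hab hsub P Q hP hQC
    have eqF := ftc_aux 0 1 hab hsub F F' hF hF'C
    have hP1 : P 1 = 0 := by simp [hPdef, hwv]
    set J : ℝ := ∫ y in (0:ℝ)..1, r y * (w y)^2 with hJdef
    have hiQ : IntervalIntegrable Q MeasureTheory.volume 0 1 := by
      apply ContinuousOn.intervalIntegrable
      rw [Set.uIcc_of_le hab]; exact hQC.mono hsub
    have hiJ : IntervalIntegrable (fun y => r y * (w y)^2) MeasureTheory.volume 0 1 := by
      apply ContinuousOn.intervalIntegrable
      rw [Set.uIcc_of_le hab]; exact (hrC.mul (hwC.pow 2)).mono hsub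
    have hiE : IntervalIntegrable E MeasureTheory.volume 0 1 := by
      apply ContinuousOn.intervalIntegrable
      rw [Set.uIcc_of_le hab]; exact hEC.mono hsub
    have hEeq : ∫ y in (0:ℝ)..1, E y = (P 1 - P 0) + 2 * l * J := by
      have hcg : ∫ y in (0:ℝ)..1, E y = ∫ y in (0:ℝ)..1, (Q y + 2 * l * (r y * (w y)^2)) := by
        apply intervalIntegral.integral_congr
        intro y hy
        simp only [hEdef, hQdef]; ring
      rw [hcg, intervalIntegral.integral_add hiQ (hiJ.const_mul (2*l)), eqP,
        intervalIntegral.integral_const_mul]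
    have hElb : cmin * (l * r 0) * (1 - 0) ≤ ∫ y in (0:ℝ)..1, E y := by
      have := intervalIntegral.integral_mono_on hab
        (intervalIntegrable_const (c := cmin * (l * r 0))) hiE
        (fun x hx => hEb x (hsub hx))
      simpa using this
    have hF1 : F 1 = F 0 - J := by
      have : ∫ y in (0:ℝ)..1, F' y = -J := by
        simp only [hF'def, hJdef]
        rw [intervalIntegral.integral_neg]
      rw [this] at eqF; linarith
    have hFneg : F 1 < 0 := by
      have h2lJ : cmin * (l * r 0) + P 0 ≤ 2 * l * J := by
        rw [hEeq, hP1] at hElb; linarith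
      have : 2 * l * F 1 = 2 * l * F 0 - 2 * l * J := by rw [hF1]; ring
      nlinarith [hkey0, hcminpos, hlr0, hl0]
    have : F 1 = -(w' 1 * wl 1) := by simp [hFdef, hwv]
    have hpos : 0 < w' 1 * wl 1 := by linarith [this ▸ hFneg]
    nlinarith [hpos]
end
end

section
/- Let a₁ := (r_min c_min / (r_max c_max))^{1/2}. Let λ > 0, let m ≥ 1 be an integer, let η₀, η₁, …, η_m ∈ [-1,1], and let α₁, …, α_m ∈ ℝ with Σ_{i=1}^m |α_i| < a₁. If u is a twice continuously differentiable function on [-1,1], not identically zero, satisfying −u'' = λ r u on (−1,1) and the single multi-point condition u(η₀) = Σ_{i=1}^m α_i u(η_i), then u'(η₀) ≠ 0. -/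
open Set Real

noncomputable section

set_option maxHeartbeats 1600000 in
theorem stmt7
    (r r' : ℝ → ℝ) (hr : C1I r r') (hrpos : ∀ x ∈ Set.Icc (-1:ℝ) 1, 0 < r x)
    (rmin rmax Mp Mm cmin cmax : ℝ)
    (hrmin : IsLeast (r '' Set.Icc (-1:ℝ) 1) rmin)
    (hrmax : IsGreatest (r '' Set.Icc (-1:ℝ) 1) rmax)
    (hMp : IsGreatest ((fun x => max (r' x) 0) '' Set.Icc (-1:ℝ) 1) Mp)
    (hMm : IsGreatest ((fun x => max (-(r' x)) 0) '' Set.Icc (-1:ℝ) 1) Mm)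
    (hcmin : cmin = min (Real.exp (-(2 * Mp) / rmin)) (Real.exp (-(2 * Mm) / rmin)))
    (hcmax : cmax = cmin⁻¹)
    (a₁ : ℝ) (ha₁ : a₁ = Real.sqrt (rmin * cmin / (rmax * cmax)))
    (l : ℝ) (hl : 0 < l)
    (m : ℕ) (hm : 1 ≤ m)
    (η₀ : ℝ) (hη₀ : η₀ ∈ Set.Icc (-1:ℝ) 1)
    (η : Fin m → ℝ) (hη : ∀ i, η i ∈ Set.Icc (-1:ℝ) 1)
    (α : Fin m → ℝ) (hα : ∑ i, |α i| < a₁)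
    (u u' u'' : ℝ → ℝ) (hu : C2I u u' u'')
    (hnt : ∃ x ∈ Set.Icc (-1:ℝ) 1, u x ≠ 0)
    (hode : ∀ x ∈ Set.Ioo (-1:ℝ) 1, -(u'' x) = l * r x * u x)
    (hbc : u η₀ = ∑ i, α i * u (η i)) :
    u' η₀ ≠ 0 := by
  intro hd0
  obtain ⟨hu1, hu2, _⟩ := hu
  obtain ⟨hr1, _⟩ := hr
  set I : Set ℝ := Set.Icc (-1:ℝ) 1 with hIdef
  -- basic positivity facts
  have hrmin_pos : 0 < rmin := by
    obtain ⟨x, hx, hxe⟩ := hrmin.1; exact hxe ▸ hrpos x hx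
  have hrmax_pos : 0 < rmax := by
    obtain ⟨x, hx, hxe⟩ := hrmax.1; exact hxe ▸ hrpos x hx
  have hMp0 : 0 ≤ Mp := by
    obtain ⟨x, hx, hxe⟩ := hMp.1
    simp only at hxe
    rw [← hxe]; exact le_max_right _ _
  have hMm0 : 0 ≤ Mm := by
    obtain ⟨x, hx, hxe⟩ := hMm.1
    simp only at hxe
    rw [← hxe]; exact le_max_right _ _
  have hcmin_pos : 0 < cmin := by
    rw [hcmin]; exact lt_min (Real.exp_pos _) (Real.exp_pos _)
  have hcmin_le_one : cmin ≤ 1 := by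
    rw [hcmin]
    refine le_trans (min_le_left _ _) ?_
    rw [← Real.exp_zero]
    apply Real.exp_le_exp.2
    apply div_nonpos_of_nonpos_of_nonneg (by linarith) hrmin_pos.le
  have hcmax_pos : 0 < cmax := by rw [hcmax]; exact inv_pos.2 hcmin_pos
  set K : ℝ := Mp / rmin with hKdef
  set Km : ℝ := Mm / rmin with hKmdef
  have hK0 : 0 ≤ K := div_nonneg hMp0 hrmin_pos.le
  have hKm0 : 0 ≤ Km := div_nonneg hMm0 hrmin_pos.le
  have hexpK : Real.exp (2*K) ≤ cmax := by
    rw [hcmax, hcmin]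
    have h2 : Real.exp (-(2*Mp)/rmin) = (Real.exp (2*K))⁻¹ := by
      rw [← Real.exp_neg]; congr 1; rw [hKdef]; field_simp
    have h1 : min (Real.exp (-(2 * Mp) / rmin)) (Real.exp (-(2 * Mm) / rmin))
        ≤ (Real.exp (2*K))⁻¹ := h2 ▸ min_le_left _ _
    calc Real.exp (2*K) = ((Real.exp (2*K))⁻¹)⁻¹ := by rw [inv_inv]
      _ ≤ _ := by
        apply inv_anti₀ _ h1
        rw [hcmin] at hcmin_pos; exact hcmin_pos
  have hexpKm : Real.exp (2*Km) ≤ cmax := by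
    rw [hcmax, hcmin]
    have h2 : Real.exp (-(2*Mm)/rmin) = (Real.exp (2*Km))⁻¹ := by
      rw [← Real.exp_neg]; congr 1; rw [hKmdef]; field_simp
    have h1 : min (Real.exp (-(2 * Mp) / rmin)) (Real.exp (-(2 * Mm) / rmin))
        ≤ (Real.exp (2*Km))⁻¹ := h2 ▸ min_le_right _ _
    calc Real.exp (2*Km) = ((Real.exp (2*Km))⁻¹)⁻¹ := by rw [inv_inv]
      _ ≤ _ := by
        apply inv_anti₀ _ h1
        rw [hcmin] at hcmin_pos; exact hcmin_pos
  -- the energy function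
  set E : ℝ → ℝ := fun x => u' x ^ 2 + l * (r x * u x ^ 2) with hEdef
  have hEnonneg : ∀ x ∈ I, 0 ≤ E x := by
    intro x hx
    have h1 := hrpos x hx
    have h2 : 0 ≤ l * (r x * u x ^2) := by positivity
    simp only [hEdef]
    nlinarith [sq_nonneg (u' x)]
  have hEderiv : ∀ x ∈ I, HasDerivWithinAt E
      (2*u' x*u'' x + l*(r' x * u x ^2 + r x * (2*u x*u' x))) I x := by
    intro x hx
    have h1 := hu1 x hx
    have h2 := hu2 x hx
    have h3 := hr1 x hx
    have hA : HasDerivWithinAt (fun y => u' y ^ 2) (2*u' x*u'' x) I x := by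
      exact (h2.pow 2).congr_deriv (by push_cast; ring)
    have hB2 : HasDerivWithinAt (fun y => u y ^ 2) (2*u x*u' x) I x := by
      exact (h1.pow 2).congr_deriv (by push_cast; ring)
    have hC : HasDerivWithinAt (fun y => r y * u y ^ 2)
        (r' x * u x ^2 + r x * (2*u x*u' x)) I x := h3.mul hB2
    exact hA.add (hC.const_mul l)
  have hEcont : ContinuousOn E I := fun x hx => (hEderiv x hx).continuousWithinAt
  -- at interior points, E' = l * r' * u^2
  have hE'int : ∀ x ∈ Set.Ioo (-1:ℝ) 1, HasDerivAt E (l * r' x * u x ^2) x := by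
    intro x hx
    have hmem : I ∈ nhds x := Icc_mem_nhds hx.1 hx.2
    have h := (hEderiv x (Ioo_subset_Icc_self hx)).hasDerivAt hmem
    have hu''x : u'' x = -(l * r x * u x) := by linarith [hode x hx]
    refine h.congr_deriv ?_
    rw [hu''x]; ring
  -- F is antitone
  have hF' : ∀ x ∈ Set.Ioo (-1:ℝ) 1, HasDerivAt (fun y => E y * Real.exp (-(K*y)))
      ((l * r' x * u x ^2 - K * E x) * Real.exp (-(K*x))) x := by
    intro x hx
    have hexp : HasDerivAt (fun y => Real.exp (-(K*y))) (Real.exp (-(K*x)) * (-(K*1))) x :=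
      (((hasDerivAt_id x).const_mul K).neg).exp
    have := (hE'int x hx).mul hexp
    exact this.congr_deriv (by ring)
  have hFanti : AntitoneOn (fun y => E y * Real.exp (-(K*y))) I := by
    apply antitoneOn_of_deriv_nonpos (convex_Icc _ _)
    · exact hEcont.mul ((Real.continuous_exp.comp ((continuous_const.mul continuous_id).neg)).continuousOn)
    · intro x hx
      rw [interior_Icc] at hx
      exact (hF' x hx).differentiableAt.differentiableWithinAt
    · intro x hx
      rw [interior_Icc] at hx
      rw [(hF' x hx).deriv]
      have hxI : x ∈ I := Ioo_subset_Icc_self hx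
      have hr'le : r' x ≤ Mp := le_trans (le_max_left _ _) (hMp.2 ⟨x, hxI, rfl⟩)
      have hrge : rmin ≤ r x := hrmin.2 ⟨x, hxI, rfl⟩
      have h1 : l * r' x * u x ^2 ≤ K * E x := by
        have e1 : l * r' x * u x ^2 ≤ l * Mp * u x ^2 := by
          nlinarith [mul_nonneg (mul_nonneg hl.le (sub_nonneg.2 hr'le)) (sq_nonneg (u x))]
        have e2 : l * Mp * u x ^2 = K * (l * (rmin * u x ^2)) := by
          rw [hKdef]; field_simp
        have e3 : l * (rmin * u x ^2) ≤ E x := by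
          simp only [hEdef]
          nlinarith [sq_nonneg (u' x),
            mul_nonneg (mul_nonneg hl.le (sub_nonneg.2 hrge)) (sq_nonneg (u x))]
        calc l * r' x * u x ^2 ≤ l * Mp * u x ^2 := e1
          _ = K * (l * (rmin * u x ^2)) := e2
          _ ≤ K * E x := mul_le_mul_of_nonneg_left e3 hK0
      have hep := Real.exp_pos (-(K*x))
      exact mul_nonpos_iff.2 (Or.inr ⟨by linarith, hep.le⟩)
  -- G is monotone
  have hG' : ∀ x ∈ Set.Ioo (-1:ℝ) 1, HasDerivAt (fun y => E y * Real.exp (Km*y))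
      ((l * r' x * u x ^2 + Km * E x) * Real.exp (Km*x)) x := by
    intro x hx
    have hexp : HasDerivAt (fun y => Real.exp (Km*y)) (Real.exp (Km*x) * (Km*1)) x :=
      ((hasDerivAt_id x).const_mul Km).exp
    have := (hE'int x hx).mul hexp
    exact this.congr_deriv (by ring)
  have hGmono : MonotoneOn (fun y => E y * Real.exp (Km*y)) I := by
    apply monotoneOn_of_deriv_nonneg (convex_Icc _ _)
    · exact hEcont.mul ((Real.continuous_exp.comp (continuous_const.mul continuous_id)).continuousOn)
    · intro x hx
      rw [interior_Icc] at hx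
      exact (hG' x hx).differentiableAt.differentiableWithinAt
    · intro x hx
      rw [interior_Icc] at hx
      rw [(hG' x hx).deriv]
      have hxI : x ∈ I := Ioo_subset_Icc_self hx
      have hr'le : -(r' x) ≤ Mm := le_trans (le_max_left _ _) (hMm.2 ⟨x, hxI, rfl⟩)
      have hrge : rmin ≤ r x := hrmin.2 ⟨x, hxI, rfl⟩
      have h1 : -(Km * E x) ≤ l * r' x * u x ^2 := by
        have e1 : l * (-(Mm)) * u x ^2 ≤ l * r' x * u x ^2 := by
          nlinarith [mul_nonneg (mul_nonneg hl.le (sub_nonneg.2 hr'le)) (sq_nonneg (u x))]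
        have e2 : l * (-(Mm)) * u x ^2 = -(Km * (l * (rmin * u x ^2))) := by
          rw [hKmdef]; field_simp
        have e3 : l * (rmin * u x ^2) ≤ E x := by
          simp only [hEdef]
          nlinarith [sq_nonneg (u' x),
            mul_nonneg (mul_nonneg hl.le (sub_nonneg.2 hrge)) (sq_nonneg (u x))]
        have e4 : Km * (l * (rmin * u x ^2)) ≤ Km * E x :=
          mul_le_mul_of_nonneg_left e3 hKm0
        linarith
      have hep := Real.exp_pos (Km*x)
      exact mul_nonneg (by linarith) hep.le
  -- the comparison: E y ≤ cmax * E x for all x, y in I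
  have hcomp : ∀ x ∈ I, ∀ y ∈ I, E y ≤ cmax * E x := by
    intro x hx y hy
    have hEx0 := hEnonneg x hx
    rcases le_total x y with hxy | hxy
    · have h := hFanti hx hy hxy
      have h2 := mul_le_mul_of_nonneg_right h (Real.exp_pos (K*y)).le
      rw [mul_assoc, mul_assoc, ← Real.exp_add, ← Real.exp_add] at h2
      simp only [neg_add_cancel, Real.exp_zero, mul_one] at h2
      have hle : Real.exp (-(K*x) + K*y) ≤ Real.exp (2*K) := by
        apply Real.exp_le_exp.2
        have h3 : -1 ≤ x := hx.1
        have h4 : y ≤ 1 := hy.2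
        nlinarith
      calc E y ≤ E x * Real.exp (-(K*x) + K*y) := h2
        _ ≤ E x * Real.exp (2*K) := mul_le_mul_of_nonneg_left hle hEx0
        _ ≤ E x * cmax := mul_le_mul_of_nonneg_left hexpK hEx0
        _ = cmax * E x := mul_comm _ _
    · have h := hGmono hy hx hxy
      have h2 := mul_le_mul_of_nonneg_right h (Real.exp_pos (-(Km*y))).le
      rw [mul_assoc, mul_assoc, ← Real.exp_add, ← Real.exp_add] at h2
      simp only [add_neg_cancel, Real.exp_zero, mul_one] at h2
      have hle : Real.exp (Km*x + -(Km*y)) ≤ Real.exp (2*Km) := by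
        apply Real.exp_le_exp.2
        have h3 : -1 ≤ y := hy.1
        have h4 : x ≤ 1 := hx.2
        nlinarith
      calc E y ≤ E x * Real.exp (Km*x + -(Km*y)) := h2
        _ ≤ E x * Real.exp (2*Km) := mul_le_mul_of_nonneg_left hle hEx0
        _ ≤ E x * cmax := mul_le_mul_of_nonneg_left hexpKm hEx0
        _ = cmax * E x := mul_comm _ _
  -- now the main argument
  by_cases h0 : u η₀ = 0
  · -- E η₀ = 0, so u ≡ 0, contradiction
    have hE0 : E η₀ = 0 := by simp [hEdef, hd0, h0]
    obtain ⟨x, hx, hux⟩ := hnt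
    have h1 : E x ≤ cmax * E η₀ := hcomp η₀ hη₀ x hx
    rw [hE0, mul_zero] at h1
    have h2 := hEnonneg x hx
    have hEx : E x = 0 := le_antisymm h1 h2
    have hrx := hrpos x hx
    apply hux
    have h3 : u' x ^2 + l * (r x * u x ^2) = 0 := hEx
    have h4 : l * (r x * u x ^2) ≤ 0 := by nlinarith [sq_nonneg (u' x)]
    have h5 : 0 ≤ l * (r x * u x ^2) := by positivity
    have h6 : u x ^ 2 = 0 := by
      have h7 := le_antisymm h4 h5
      have hlr : 0 < l * r x := mul_pos hl hrx
      nlinarith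
    exact pow_eq_zero_iff two_ne_zero |>.1 h6
  · -- key bound
    set B : ℝ := cmax * rmax / rmin with hBdef
    have hBpos : 0 < B := by positivity
    have hkey : ∀ i, u (η i) ^2 ≤ B * u η₀ ^2 := by
      intro i
      have h1 : E (η i) ≤ cmax * E η₀ := hcomp η₀ hη₀ (η i) (hη i)
      have hrge : rmin ≤ r (η i) := hrmin.2 ⟨η i, hη i, rfl⟩
      have hrle : r η₀ ≤ rmax := hrmax.2 ⟨η₀, hη₀, rfl⟩
      have h2 : l * (rmin * u (η i) ^2) ≤ E (η i) := by
        simp only [hEdef]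
        nlinarith [sq_nonneg (u' (η i)),
          mul_nonneg (mul_nonneg hl.le (sub_nonneg.2 hrge)) (sq_nonneg (u (η i)))]
      have h3 : E η₀ ≤ l * (rmax * u η₀ ^2) := by
        simp only [hEdef, hd0]
        nlinarith [mul_nonneg (mul_nonneg hl.le (sub_nonneg.2 hrle)) (sq_nonneg (u η₀))]
      have h4 : l * (rmin * u (η i) ^2) ≤ cmax * (l * (rmax * u η₀ ^2)) := by
        calc l * (rmin * u (η i) ^2) ≤ E (η i) := h2
          _ ≤ cmax * E η₀ := h1
          _ ≤ cmax * (l * (rmax * u η₀ ^2)) := mul_le_mul_of_nonneg_left h3 hcmax_pos.le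
      have h5 : rmin * u (η i) ^2 ≤ cmax * rmax * u η₀ ^2 := by nlinarith
      rw [hBdef]
      rw [div_mul_eq_mul_div, le_div_iff₀ hrmin_pos]
      linarith [h5]
    have habs : ∀ i, |u (η i)| ≤ Real.sqrt B * |u η₀| := by
      intro i
      have h1 : |u (η i)| = Real.sqrt (u (η i) ^2) := (Real.sqrt_sq_eq_abs _).symm
      rw [h1]
      calc Real.sqrt (u (η i) ^2) ≤ Real.sqrt (B * u η₀ ^2) :=
            Real.sqrt_le_sqrt (hkey i)
        _ = Real.sqrt B * Real.sqrt (u η₀ ^2) := Real.sqrt_mul hBpos.le _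
        _ = Real.sqrt B * |u η₀| := by rw [Real.sqrt_sq_eq_abs]
    have hsum : |u η₀| ≤ (∑ i, |α i|) * (Real.sqrt B * |u η₀|) := by
      calc |u η₀| = |∑ i, α i * u (η i)| := by rw [hbc]
        _ ≤ ∑ i, |α i * u (η i)| := Finset.abs_sum_le_sum_abs _ _
        _ ≤ ∑ i, |α i| * (Real.sqrt B * |u η₀|) := by
            apply Finset.sum_le_sum
            intro i _
            rw [abs_mul]
            exact mul_le_mul_of_nonneg_left (habs i) (abs_nonneg _)
        _ = (∑ i, |α i|) * (Real.sqrt B * |u η₀|) := by rw [← Finset.sum_mul]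
    have hu0pos : 0 < |u η₀| := abs_pos.2 h0
    have hsB : 0 < Real.sqrt B := Real.sqrt_pos.2 hBpos
    have hstrict : (∑ i, |α i|) * (Real.sqrt B * |u η₀|) < a₁ * (Real.sqrt B * |u η₀|) :=
      mul_lt_mul_of_pos_right hα (by positivity)
    have ha1B : a₁ * Real.sqrt B ≤ 1 := by
      rw [ha₁, hBdef, ← Real.sqrt_mul (by positivity)]
      have heq : rmin * cmin / (rmax * cmax) * (cmax * rmax / rmin) = cmin := by
        have h1 : rmax ≠ 0 := ne_of_gt hrmax_pos
        have h2 : cmax ≠ 0 := ne_of_gt hcmax_pos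
        have h3 : rmin ≠ 0 := ne_of_gt hrmin_pos
        field_simp
      rw [heq]
      rw [show (1:ℝ) = Real.sqrt 1 from (Real.sqrt_one).symm]
      exact Real.sqrt_le_sqrt hcmin_le_one
    have hfin : a₁ * (Real.sqrt B * |u η₀|) ≤ |u η₀| := by
      rw [← mul_assoc]
      nlinarith
    linarith
end
end

section
/- Let a₁ := (r_min c_min / (r_max c_max))^{1/2}. Let λ > 0, let m ≥ 1 be an integer, let η₀, η₁, …, η_m ∈ [-1,1], and let α₁, …, α_m ∈ ℝ with Σ_{i=1}^m |α_i| < a₁. Then the set of twice continuously differentiable solutions u of −u'' = λ r u on (−1,1) satisfying u(η₀) = Σ_{i=1}^m α_i u(η_i) is one-dimensional: there exists such a solution u₀ which is not identically zero, and every solution of this problem is a scalar multiple of u₀. -/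
open Set Real

noncomputable section

open intervalIntegral in
private 
lemma kernel_split (g : ℝ → ℝ) (hg : Continuous g) (t₀ x : ℝ) :
    ∫ s in t₀..x, (x - s) * g s = x * (∫ s in t₀..x, g s) - ∫ s in t₀..x, s * g s := by
  have h1 : ∀ s, (x - s) * g s = x * g s - s * g s := fun s => by ring
  simp_rw [h1]
  rw [intervalIntegral.integral_sub ((by fun_prop : Continuous fun s : ℝ => x * g s).intervalIntegrable _ _)
    ((by fun_prop : Continuous fun s : ℝ => s * g s).intervalIntegrable _ _),
    intervalIntegral.integral_const_mul]

open intervalIntegral in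
private lemma kernel_bound (g : ℝ → ℝ) (hg : Continuous g) (t₀ x : ℝ) (hd : |x - t₀| ≤ 2)
    (B : ℝ) (hB : 0 ≤ B) (n : ℕ)
    (hgb : ∀ s ∈ Set.uIcc t₀ x, |g s| ≤ B * |s - t₀| ^ n / n.factorial) :
    |∫ s in t₀..x, (x - s) * g s| ≤ 2 * B * |x - t₀| ^ (n+1) / (n+1).factorial := by
  have hfac : (0:ℝ) < n.factorial := by positivity
  rcases le_total t₀ x with h | h
  · have h1 : |∫ s in t₀..x, (x - s) * g s| ≤ ∫ s in t₀..x, |x - s| * |g s| := by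
      simpa [Real.norm_eq_abs] using
        intervalIntegral.norm_integral_le_integral_norm (f := fun s => (x - s) * g s) (μ := MeasureTheory.volume) h
    have h2 : (∫ s in t₀..x, |x - s| * |g s|) ≤ ∫ s in t₀..x, 2 * (B * (s - t₀) ^ n / n.factorial) := by
      apply intervalIntegral.integral_mono_on h
      · exact ((continuous_const.sub continuous_id).abs.mul hg.abs).intervalIntegrable _ _
      · exact (by fun_prop : Continuous fun s : ℝ => 2 * (B * (s - t₀) ^ n / n.factorial)).intervalIntegrable _ _
      · intro s hs
        have hs1 : t₀ ≤ s := hs.1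
        have hs2 : s ≤ x := hs.2
        have hgs := hgb s (by rw [Set.uIcc_of_le h]; exact hs)
        have h3 : |x - s| ≤ 2 := by rw [abs_of_nonneg (by linarith)]; rw [abs_of_nonneg (by linarith)] at hd; linarith
        have he : B * |s - t₀| ^ n / n.factorial = B * (s - t₀) ^ n / n.factorial := by
          rw [abs_of_nonneg (by linarith)]
        rw [he] at hgs
        exact mul_le_mul h3 hgs (abs_nonneg _) (by norm_num)
    have h4 : (∫ s in t₀..x, 2 * (B * (s - t₀) ^ n / n.factorial))
        = 2 * B / n.factorial * ∫ s in t₀..x, (s - t₀) ^ n := by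
      have : ∀ s : ℝ, 2 * (B * (s - t₀) ^ n / n.factorial) = 2 * B / n.factorial * (s - t₀) ^ n :=
        fun s => by field_simp
      simp_rw [this, intervalIntegral.integral_const_mul]
    have h5 : (∫ s in t₀..x, (s - t₀) ^ n) = (x - t₀) ^ (n + 1) / (n + 1) := by
      rw [intervalIntegral.integral_comp_sub_right (fun y => y ^ n) t₀]
      simp [integral_pow]
    calc |∫ s in t₀..x, (x - s) * g s| ≤ _ := h1
      _ ≤ _ := h2
      _ = 2 * B / n.factorial * ((x - t₀) ^ (n+1) / (n+1)) := by rw [h4, h5]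
      _ = 2 * B * |x - t₀| ^ (n+1) / (n+1).factorial := by
          rw [abs_of_nonneg (by linarith), div_mul_div_comm, Nat.factorial_succ]
          push_cast
          ring
  · have h0 : |∫ s in t₀..x, (x - s) * g s| = |∫ s in x..t₀, (x - s) * g s| := by
      rw [intervalIntegral.integral_symm, abs_neg]
    have h1 : |∫ s in x..t₀, (x - s) * g s| ≤ ∫ s in x..t₀, |x - s| * |g s| := by
      simpa [Real.norm_eq_abs] using
        intervalIntegral.norm_integral_le_integral_norm (f := fun s => (x - s) * g s) (μ := MeasureTheory.volume) h
    have h2 : (∫ s in x..t₀, |x - s| * |g s|) ≤ ∫ s in x..t₀, 2 * (B * (t₀ - s) ^ n / n.factorial) := by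
      apply intervalIntegral.integral_mono_on h
      · exact ((continuous_const.sub continuous_id).abs.mul hg.abs).intervalIntegrable _ _
      · exact (by fun_prop : Continuous fun s : ℝ => 2 * (B * (t₀ - s) ^ n / n.factorial)).intervalIntegrable _ _
      · intro s hs
        have hs1 : x ≤ s := hs.1
        have hs2 : s ≤ t₀ := hs.2
        have hgs := hgb s (by rw [Set.uIcc_of_ge h]; exact hs)
        have h3 : |x - s| ≤ 2 := by
          rw [abs_of_nonpos (by linarith)]; rw [abs_of_nonpos (by linarith)] at hd; linarith
        have he : B * |s - t₀| ^ n / n.factorial = B * (t₀ - s) ^ n / n.factorial := by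
          rw [abs_of_nonpos (by linarith)]; ring_nf
        rw [he] at hgs
        exact mul_le_mul h3 hgs (abs_nonneg _) (by norm_num)
    have h4 : (∫ s in x..t₀, 2 * (B * (t₀ - s) ^ n / n.factorial))
        = 2 * B / n.factorial * ∫ s in x..t₀, (t₀ - s) ^ n := by
      have : ∀ s : ℝ, 2 * (B * (t₀ - s) ^ n / n.factorial) = 2 * B / n.factorial * (t₀ - s) ^ n :=
        fun s => by field_simp
      simp_rw [this, intervalIntegral.integral_const_mul]
    have h5 : (∫ s in x..t₀, (t₀ - s) ^ n) = (t₀ - x) ^ (n + 1) / (n + 1) := by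
      rw [intervalIntegral.integral_comp_sub_left (fun y => y ^ n) t₀]
      simp [integral_pow]
    calc |∫ s in t₀..x, (x - s) * g s| = _ := h0
      _ ≤ _ := h1
      _ ≤ _ := h2
      _ = 2 * B / n.factorial * ((t₀ - x) ^ (n+1) / (n+1)) := by rw [h4, h5]
      _ = 2 * B * |x - t₀| ^ (n+1) / (n+1).factorial := by
          rw [abs_of_nonpos (by linarith), div_mul_div_comm, Nat.factorial_succ]
          push_cast
          ring


def ext1 (f : C(Set.Icc (-1:ℝ) 1, ℝ)) : ℝ → ℝ :=
  fun t => f (Set.projIcc (-1) 1 (by norm_num) t)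

lemma ext1_cont (f : C(Set.Icc (-1:ℝ) 1, ℝ)) : Continuous (ext1 f) :=
  f.continuous.comp continuous_projIcc

lemma ext1_eq (f : C(Set.Icc (-1:ℝ) 1, ℝ)) (x : ℝ) (hx : x ∈ Set.Icc (-1:ℝ) 1) :
    ext1 f x = f ⟨x, hx⟩ := by
  exact congrArg f (Set.projIcc_of_mem _ hx)

def Tf (R : ℝ → ℝ) (a b t₀ : ℝ) (f : C(Set.Icc (-1:ℝ) 1, ℝ)) : ℝ → ℝ :=
  fun x => a + b * (x - t₀) - (x * (∫ s in t₀..x, R s * ext1 f s) - ∫ s in t₀..x, s * (R s * ext1 f s))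

lemma Tf_hasDeriv (R : ℝ → ℝ) (hR : Continuous R) (a b t₀ : ℝ)
    (f : C(Set.Icc (-1:ℝ) 1, ℝ)) (x : ℝ) :
    HasDerivAt (Tf R a b t₀ f) (b - ∫ s in t₀..x, R s * ext1 f s) x := by
  have hg : Continuous fun s => R s * ext1 f s := hR.mul (ext1_cont f)
  have hG : HasDerivAt (fun y => ∫ s in t₀..y, R s * ext1 f s) (R x * ext1 f x) x :=
    (hg.integral_hasStrictDerivAt t₀ x).hasDerivAt
  have hH : HasDerivAt (fun y => ∫ s in t₀..y, s * (R s * ext1 f s)) (x * (R x * ext1 f x)) x :=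
    ((continuous_id.mul hg).integral_hasStrictDerivAt t₀ x).hasDerivAt
  have h1 : HasDerivAt (fun y : ℝ => a + b * (y - t₀)) (b * 1) x :=
    (((hasDerivAt_id x).sub_const t₀).const_mul b).const_add a
  have h2 := ((hasDerivAt_id x).mul hG).sub hH
  have h := h1.sub h2
  have h4 : b - ∫ s in t₀..x, R s * ext1 f s
      = b * 1 - (1 * (∫ s in t₀..x, R s * ext1 f s) + x * (R x * ext1 f x)
        - x * (R x * ext1 f x)) := by ring
  rw [h4]
  exact h

lemma Tf_cont (R : ℝ → ℝ) (hR : Continuous R) (a b t₀ : ℝ)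
    (f : C(Set.Icc (-1:ℝ) 1, ℝ)) : Continuous (Tf R a b t₀ f) :=
  continuous_iff_continuousAt.2 fun x => (Tf_hasDeriv R hR a b t₀ f x).continuousAt

def TS (R : ℝ → ℝ) (hR : Continuous R) (a b t₀ : ℝ) :
    C(Set.Icc (-1:ℝ) 1, ℝ) → C(Set.Icc (-1:ℝ) 1, ℝ) :=
  fun f => ⟨fun x => Tf R a b t₀ f x, (Tf_cont R hR a b t₀ f).comp continuous_subtype_val⟩

lemma TS_apply (R : ℝ → ℝ) (hR : Continuous R) (a b t₀ : ℝ)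
    (f : C(Set.Icc (-1:ℝ) 1, ℝ)) (x : Set.Icc (-1:ℝ) 1) :
    TS R hR a b t₀ f x = Tf R a b t₀ f ↑x := rfl

lemma Tdiff (g₁ g₂ : ℝ → ℝ) (h₁ : Continuous g₁) (h₂ : Continuous g₂) (t₀ x a b : ℝ) :
    (a + b * (x - t₀) - (x * (∫ s in t₀..x, g₁ s) - ∫ s in t₀..x, s * g₁ s))
    - (a + b * (x - t₀) - (x * (∫ s in t₀..x, g₂ s) - ∫ s in t₀..x, s * g₂ s))
    = -∫ s in t₀..x, (x - s) * (g₁ s - g₂ s) := by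
  rw [kernel_split (fun s => g₁ s - g₂ s) (h₁.sub h₂)]
  have e2 : (∫ s in t₀..x, (g₁ s - g₂ s)) = (∫ s in t₀..x, g₁ s) - ∫ s in t₀..x, g₂ s :=
    intervalIntegral.integral_sub (h₁.intervalIntegrable t₀ x) (h₂.intervalIntegrable t₀ x)
  have e3 : (∫ s in t₀..x, s * (g₁ s - g₂ s)) = (∫ s in t₀..x, s * g₁ s) - ∫ s in t₀..x, s * g₂ s := by
    have hh : ∀ s : ℝ, s * (g₁ s - g₂ s) = s * g₁ s - s * g₂ s := fun s => by ring
    simp_rw [hh]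
    exact intervalIntegral.integral_sub ((by fun_prop : Continuous fun s : ℝ => s * g₁ s).intervalIntegrable t₀ x)
      ((by fun_prop : Continuous fun s : ℝ => s * g₂ s).intervalIntegrable t₀ x)
  rw [e2, e3]
  ring

lemma TS_iter_bound (R : ℝ → ℝ) (hR : Continuous R) (B : ℝ) (hB : 0 ≤ B)
    (hRb : ∀ t, |R t| ≤ B) (a b t₀ : ℝ) (ht₀ : t₀ ∈ Set.Icc (-1:ℝ) 1)
    (f₁ f₂ : C(Set.Icc (-1:ℝ) 1, ℝ)) (n : ℕ) (x : Set.Icc (-1:ℝ) 1) :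
    |((TS R hR a b t₀)^[n] f₁) x - ((TS R hR a b t₀)^[n] f₂) x|
      ≤ dist f₁ f₂ * (2*B)^n * |(x:ℝ) - t₀|^n / n.factorial := by
  induction n generalizing x with
  | zero =>
    simpa [Real.dist_eq] using ContinuousMap.dist_apply_le_dist (f := f₁) (g := f₂) x
  | succ n ih =>
    set F₁ := (TS R hR a b t₀)^[n] f₁ with hF₁
    set F₂ := (TS R hR a b t₀)^[n] f₂ with hF₂
    rw [Function.iterate_succ_apply', Function.iterate_succ_apply']
    rw [TS_apply, TS_apply]
    have hdiff : Tf R a b t₀ F₁ ↑x - Tf R a b t₀ F₂ ↑x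
        = -∫ s in t₀..(x:ℝ), ((x:ℝ) - s) * ((fun s => R s * ext1 F₁ s) s - (fun s => R s * ext1 F₂ s) s) :=
      Tdiff _ _ (hR.mul (ext1_cont F₁)) (hR.mul (ext1_cont F₂)) t₀ (x:ℝ) a b
    rw [hdiff, abs_neg]
    have hd : |(x:ℝ) - t₀| ≤ 2 := by
      have h1 := x.2.1; have h2 := x.2.2; have h3 := ht₀.1; have h4 := ht₀.2
      rw [abs_le]; constructor <;> linarith
    have hb := kernel_bound (fun s => R s * ext1 F₁ s - R s * ext1 F₂ s)
      ((hR.mul (ext1_cont F₁)).sub (hR.mul (ext1_cont F₂))) t₀ (x:ℝ) hd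
      (dist f₁ f₂ * (2*B)^n * B) (by positivity) n ?_
    · calc |∫ s in t₀..(x:ℝ), ((x:ℝ) - s) * ((fun s => R s * ext1 F₁ s) s - (fun s => R s * ext1 F₂ s) s)|
          ≤ 2 * (dist f₁ f₂ * (2*B)^n * B) * |(x:ℝ) - t₀| ^ (n+1) / (n+1).factorial := hb
        _ = dist f₁ f₂ * (2*B)^(n+1) * |(x:ℝ) - t₀|^(n+1) / (n+1).factorial := by
            rw [pow_succ]; ring
    · intro s hs
      have hsI : s ∈ Set.Icc (-1:ℝ) 1 := by
        rcases Set.mem_uIcc.1 hs with ⟨hs1, hs2⟩ | ⟨hs1, hs2⟩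
        · exact ⟨by have := ht₀.1; linarith, by have := x.2.2; linarith⟩
        · exact ⟨by have := x.2.1; linarith, by have := ht₀.2; linarith⟩
      have hext : ext1 F₁ s - ext1 F₂ s = F₁ ⟨s, hsI⟩ - F₂ ⟨s, hsI⟩ := by
        rw [ext1_eq _ _ hsI, ext1_eq _ _ hsI]
      have hIH := ih ⟨s, hsI⟩
      have : |R s * ext1 F₁ s - R s * ext1 F₂ s| = |R s| * |ext1 F₁ s - ext1 F₂ s| := by
        rw [← abs_mul, mul_sub]
      rw [this, hext]
      calc |R s| * |F₁ ⟨s, hsI⟩ - F₂ ⟨s, hsI⟩|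
          ≤ B * (dist f₁ f₂ * (2*B)^n * |s - t₀|^n / n.factorial) :=
            mul_le_mul (hRb s) hIH (abs_nonneg _) hB
        _ = dist f₁ f₂ * (2*B)^n * B * |s - t₀| ^ n / n.factorial := by ring

lemma exists_sol (R : ℝ → ℝ) (hR : Continuous R) (B : ℝ) (hB : 0 ≤ B) (hRb : ∀ t, |R t| ≤ B)
    (t₀ : ℝ) (ht₀ : t₀ ∈ Set.Icc (-1:ℝ) 1) (a b : ℝ) :
    ∃ u u' u'' : ℝ → ℝ, (∀ x, HasDerivAt u (u' x) x) ∧ (∀ x, HasDerivAt u' (u'' x) x) ∧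
      Continuous u'' ∧ (∀ x ∈ Set.Icc (-1:ℝ) 1, u'' x = -(R x * u x)) ∧ u t₀ = a ∧ u' t₀ = b := by
  -- distance bound on iterates
  have hdist : ∀ n : ℕ, ∀ f₁ f₂ : C(Set.Icc (-1:ℝ) 1, ℝ),
      dist ((TS R hR a b t₀)^[n] f₁) ((TS R hR a b t₀)^[n] f₂)
        ≤ (4*B)^n / n.factorial * dist f₁ f₂ := by
    intro n f₁ f₂
    rw [ContinuousMap.dist_le (by positivity)]
    intro x
    rw [Real.dist_eq]
    calc |((TS R hR a b t₀)^[n] f₁) x - ((TS R hR a b t₀)^[n] f₂) x|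
        ≤ dist f₁ f₂ * (2*B)^n * |(x:ℝ) - t₀|^n / n.factorial :=
          TS_iter_bound R hR B hB hRb a b t₀ ht₀ f₁ f₂ n x
      _ ≤ dist f₁ f₂ * (2*B)^n * 2^n / n.factorial := by
          have hxb : |(x:ℝ) - t₀| ≤ 2 := by
            have h1 := x.2.1; have h2 := x.2.2; have h3 := ht₀.1; have h4 := ht₀.2
            rw [abs_le]; constructor <;> linarith
          have h1 : |(x:ℝ) - t₀|^n ≤ 2^n := pow_le_pow_left₀ (abs_nonneg _) hxb n
          have h2 : (0:ℝ) < n.factorial := by positivity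
          have h3 : (0:ℝ) ≤ dist f₁ f₂ * (2*B)^n := by positivity
          exact (div_le_div_iff_of_pos_right h2).2 (mul_le_mul_of_nonneg_left h1 h3)
      _ = (4*B)^n / n.factorial * dist f₁ f₂ := by
          have h4 : (2*B : ℝ)^n * 2^n = (4*B)^n := by rw [← mul_pow]; ring_nf
          rw [mul_assoc, h4]; ring
  -- choose n making the iterate a contraction
  obtain ⟨n, hn⟩ : ∃ n : ℕ, (4*B)^n / n.factorial < 1 := by
    have ht := FloorSemiring.tendsto_pow_div_factorial_atTop (K := ℝ) (4*B)
    exact (ht.eventually_lt_const one_pos).exists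
  have hnn : (0:ℝ) ≤ (4*B)^n / n.factorial := by positivity
  set c : NNReal := Real.toNNReal ((4*B)^n / n.factorial) with hc
  have hcc : (c:ℝ) = (4*B)^n / n.factorial := Real.coe_toNNReal _ hnn
  have hC : ContractingWith c ((TS R hR a b t₀)^[n]) := by
    constructor
    · rw [← NNReal.coe_lt_coe, hcc, NNReal.coe_one]; exact hn
    · apply LipschitzWith.of_dist_le_mul
      intro f₁ f₂
      rw [hcc]
      exact hdist n f₁ f₂
  have hfix : Function.IsFixedPt (TS R hR a b t₀) (hC.fixedPoint ((TS R hR a b t₀)^[n])) :=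
    ContractingWith.isFixedPt_fixedPoint_iterate hC
  set fp := hC.fixedPoint ((TS R hR a b t₀)^[n]) with hfp
  refine ⟨Tf R a b t₀ fp, fun x => b - ∫ s in t₀..x, R s * ext1 fp s,
    fun x => -(R x * ext1 fp x), fun x => Tf_hasDeriv R hR a b t₀ fp x, ?_, ?_, ?_, ?_, ?_⟩
  · intro x
    have hg : Continuous fun s => R s * ext1 fp s := hR.mul (ext1_cont fp)
    have hG : HasDerivAt (fun y => ∫ s in t₀..y, R s * ext1 fp s) (R x * ext1 fp x) x :=
      (hg.integral_hasStrictDerivAt t₀ x).hasDerivAt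
    exact hG.const_sub b
  · exact (hR.mul (ext1_cont fp)).neg
  · intro x hx
    have key : Tf R a b t₀ fp x = ext1 fp x := by
      have h1 : Tf R a b t₀ fp x = (TS R hR a b t₀ fp) ⟨x, hx⟩ := rfl
      rw [h1, hfix]
      exact (ext1_eq fp x hx).symm
    rw [key]
  · simp [Tf]
  · simp

lemma energy (r r' : ℝ → ℝ) (hr : C1I r r') (l rmin Mp Mm cmax : ℝ)
    (hl : 0 < l) (hrmin_pos : 0 < rmin) (hrge : ∀ x ∈ Set.Icc (-1:ℝ) 1, rmin ≤ r x)
    (hMp' : ∀ x ∈ Set.Icc (-1:ℝ) 1, r' x ≤ Mp) (hMp0 : 0 ≤ Mp)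
    (hMm' : ∀ x ∈ Set.Icc (-1:ℝ) 1, -(r' x) ≤ Mm) (hMm0 : 0 ≤ Mm)
    (hcp : Real.exp (2 * Mp / rmin) ≤ cmax) (hcm : Real.exp (2 * Mm / rmin) ≤ cmax)
    (u u' u'' : ℝ → ℝ) (hu : C2I u u' u'')
    (hode : ∀ x ∈ Set.Ioo (-1:ℝ) 1, -(u'' x) = l * r x * u x) :
    ∀ x ∈ Set.Icc (-1:ℝ) 1, ∀ y ∈ Set.Icc (-1:ℝ) 1,
      u y ^ 2 + (u' y) ^ 2 / (l * r y) ≤ cmax * (u x ^ 2 + (u' x) ^ 2 / (l * r x)) := by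
  have hrpos : ∀ x ∈ Set.Icc (-1:ℝ) 1, 0 < r x := fun x hx => lt_of_lt_of_le hrmin_pos (hrge x hx)
  have hucont : ContinuousOn u (Set.Icc (-1:ℝ) 1) := fun x hx => (hu.1 x hx).continuousWithinAt
  have hu'cont : ContinuousOn u' (Set.Icc (-1:ℝ) 1) := fun x hx => (hu.2.1 x hx).continuousWithinAt
  have hrcont : ContinuousOn r (Set.Icc (-1:ℝ) 1) := fun x hx => (hr.1 x hx).continuousWithinAt
  have hρcont : ContinuousOn (fun z => u z ^ 2 + (u' z) ^ 2 / (l * r z)) (Set.Icc (-1:ℝ) 1) := by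
    apply (hucont.pow 2).add
    exact (hu'cont.pow 2).div (continuousOn_const.mul hrcont)
      (fun x hx => by have := hrpos x hx; positivity)
  -- derivative of the energy at interior points
  have hderiv : ∀ x ∈ Set.Ioo (-1:ℝ) 1,
      HasDerivAt (fun z => u z ^ 2 + (u' z) ^ 2 / (l * r z))
        (-((u' x) ^ 2 * r' x / (l * (r x) ^ 2))) x := by
    intro x hx
    have hxI : x ∈ Set.Icc (-1:ℝ) 1 := Set.Ioo_subset_Icc_self hx
    have hnb : Set.Icc (-1:ℝ) 1 ∈ nhds x := Icc_mem_nhds hx.1 hx.2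
    have hu1 : HasDerivAt u (u' x) x := (hu.1 x hxI).hasDerivAt hnb
    have hu2 : HasDerivAt u' (u'' x) x := (hu.2.1 x hxI).hasDerivAt hnb
    have hr1 : HasDerivAt r (r' x) x := (hr.1 x hxI).hasDerivAt hnb
    have hrx : 0 < r x := hrpos x hxI
    have hne : l * r x ≠ 0 := by positivity
    have h1 : HasDerivAt (fun z => u z ^ 2) (2 * u x ^ 1 * u' x) x := by
      have h := hu1.pow 2; simp at h ⊢; exact h
    have h2 : HasDerivAt (fun z => (u' z) ^ 2) (2 * u' x ^ 1 * u'' x) x := by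
      have h := hu2.pow 2; simp at h ⊢; exact h
    have h3 : HasDerivAt (fun z => l * r z) (l * r' x) x := hr1.const_mul l
    have h4 := h2.fun_div h3 hne
    have h5 : HasDerivAt (fun z => u z ^ 2 + (u' z) ^ 2 / (l * r z)) _ x := h1.add h4
    have hode' : u'' x = -(l * r x * u x) := by have := hode x hx; linarith
    convert h5 using 1
    rw [hode']
    field_simp
    ring
  -- monotone auxiliary function with exponent Mp/rmin
  have hFmono : MonotoneOn (fun t => (u t ^ 2 + (u' t) ^ 2 / (l * r t)) * Real.exp ((Mp/rmin) * t))
      (Set.Icc (-1:ℝ) 1) := by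
    apply monotoneOn_of_deriv_nonneg (convex_Icc _ _)
    · exact hρcont.mul (Real.continuous_exp.comp (continuous_const.mul continuous_id)).continuousOn
    · rw [interior_Icc]
      intro x hx
      have hexp : HasDerivAt (fun t => Real.exp ((Mp/rmin) * t))
          (Real.exp ((Mp/rmin) * x) * ((Mp/rmin) * 1)) x :=
        ((hasDerivAt_id x).const_mul (Mp/rmin)).exp
      exact ((hderiv x hx).mul hexp).differentiableAt.differentiableWithinAt
    · rw [interior_Icc]
      intro x hx
      have hxI : x ∈ Set.Icc (-1:ℝ) 1 := Set.Ioo_subset_Icc_self hx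
      have hrx : 0 < r x := hrpos x hxI
      have hexp : HasDerivAt (fun t => Real.exp ((Mp/rmin) * t))
          (Real.exp ((Mp/rmin) * x) * ((Mp/rmin) * 1)) x :=
        ((hasDerivAt_id x).const_mul (Mp/rmin)).exp
      rw [HasDerivAt.deriv (f := fun t => (u t ^ 2 + (u' t) ^ 2 / (l * r t)) * Real.exp ((Mp/rmin) * t)) ((hderiv x hx).mul hexp)]
      have he : (0:ℝ) < Real.exp ((Mp/rmin) * x) := Real.exp_pos _
      have hre : -((u' x) ^ 2 * r' x / (l * (r x) ^ 2)) * Real.exp ((Mp/rmin) * x)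
          + (u x ^ 2 + (u' x) ^ 2 / (l * r x)) * (Real.exp ((Mp/rmin) * x) * ((Mp/rmin) * 1))
          = Real.exp ((Mp/rmin) * x) *
            (-((u' x) ^ 2 * r' x / (l * (r x) ^ 2)) + (Mp/rmin) * (u x ^ 2 + (u' x) ^ 2 / (l * r x))) := by
        ring
      rw [hre]
      apply mul_nonneg he.le
      have hkey : 0 ≤ Mp * r x - r' x * rmin := by
        nlinarith [mul_nonneg (sub_nonneg.2 (hMp' x hxI)) hrmin_pos.le,
          mul_nonneg hMp0 (sub_nonneg.2 (hrge x hxI))]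
      have expand : -((u' x) ^ 2 * r' x / (l * (r x) ^ 2)) + (Mp/rmin) * (u x ^ 2 + (u' x) ^ 2 / (l * r x))
          = u x ^ 2 * (Mp/rmin) + (u' x) ^ 2 * (Mp * r x - r' x * rmin) / (l * (r x) ^ 2 * rmin) := by
        field_simp
        ring
      rw [expand]
      apply add_nonneg (mul_nonneg (sq_nonneg _) (div_nonneg hMp0 hrmin_pos.le))
      exact div_nonneg (mul_nonneg (sq_nonneg _) hkey) (by positivity)
  -- antitone auxiliary function with exponent -Mm/rmin
  have hGanti : AntitoneOn (fun t => (u t ^ 2 + (u' t) ^ 2 / (l * r t)) * Real.exp (-(Mm/rmin) * t))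
      (Set.Icc (-1:ℝ) 1) := by
    apply antitoneOn_of_deriv_nonpos (convex_Icc _ _)
    · exact hρcont.mul (Real.continuous_exp.comp (continuous_const.mul continuous_id)).continuousOn
    · rw [interior_Icc]
      intro x hx
      have hexp : HasDerivAt (fun t => Real.exp (-(Mm/rmin) * t))
          (Real.exp (-(Mm/rmin) * x) * (-(Mm/rmin) * 1)) x :=
        ((hasDerivAt_id x).const_mul (-(Mm/rmin))).exp
      exact ((hderiv x hx).mul hexp).differentiableAt.differentiableWithinAt
    · rw [interior_Icc]
      intro x hx
      have hxI : x ∈ Set.Icc (-1:ℝ) 1 := Set.Ioo_subset_Icc_self hx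
      have hrx : 0 < r x := hrpos x hxI
      have hexp : HasDerivAt (fun t => Real.exp (-(Mm/rmin) * t))
          (Real.exp (-(Mm/rmin) * x) * (-(Mm/rmin) * 1)) x :=
        ((hasDerivAt_id x).const_mul (-(Mm/rmin))).exp
      rw [HasDerivAt.deriv (f := fun t => (u t ^ 2 + (u' t) ^ 2 / (l * r t)) * Real.exp (-(Mm/rmin) * t)) ((hderiv x hx).mul hexp)]
      have he : (0:ℝ) < Real.exp (-(Mm/rmin) * x) := Real.exp_pos _
      have hre : -((u' x) ^ 2 * r' x / (l * (r x) ^ 2)) * Real.exp (-(Mm/rmin) * x)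
          + (u x ^ 2 + (u' x) ^ 2 / (l * r x)) * (Real.exp (-(Mm/rmin) * x) * (-(Mm/rmin) * 1))
          = -(Real.exp (-(Mm/rmin) * x) *
            (((u' x) ^ 2 * r' x / (l * (r x) ^ 2)) + (Mm/rmin) * (u x ^ 2 + (u' x) ^ 2 / (l * r x)))) := by
        ring
      rw [hre, neg_nonpos]
      apply mul_nonneg he.le
      have hkey : 0 ≤ Mm * r x + r' x * rmin := by
        nlinarith [mul_nonneg (sub_nonneg.2 (hMm' x hxI)) hrmin_pos.le,
          mul_nonneg hMm0 (sub_nonneg.2 (hrge x hxI))]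
      have expand : ((u' x) ^ 2 * r' x / (l * (r x) ^ 2)) + (Mm/rmin) * (u x ^ 2 + (u' x) ^ 2 / (l * r x))
          = u x ^ 2 * (Mm/rmin) + (u' x) ^ 2 * (Mm * r x + r' x * rmin) / (l * (r x) ^ 2 * rmin) := by
        field_simp
        ring
      rw [expand]
      apply add_nonneg (mul_nonneg (sq_nonneg _) (div_nonneg hMm0 hrmin_pos.le))
      exact div_nonneg (mul_nonneg (sq_nonneg _) hkey) (by positivity)
  -- conclude
  intro x hx y hy
  have hρx0 : 0 ≤ u x ^ 2 + (u' x) ^ 2 / (l * r x) :=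
    add_nonneg (sq_nonneg _) (div_nonneg (sq_nonneg _) (mul_pos hl (hrpos x hx)).le)
  rcases le_total x y with hxy | hxy
  · have h1 := hGanti hx hy hxy
    have key : u y ^ 2 + (u' y) ^ 2 / (l * r y)
        ≤ (u x ^ 2 + (u' x) ^ 2 / (l * r x)) * Real.exp ((Mm/rmin) * (y - x)) := by
      calc u y ^ 2 + (u' y) ^ 2 / (l * r y)
          = (u y ^ 2 + (u' y) ^ 2 / (l * r y)) * Real.exp (-(Mm/rmin) * y) * Real.exp ((Mm/rmin) * y) := by
            rw [mul_assoc, ← Real.exp_add]; simp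
        _ ≤ (u x ^ 2 + (u' x) ^ 2 / (l * r x)) * Real.exp (-(Mm/rmin) * x) * Real.exp ((Mm/rmin) * y) :=
            mul_le_mul_of_nonneg_right h1 (Real.exp_pos _).le
        _ = (u x ^ 2 + (u' x) ^ 2 / (l * r x)) * Real.exp ((Mm/rmin) * (y - x)) := by
            rw [mul_assoc, ← Real.exp_add]; ring_nf
    have h2 : Real.exp ((Mm/rmin) * (y - x)) ≤ cmax := by
      refine le_trans (Real.exp_le_exp.2 ?_) (by rw [show (2:ℝ) * Mm / rmin = Mm/rmin * 2 by ring] at hcm; exact hcm)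
      have : y - x ≤ 2 := by have := hx.1; have := hy.2; linarith
      exact mul_le_mul_of_nonneg_left this (div_nonneg hMm0 hrmin_pos.le)
    calc u y ^ 2 + (u' y) ^ 2 / (l * r y) ≤ _ := key
      _ ≤ (u x ^ 2 + (u' x) ^ 2 / (l * r x)) * cmax := mul_le_mul_of_nonneg_left h2 hρx0
      _ = cmax * (u x ^ 2 + (u' x) ^ 2 / (l * r x)) := mul_comm _ _
  · have h1 := hFmono hy hx hxy
    have key : u y ^ 2 + (u' y) ^ 2 / (l * r y)
        ≤ (u x ^ 2 + (u' x) ^ 2 / (l * r x)) * Real.exp ((Mp/rmin) * (x - y)) := by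
      calc u y ^ 2 + (u' y) ^ 2 / (l * r y)
          = (u y ^ 2 + (u' y) ^ 2 / (l * r y)) * Real.exp ((Mp/rmin) * y) * Real.exp (-(Mp/rmin) * y) := by
            rw [mul_assoc, ← Real.exp_add]; simp
        _ ≤ (u x ^ 2 + (u' x) ^ 2 / (l * r x)) * Real.exp ((Mp/rmin) * x) * Real.exp (-(Mp/rmin) * y) :=
            mul_le_mul_of_nonneg_right h1 (Real.exp_pos _).le
        _ = (u x ^ 2 + (u' x) ^ 2 / (l * r x)) * Real.exp ((Mp/rmin) * (x - y)) := by
            rw [mul_assoc, ← Real.exp_add]; ring_nf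
    have h2 : Real.exp ((Mp/rmin) * (x - y)) ≤ cmax := by
      refine le_trans (Real.exp_le_exp.2 ?_) (by rw [show (2:ℝ) * Mp / rmin = Mp/rmin * 2 by ring] at hcp; exact hcp)
      have : x - y ≤ 2 := by have := hy.1; have := hx.2; linarith
      exact mul_le_mul_of_nonneg_left this (div_nonneg hMp0 hrmin_pos.le)
    calc u y ^ 2 + (u' y) ^ 2 / (l * r y) ≤ _ := key
      _ ≤ (u x ^ 2 + (u' x) ^ 2 / (l * r x)) * cmax := mul_le_mul_of_nonneg_left h2 hρx0
      _ = cmax * (u x ^ 2 + (u' x) ^ 2 / (l * r x)) := mul_comm _ _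

theorem stmt8
    (r r' : ℝ → ℝ) (hr : C1I r r') (hrpos : ∀ x ∈ Set.Icc (-1:ℝ) 1, 0 < r x)
    (rmin rmax Mp Mm cmin cmax : ℝ)
    (hrmin : IsLeast (r '' Set.Icc (-1:ℝ) 1) rmin)
    (hrmax : IsGreatest (r '' Set.Icc (-1:ℝ) 1) rmax)
    (hMp : IsGreatest ((fun x => max (r' x) 0) '' Set.Icc (-1:ℝ) 1) Mp)
    (hMm : IsGreatest ((fun x => max (-(r' x)) 0) '' Set.Icc (-1:ℝ) 1) Mm)
    (hcmin : cmin = min (Real.exp (-(2 * Mp) / rmin)) (Real.exp (-(2 * Mm) / rmin)))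
    (hcmax : cmax = cmin⁻¹)
    (a₁ : ℝ) (ha₁ : a₁ = Real.sqrt (rmin * cmin / (rmax * cmax)))
    (l : ℝ) (hl : 0 < l)
    (m : ℕ) (hm : 1 ≤ m)
    (η₀ : ℝ) (hη₀ : η₀ ∈ Set.Icc (-1:ℝ) 1)
    (η : Fin m → ℝ) (hη : ∀ i, η i ∈ Set.Icc (-1:ℝ) 1)
    (α : Fin m → ℝ) (hα : ∑ i, |α i| < a₁) :
    ∃ u₀ u₀' u₀'' : ℝ → ℝ, C2I u₀ u₀' u₀'' ∧
      (∀ x ∈ Set.Ioo (-1:ℝ) 1, -(u₀'' x) = l * r x * u₀ x) ∧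
      u₀ η₀ = ∑ i, α i * u₀ (η i) ∧
      (∃ x ∈ Set.Icc (-1:ℝ) 1, u₀ x ≠ 0) ∧
      (∀ u u' u'' : ℝ → ℝ, C2I u u' u'' →
        (∀ x ∈ Set.Ioo (-1:ℝ) 1, -(u'' x) = l * r x * u x) →
        u η₀ = ∑ i, α i * u (η i) →
        ∃ c : ℝ, ∀ x ∈ Set.Icc (-1:ℝ) 1, u x = c * u₀ x) := by
  -- basic positivity facts
  have hrge : ∀ x ∈ Set.Icc (-1:ℝ) 1, rmin ≤ r x := fun x hx => hrmin.2 ⟨x, hx, rfl⟩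
  have hrle : ∀ x ∈ Set.Icc (-1:ℝ) 1, r x ≤ rmax := fun x hx => hrmax.2 ⟨x, hx, rfl⟩
  have hrmin_pos : 0 < rmin := by
    obtain ⟨x, hx, hxe⟩ := hrmin.1
    rw [← hxe]; exact hrpos x hx
  have hrminmax : rmin ≤ rmax := by
    obtain ⟨x, hx, hxe⟩ := hrmin.1
    rw [← hxe]; exact hrle x hx
  have hrmax_pos : 0 < rmax := lt_of_lt_of_le hrmin_pos hrminmax
  have hMp0 : 0 ≤ Mp := by obtain ⟨x, _, hxe⟩ := hMp.1; rw [← hxe]; exact le_max_right _ _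
  have hMm0 : 0 ≤ Mm := by obtain ⟨x, _, hxe⟩ := hMm.1; rw [← hxe]; exact le_max_right _ _
  have hMp' : ∀ x ∈ Set.Icc (-1:ℝ) 1, r' x ≤ Mp :=
    fun x hx => le_trans (le_max_left _ _) (hMp.2 ⟨x, hx, rfl⟩)
  have hMm' : ∀ x ∈ Set.Icc (-1:ℝ) 1, -(r' x) ≤ Mm :=
    fun x hx => le_trans (le_max_left _ _) (hMm.2 ⟨x, hx, rfl⟩)
  have hcmin_pos : 0 < cmin := by
    rw [hcmin]; exact lt_min (Real.exp_pos _) (Real.exp_pos _)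
  have hcmin1 : cmin ≤ 1 := by
    rw [hcmin]
    refine le_trans (min_le_left _ _) (Real.exp_le_one_iff.2 ?_)
    apply div_nonpos_of_nonpos_of_nonneg (by linarith) hrmin_pos.le
  have hcmax_pos : 0 < cmax := by rw [hcmax]; exact inv_pos.2 hcmin_pos
  have hcp : Real.exp (2 * Mp / rmin) ≤ cmax := by
    rw [hcmax]
    have h1 : cmin ≤ Real.exp (-(2 * Mp) / rmin) := by rw [hcmin]; exact min_le_left _ _
    have h2 := one_div_le_one_div_of_le hcmin_pos h1
    rw [one_div, one_div] at h2
    have h3 : (Real.exp (-(2 * Mp) / rmin))⁻¹ = Real.exp (2 * Mp / rmin) := by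
      rw [← Real.exp_neg]; ring_nf
    rw [← h3]; exact h2
  have hcm : Real.exp (2 * Mm / rmin) ≤ cmax := by
    rw [hcmax]
    have h1 : cmin ≤ Real.exp (-(2 * Mm) / rmin) := by rw [hcmin]; exact min_le_right _ _
    have h2 := one_div_le_one_div_of_le hcmin_pos h1
    rw [one_div, one_div] at h2
    have h3 : (Real.exp (-(2 * Mm) / rmin))⁻¹ = Real.exp (2 * Mm / rmin) := by
      rw [← Real.exp_neg]; ring_nf
    rw [← h3]; exact h2
  -- the coefficient function, extended continuously to all of ℝ
  have hrcont : ContinuousOn r (Set.Icc (-1:ℝ) 1) := fun x hx => (hr.1 x hx).continuousWithinAt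
  set proj : ℝ → ℝ := fun t => max (-1) (min 1 t) with hproj
  have hprojmem : ∀ t, proj t ∈ Set.Icc (-1:ℝ) 1 :=
    fun t => ⟨le_max_left _ _, max_le (by norm_num) (min_le_left _ _)⟩
  have hprojid : ∀ t ∈ Set.Icc (-1:ℝ) 1, proj t = t := by
    intro t ht
    rw [hproj]
    simp only
    rw [min_eq_right ht.2, max_eq_right ht.1]
  have hprojcont : Continuous proj := by fun_prop
  set R : ℝ → ℝ := fun t => l * r (proj t) with hRdef
  have hRcont : Continuous R :=
    continuous_const.mul (hrcont.comp_continuous hprojcont hprojmem)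
  have hRW : ∀ x ∈ Set.Icc (-1:ℝ) 1, R x = l * r x := by
    intro x hx; rw [hRdef]; simp only; rw [hprojid x hx]
  have hRb : ∀ t, |R t| ≤ l * rmax := by
    intro t
    have h1 := hrpos _ (hprojmem t)
    have h2 := hrle _ (hprojmem t)
    rw [hRdef]; simp only
    rw [abs_of_pos (by positivity)]
    exact mul_le_mul_of_nonneg_left h2 hl.le
  -- fundamental solutions P (value 1, slope 0 at η₀) and Q (value 0, slope 1 at η₀)
  obtain ⟨P, P', P'', hP1, hP2, hP3, hP4, hP5, hP6⟩ :=
    exists_sol R hRcont (l * rmax) (by positivity) hRb η₀ hη₀ 1 0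
  obtain ⟨Q, Q', Q'', hQ1, hQ2, hQ3, hQ4, hQ5, hQ6⟩ :=
    exists_sol R hRcont (l * rmax) (by positivity) hRb η₀ hη₀ 0 1
  have hPC2 : C2I P P' P'' :=
    ⟨fun x _ => (hP1 x).hasDerivWithinAt, fun x _ => (hP2 x).hasDerivWithinAt, hP3.continuousOn⟩
  have hQC2 : C2I Q Q' Q'' :=
    ⟨fun x _ => (hQ1 x).hasDerivWithinAt, fun x _ => (hQ2 x).hasDerivWithinAt, hQ3.continuousOn⟩
  have hPode : ∀ x ∈ Set.Icc (-1:ℝ) 1, -(P'' x) = l * r x * P x := by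
    intro x hx; rw [hP4 x hx, hRW x hx]; ring
  have hQode : ∀ x ∈ Set.Icc (-1:ℝ) 1, -(Q'' x) = l * r x * Q x := by
    intro x hx; rw [hQ4 x hx, hRW x hx]; ring
  -- energy estimates
  have hEP := energy r r' hr l rmin Mp Mm cmax hl hrmin_pos hrge hMp' hMp0 hMm' hMm0 hcp hcm
    P P' P'' hPC2 (fun x hx => hPode x (Set.Ioo_subset_Icc_self hx))
  -- bound |P (η i)| ≤ √cmax
  have hPb : ∀ i, |P (η i)| ≤ Real.sqrt cmax := by
    intro i
    have h1 := hEP η₀ hη₀ (η i) (hη i)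
    rw [hP5, hP6] at h1
    have h2 : cmax * ((1:ℝ) ^ 2 + 0 ^ 2 / (l * r η₀)) = cmax := by
      simp
    rw [h2] at h1
    have h3 : (P (η i)) ^ 2 ≤ cmax := by
      have h4 : 0 ≤ (P' (η i)) ^ 2 / (l * r (η i)) :=
        div_nonneg (sq_nonneg _) (mul_pos hl (hrpos _ (hη i))).le
      linarith
    rw [← Real.sqrt_sq_eq_abs]
    exact Real.sqrt_le_sqrt h3
  -- the sum estimate
  have hsq_pos : 0 < Real.sqrt cmax := Real.sqrt_pos.2 hcmax_pos
  have hsum : |∑ i, α i * P (η i)| < 1 := by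
    have h1 : |∑ i, α i * P (η i)| ≤ (∑ i, |α i|) * Real.sqrt cmax := by
      calc |∑ i, α i * P (η i)| ≤ ∑ i, |α i * P (η i)| := Finset.abs_sum_le_sum_abs _ _
        _ ≤ ∑ i, |α i| * Real.sqrt cmax := by
            apply Finset.sum_le_sum
            intro i _
            rw [abs_mul]
            exact mul_le_mul_of_nonneg_left (hPb i) (abs_nonneg _)
        _ = (∑ i, |α i|) * Real.sqrt cmax := by rw [Finset.sum_mul]
    have h2 : (∑ i, |α i|) * Real.sqrt cmax < a₁ * Real.sqrt cmax :=
      mul_lt_mul_of_pos_right hα hsq_pos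
    have h3 : a₁ * Real.sqrt cmax ≤ 1 := by
      rw [ha₁, ← Real.sqrt_mul (by positivity) cmax]
      have h4 : rmin * cmin / (rmax * cmax) * cmax = rmin * cmin / rmax := by
        field_simp
      rw [h4]
      rw [show (1:ℝ) = Real.sqrt 1 by simp]
      apply Real.sqrt_le_sqrt
      rw [div_le_one hrmax_pos]
      nlinarith
    linarith
  -- the linear functional applied to P and Q
  set SP : ℝ := ∑ i, α i * P (η i) with hSPdef
  set SQ : ℝ := ∑ i, α i * Q (η i) with hSQdef
  set LP : ℝ := 1 - SP with hLPdef
  set LQ : ℝ := Q η₀ - SQ with hLQdef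
  have hLP_pos : 0 < LP := by
    rw [hLPdef]
    have := abs_lt.1 hsum
    linarith [this.2]
  have hLPne : LP ≠ 0 := ne_of_gt hLP_pos
  -- the solution u₀
  refine ⟨fun x => LP * Q x - LQ * P x, fun x => LP * Q' x - LQ * P' x,
    fun x => LP * Q'' x - LQ * P'' x, ?_, ?_, ?_, ?_, ?_⟩
  · refine ⟨fun x _ => (((hQ1 x).const_mul LP).sub ((hP1 x).const_mul LQ)).hasDerivWithinAt,
      fun x _ => (((hQ2 x).const_mul LP).sub ((hP2 x).const_mul LQ)).hasDerivWithinAt,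
      ((continuous_const.mul hQ3).sub (continuous_const.mul hP3)).continuousOn⟩
  · intro x hx
    have hp := hPode x (Set.Ioo_subset_Icc_self hx)
    have hq := hQode x (Set.Ioo_subset_Icc_self hx)
    linear_combination LP * hq - LQ * hp
  · have hterm : ∀ i, α i * (LP * Q (η i) - LQ * P (η i))
        = LP * (α i * Q (η i)) - LQ * (α i * P (η i)) := fun i => by ring
    rw [Finset.sum_congr rfl (fun i _ => hterm i), Finset.sum_sub_distrib,
      ← Finset.mul_sum, ← Finset.mul_sum, ← hSPdef, ← hSQdef]
    show LP * Q η₀ - LQ * P η₀ = LP * SQ - LQ * SP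
    rw [hLQdef, hLPdef, hP5]
    ring
  · by_contra hcon
    push_neg at hcon
    have hd1 : HasDerivWithinAt (fun x => LP * Q x - LQ * P x) (LP * Q' η₀ - LQ * P' η₀)
        (Set.Icc (-1:ℝ) 1) η₀ :=
      (((hQ1 η₀).const_mul LP).sub ((hP1 η₀).const_mul LQ)).hasDerivWithinAt
    have hd2 : HasDerivWithinAt (fun x => LP * Q x - LQ * P x) 0 (Set.Icc (-1:ℝ) 1) η₀ := by
      have h0 : HasDerivWithinAt (fun _ : ℝ => (0:ℝ)) 0 (Set.Icc (-1:ℝ) 1) η₀ :=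
        hasDerivWithinAt_const _ _ _
      exact h0.congr (fun x hx => hcon x hx) (hcon η₀ hη₀)
    have hud : UniqueDiffWithinAt ℝ (Set.Icc (-1:ℝ) 1) η₀ :=
      (uniqueDiffOn_Icc (by norm_num : (-1:ℝ) < 1)) η₀ hη₀
    have heq : LP * Q' η₀ - LQ * P' η₀ = 0 := by
      rw [← hd1.derivWithin hud, ← hd2.derivWithin hud]
    rw [hQ6, hP6] at heq
    have : LP = 0 := by linarith
    exact hLPne this
  · intro u u' u'' huC2 huode hucon
    set A : ℝ := u η₀ with hAdef
    set Bv : ℝ := u' η₀ with hBvdef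
    -- the difference w is a solution with zero initial data at η₀
    have hwC2 : C2I (fun x => u x - A * P x - Bv * Q x)
        (fun x => u' x - A * P' x - Bv * Q' x) (fun x => u'' x - A * P'' x - Bv * Q'' x) := by
      refine ⟨fun x hx => ((huC2.1 x hx).sub ((hP1 x).hasDerivWithinAt.const_mul A)).sub
          ((hQ1 x).hasDerivWithinAt.const_mul Bv),
        fun x hx => ((huC2.2.1 x hx).sub ((hP2 x).hasDerivWithinAt.const_mul A)).sub
          ((hQ2 x).hasDerivWithinAt.const_mul Bv),
        (huC2.2.2.sub (hP3.continuousOn.const_smul A)).sub (hQ3.continuousOn.const_smul Bv)⟩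
    have hwode : ∀ x ∈ Set.Ioo (-1:ℝ) 1,
        -((fun x => u'' x - A * P'' x - Bv * Q'' x) x)
          = l * r x * ((fun x => u x - A * P x - Bv * Q x) x) := by
      intro x hx
      have hp := hPode x (Set.Ioo_subset_Icc_self hx)
      have hq := hQode x (Set.Ioo_subset_Icc_self hx)
      have hu0 := huode x hx
      simp only
      linear_combination hu0 - A * hp - Bv * hq
    have hEw := energy r r' hr l rmin Mp Mm cmax hl hrmin_pos hrge hMp' hMp0 hMm' hMm0 hcp hcm
      _ _ _ hwC2 hwode
    have hw0 : ∀ y ∈ Set.Icc (-1:ℝ) 1, u y - A * P y - Bv * Q y = 0 := by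
      intro y hy
      have h1 := hEw η₀ hη₀ y hy
      rw [hP5, hP6, hQ5, hQ6] at h1
      have h2 : u η₀ - A * 1 - Bv * 0 = 0 := by rw [← hAdef]; ring
      have h3 : u' η₀ - A * 0 - Bv * 1 = 0 := by rw [← hBvdef]; ring
      rw [h2, h3] at h1
      simp only [ne_eq, OfNat.ofNat_ne_zero, not_false_eq_true, zero_pow, zero_div, add_zero,
        mul_zero, zero_add] at h1
      have h4 : 0 ≤ ((fun x => u' x - A * P' x - Bv * Q' x) y) ^ 2 / (l * r y) :=
        div_nonneg (sq_nonneg _) (mul_pos hl (hrpos _ hy)).le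
      have h5 : (u y - A * P y - Bv * Q y) ^ 2 ≤ 0 := by
        simp only at h1 h4
        nlinarith
      have h6 := sq_nonneg (u y - A * P y - Bv * Q y)
      have h7 : (u y - A * P y - Bv * Q y) ^ 2 = 0 := le_antisymm h5 h6
      exact pow_eq_zero_iff (by norm_num) |>.1 h7
    have hrep : ∀ y ∈ Set.Icc (-1:ℝ) 1, u y = A * P y + Bv * Q y := by
      intro y hy; have := hw0 y hy; linarith
    -- constraint gives the linear relation
    have hrel : A * LP = Bv * SQ := by
      have h1 : u η₀ = A := rfl
      have h2 : ∑ i, α i * u (η i) = A * SP + Bv * SQ := by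
        rw [hSPdef, hSQdef]
        rw [Finset.sum_congr rfl (fun i _ => by rw [hrep (η i) (hη i)]; ring :
          ∀ i ∈ Finset.univ, α i * u (η i) = A * (α i * P (η i)) + Bv * (α i * Q (η i)))]
        rw [Finset.sum_add_distrib, ← Finset.mul_sum, ← Finset.mul_sum]
      rw [h2] at hucon
      rw [hLPdef]
      linear_combination hucon
    refine ⟨Bv / LP, ?_⟩
    intro x hx
    rw [hrep x hx]
    have hA : A = Bv * SQ / LP := by rw [eq_div_iff hLPne]; exact hrel
    rw [hA, hLQdef, hQ5]
    field_simp
    ring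
end
end

section
/- Let a₁ := (r_min c_min / (r_max c_max))^{1/2}. Let λ > 0, let m ≥ 1 be an integer, let η₀, η₁, …, η_m ∈ [-1,1], let α₁, …, α_m ∈ ℝ with Σ_{i=1}^m |α_i| < a₁, and let θ ∈ ℝ. Let w = w(λ,θ) and let w_θ be the solution of −w_θ'' = λ r w_θ with w_θ(0) = cos θ, w_θ'(0) = −(λ r(0))^{1/2} sin θ. If w(η₀) − Σ_{i=1}^m α_i w(η_i) = 0, then w_θ(η₀) − Σ_{i=1}^m α_i w_θ(η_i) ≠ 0. -/
open Set Real

noncomputable section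

lemma myConstOn {f : ℝ → ℝ}
    (hf : ∀ x ∈ Set.Icc (-1:ℝ) 1, HasDerivWithinAt f 0 (Set.Icc (-1:ℝ) 1) x) :
    ∀ x ∈ Set.Icc (-1:ℝ) 1, ∀ y ∈ Set.Icc (-1:ℝ) 1, f x = f y := by
  have hc : ContinuousOn f (Set.Icc (-1:ℝ) 1) := fun x hx => (hf x hx).continuousWithinAt
  have hm : MonotoneOn f (Set.Icc (-1:ℝ) 1) :=
    monotoneOn_of_hasDerivWithinAt_nonneg (f' := fun _ => 0) (convex_Icc _ _) hc
      (fun x hx => (hf x (interior_subset hx)).mono interior_subset)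
      (fun x _ => le_refl 0)
  have ha : AntitoneOn f (Set.Icc (-1:ℝ) 1) :=
    antitoneOn_of_hasDerivWithinAt_nonpos (f' := fun _ => 0) (convex_Icc _ _) hc
      (fun x hx => (hf x (interior_subset hx)).mono interior_subset)
      (fun x _ => le_refl 0)
  intro x hx y hy
  rcases le_total x y with h | h
  · exact le_antisymm (hm hx hy h) (ha hx hy h)
  · exact le_antisymm (ha hy hx h) (hm hy hx h)

lemma myMonoOn {f f' : ℝ → ℝ}
    (hf : ∀ x ∈ Set.Icc (-1:ℝ) 1, HasDerivWithinAt f (f' x) (Set.Icc (-1:ℝ) 1) x)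
    (h0 : ∀ x ∈ Set.Icc (-1:ℝ) 1, 0 ≤ f' x) :
    MonotoneOn f (Set.Icc (-1:ℝ) 1) :=
  monotoneOn_of_hasDerivWithinAt_nonneg (convex_Icc _ _)
    (fun x hx => (hf x hx).continuousWithinAt)
    (fun x hx => (hf x (interior_subset hx)).mono interior_subset)
    (fun x hx => h0 x (interior_subset hx))

lemma myAntiOn {f f' : ℝ → ℝ}
    (hf : ∀ x ∈ Set.Icc (-1:ℝ) 1, HasDerivWithinAt f (f' x) (Set.Icc (-1:ℝ) 1) x)
    (h0 : ∀ x ∈ Set.Icc (-1:ℝ) 1, f' x ≤ 0) :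
    AntitoneOn f (Set.Icc (-1:ℝ) 1) :=
  antitoneOn_of_hasDerivWithinAt_nonpos (convex_Icc _ _)
    (fun x hx => (hf x hx).continuousWithinAt)
    (fun x hx => (hf x (interior_subset hx)).mono interior_subset)
    (fun x hx => h0 x (interior_subset hx))

lemma energy_est (r r' : ℝ → ℝ)
    (hr1 : ∀ x ∈ Set.Icc (-1:ℝ) 1, HasDerivWithinAt r (r' x) (Set.Icc (-1:ℝ) 1) x)
    (hrpos : ∀ x ∈ Set.Icc (-1:ℝ) 1, 0 < r x)
    (rmin Mp Mm cmin : ℝ)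
    (hrmin_le : ∀ x ∈ Set.Icc (-1:ℝ) 1, rmin ≤ r x)
    (hrminpos : 0 < rmin) (hMp0 : 0 ≤ Mp) (hMm0 : 0 ≤ Mm)
    (hMp_ge : ∀ x ∈ Set.Icc (-1:ℝ) 1, r' x ≤ Mp)
    (hMm_ge : ∀ x ∈ Set.Icc (-1:ℝ) 1, -(r' x) ≤ Mm)
    (hcmin : cmin = min (Real.exp (-(2 * Mp) / rmin)) (Real.exp (-(2 * Mm) / rmin)))
    (l : ℝ) (hl : 0 < l)
    (u u1 u2 : ℝ → ℝ)
    (hu : ∀ x ∈ Set.Icc (-1:ℝ) 1, HasDerivWithinAt u (u1 x) (Set.Icc (-1:ℝ) 1) x)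
    (hu1 : ∀ x ∈ Set.Icc (-1:ℝ) 1, HasDerivWithinAt u1 (u2 x) (Set.Icc (-1:ℝ) 1) x)
    (huode : ∀ x ∈ Set.Icc (-1:ℝ) 1, u2 x = -(l * r x * u x)) :
    ∀ x ∈ Set.Icc (-1:ℝ) 1, ∀ y ∈ Set.Icc (-1:ℝ) 1,
      cmin * (u y * u y + u1 y * u1 y / (l * r y)) ≤ u x * u x + u1 x * u1 x / (l * r x) := by
  have hl0 : l ≠ 0 := hl.ne'
  set E : ℝ → ℝ := fun x => u x * u x + u1 x * u1 x / (l * r x) with hE_def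
  set Ed : ℝ → ℝ := fun x => -(u1 x * u1 x * r' x) / (l * (r x * r x)) with hEd_def
  have hEpos : ∀ x ∈ Set.Icc (-1:ℝ) 1, 0 ≤ E x := by
    intro x hx
    have h := mul_pos hl (hrpos x hx)
    exact add_nonneg (mul_self_nonneg _) (div_nonneg (mul_self_nonneg _) h.le)
  have hE : ∀ x ∈ Set.Icc (-1:ℝ) 1, HasDerivWithinAt E (Ed x) (Set.Icc (-1:ℝ) 1) x := by
    intro x hx
    have hrne : l * r x ≠ 0 := (mul_pos hl (hrpos x hx)).ne'
    have h := ((hu x hx).mul (hu x hx)).add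
      (((hu1 x hx).mul (hu1 x hx)).div ((hr1 x hx).const_mul l) hrne)
    refine h.congr_deriv ?_; symm
    have hode := huode x hx
    have hrx : r x ≠ 0 := (hrpos x hx).ne'
    rw [hode]
    simp only [hEd_def, Pi.mul_apply]
    field_simp
    ring
  set K : ℝ := Mp / rmin with hK
  set K2 : ℝ := Mm / rmin with hK2
  have hK0 : 0 ≤ K := div_nonneg hMp0 hrminpos.le
  have hK20 : 0 ≤ K2 := div_nonneg hMm0 hrminpos.le
  set F1 : ℝ → ℝ := fun x => E x * Real.exp (K * x) with hF1_def
  set F2 : ℝ → ℝ := fun x => E x * Real.exp (-(K2 * x)) with hF2_def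
  have hexp : ∀ (c x : ℝ), HasDerivAt (fun y => Real.exp (c * y)) (c * Real.exp (c * x)) x := by
    intro c x
    have h := (Real.hasDerivAt_exp (c * x)).comp x ((hasDerivAt_id x).const_mul c)
    exact (((hasDerivAt_id x).const_mul c).exp).congr_deriv (by simp [mul_comm])
  have hF1 : ∀ x ∈ Set.Icc (-1:ℝ) 1,
      HasDerivWithinAt F1 (Ed x * Real.exp (K * x) + E x * (K * Real.exp (K * x)))
        (Set.Icc (-1:ℝ) 1) x :=
    fun x hx => (hE x hx).mul (hexp K x).hasDerivWithinAt
  have hF2 : ∀ x ∈ Set.Icc (-1:ℝ) 1,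
      HasDerivWithinAt F2 (Ed x * Real.exp (-(K2 * x)) + E x * (-(K2 * Real.exp (-(K2 * x)))))
        (Set.Icc (-1:ℝ) 1) x := by
    intro x hx
    have hinner : HasDerivAt (fun y => Real.exp (-(K2 * y))) (-(K2 * Real.exp (-(K2 * x)))) x := by
      have h := hexp (-K2) x
      simpa [neg_mul] using h
    exact (hE x hx).mul hinner.hasDerivWithinAt
  have hF1mono : MonotoneOn F1 (Set.Icc (-1:ℝ) 1) := by
    apply myMonoOn hF1
    intro x hx
    have hrx := hrpos x hx
    have h1 : r' x ≤ K * r x := by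
      have ha : Mp ≤ Mp * (r x / rmin) :=
        le_mul_of_one_le_right hMp0 ((one_le_div hrminpos).mpr (hrmin_le x hx))
      have hb : K * r x = Mp * (r x / rmin) := by rw [hK]; ring
      linarith [hMp_ge x hx]
    have hid : Ed x + K * E x
        = u1 x * u1 x / (l * (r x * r x)) * (K * r x - r' x) + K * (u x * u x) := by
      simp only [hEd_def, hE_def]
      have hrx0 : r x ≠ 0 := hrx.ne'
      field_simp
      ring
    have key : 0 ≤ Ed x + K * E x := by
      rw [hid]
      have t1 : 0 ≤ u1 x * u1 x / (l * (r x * r x)) :=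
        div_nonneg (mul_self_nonneg _) (mul_pos hl (mul_pos hrx hrx)).le
      have t2 : 0 ≤ K * r x - r' x := by linarith
      have t3 : 0 ≤ K * (u x * u x) := mul_nonneg hK0 (mul_self_nonneg _)
      nlinarith
    have he : (0:ℝ) < Real.exp (K * x) := Real.exp_pos _
    nlinarith [mul_nonneg key he.le]
  have hF2anti : AntitoneOn F2 (Set.Icc (-1:ℝ) 1) := by
    apply myAntiOn hF2
    intro x hx
    have hrx := hrpos x hx
    have h1 : -(K2 * r x) ≤ r' x := by
      have ha : Mm ≤ Mm * (r x / rmin) :=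
        le_mul_of_one_le_right hMm0 ((one_le_div hrminpos).mpr (hrmin_le x hx))
      have hb : K2 * r x = Mm * (r x / rmin) := by rw [hK2]; ring
      linarith [hMm_ge x hx]
    have hid : Ed x - K2 * E x
        = -(u1 x * u1 x / (l * (r x * r x)) * (K2 * r x + r' x) + K2 * (u x * u x)) := by
      simp only [hEd_def, hE_def]
      have hrx0 : r x ≠ 0 := hrx.ne'
      field_simp
      ring
    have key : Ed x - K2 * E x ≤ 0 := by
      rw [hid]
      have t1 : 0 ≤ u1 x * u1 x / (l * (r x * r x)) :=
        div_nonneg (mul_self_nonneg _) (mul_pos hl (mul_pos hrx hrx)).le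
      have t2 : 0 ≤ K2 * r x + r' x := by linarith
      have t3 : 0 ≤ K2 * (u x * u x) := mul_nonneg hK20 (mul_self_nonneg _)
      nlinarith
    have he : (0:ℝ) < Real.exp (-(K2 * x)) := Real.exp_pos _
    nlinarith [mul_nonneg (neg_nonneg.mpr key) he.le]
  intro x hx y hy
  show cmin * E y ≤ E x
  rcases le_total x y with h | h
  · have hA : E y * Real.exp (-(K2 * y)) ≤ E x * Real.exp (-(K2 * x)) := hF2anti hx hy h
    have h1 : E y * Real.exp (K2 * (x - y)) ≤ E x := by
      have h4 : (E y * Real.exp (-(K2 * y))) * Real.exp (K2 * x)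
          ≤ (E x * Real.exp (-(K2 * x))) * Real.exp (K2 * x) :=
        mul_le_mul_of_nonneg_right hA (Real.exp_pos _).le
      calc E y * Real.exp (K2 * (x - y))
          = (E y * Real.exp (-(K2 * y))) * Real.exp (K2 * x) := by
            rw [mul_assoc, ← Real.exp_add]; ring_nf
        _ ≤ (E x * Real.exp (-(K2 * x))) * Real.exp (K2 * x) := h4
        _ = E x := by rw [mul_assoc, ← Real.exp_add]; simp
    have h6 : cmin ≤ Real.exp (K2 * (x - y)) := by
      rw [hcmin]
      refine le_trans (min_le_right _ _) (Real.exp_le_exp.mpr ?_)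
      have hxy : -2 ≤ x - y := by
        have := hx.1; have := hy.2; linarith
      have ha : -(2 * Mm) / rmin = K2 * (-2) := by rw [hK2]; ring
      rw [ha]
      exact mul_le_mul_of_nonneg_left hxy hK20
    calc cmin * E y ≤ Real.exp (K2 * (x - y)) * E y :=
          mul_le_mul_of_nonneg_right h6 (hEpos y hy)
      _ = E y * Real.exp (K2 * (x - y)) := mul_comm _ _
      _ ≤ E x := h1
  · have hA : E y * Real.exp (K * y) ≤ E x * Real.exp (K * x) := hF1mono hy hx h
    have h1 : E y * Real.exp (K * (y - x)) ≤ E x := by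
      have h4 : (E y * Real.exp (K * y)) * Real.exp (-(K * x))
          ≤ (E x * Real.exp (K * x)) * Real.exp (-(K * x)) :=
        mul_le_mul_of_nonneg_right hA (Real.exp_pos _).le
      calc E y * Real.exp (K * (y - x))
          = (E y * Real.exp (K * y)) * Real.exp (-(K * x)) := by
            rw [mul_assoc, ← Real.exp_add]; ring_nf
        _ ≤ (E x * Real.exp (K * x)) * Real.exp (-(K * x)) := h4
        _ = E x := by rw [mul_assoc, ← Real.exp_add]; simp
    have h6 : cmin ≤ Real.exp (K * (y - x)) := by
      rw [hcmin]
      refine le_trans (min_le_left _ _) (Real.exp_le_exp.mpr ?_)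
      have hxy : -2 ≤ y - x := by
        have := hy.1; have := hx.2; linarith
      have ha : -(2 * Mp) / rmin = K * (-2) := by rw [hK]; ring
      rw [ha]
      exact mul_le_mul_of_nonneg_left hxy hK0
    calc cmin * E y ≤ Real.exp (K * (y - x)) * E y :=
          mul_le_mul_of_nonneg_right h6 (hEpos y hy)
      _ = E y * Real.exp (K * (y - x)) := mul_comm _ _
      _ ≤ E x := h1

theorem stmt9
    (r r' : ℝ → ℝ) (hr : C1I r r') (hrpos : ∀ x ∈ Set.Icc (-1:ℝ) 1, 0 < r x)
    (rmin rmax Mp Mm cmin cmax : ℝ)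
    (hrmin : IsLeast (r '' Set.Icc (-1:ℝ) 1) rmin)
    (hrmax : IsGreatest (r '' Set.Icc (-1:ℝ) 1) rmax)
    (hMp : IsGreatest ((fun x => max (r' x) 0) '' Set.Icc (-1:ℝ) 1) Mp)
    (hMm : IsGreatest ((fun x => max (-(r' x)) 0) '' Set.Icc (-1:ℝ) 1) Mm)
    (hcmin : cmin = min (Real.exp (-(2 * Mp) / rmin)) (Real.exp (-(2 * Mm) / rmin)))
    (hcmax : cmax = cmin⁻¹)
    (a₁ : ℝ) (ha₁ : a₁ = Real.sqrt (rmin * cmin / (rmax * cmax)))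
    (l : ℝ) (hl : 0 < l)
    (m : ℕ) (hm : 1 ≤ m)
    (η₀ : ℝ) (hη₀ : η₀ ∈ Set.Icc (-1:ℝ) 1)
    (η : Fin m → ℝ) (hη : ∀ i, η i ∈ Set.Icc (-1:ℝ) 1)
    (α : Fin m → ℝ) (hα : ∑ i, |α i| < a₁)
    (θ : ℝ)
    (w w' w'' : ℝ → ℝ) (hw : C2I w w' w'')
    (hwode : ∀ x ∈ Set.Icc (-1:ℝ) 1, -(w'' x) = l * r x * w x)
    (hw0 : w 0 = Real.sin θ) (hw'0 : w' 0 = Real.sqrt (l * r 0) * Real.cos θ)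
    (wθ wθ' wθ'' : ℝ → ℝ) (hwθ : C2I wθ wθ' wθ'')
    (hwθode : ∀ x ∈ Set.Icc (-1:ℝ) 1, -(wθ'' x) = l * r x * wθ x)
    (hwθ0 : wθ 0 = Real.cos θ) (hwθ'0 : wθ' 0 = -(Real.sqrt (l * r 0) * Real.sin θ))
    (hΓ : w η₀ - ∑ i, α i * w (η i) = 0) :
    wθ η₀ - ∑ i, α i * wθ (η i) ≠ 0 := by
  obtain ⟨hw1, hw2, hw3⟩ := hw
  obtain ⟨hwθ1, hwθ2, hwθ3⟩ := hwθ
  obtain ⟨hr1, hr2⟩ := hr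
  intro hΓθ
  have h0I : (0:ℝ) ∈ Set.Icc (-1:ℝ) 1 := by constructor <;> norm_num
  have hrmin_le : ∀ x ∈ Set.Icc (-1:ℝ) 1, rmin ≤ r x := fun x hx => hrmin.2 ⟨x, hx, rfl⟩
  have hrmax_ge : ∀ x ∈ Set.Icc (-1:ℝ) 1, r x ≤ rmax := fun x hx => hrmax.2 ⟨x, hx, rfl⟩
  have hrminpos : 0 < rmin := by
    obtain ⟨x, hx, hxe⟩ := hrmin.1; exact hxe ▸ hrpos x hx
  have hrminmax : rmin ≤ rmax := by
    obtain ⟨x, hx, hxe⟩ := hrmin.1; exact hxe ▸ hrmax_ge x hx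
  have hrmaxpos : 0 < rmax := lt_of_lt_of_le hrminpos hrminmax
  have hMp0 : 0 ≤ Mp := by
    obtain ⟨x, hx, hxe⟩ := hMp.1; exact hxe ▸ le_max_right _ _
  have hMm0 : 0 ≤ Mm := by
    obtain ⟨x, hx, hxe⟩ := hMm.1; exact hxe ▸ le_max_right _ _
  have hMp_ge : ∀ x ∈ Set.Icc (-1:ℝ) 1, r' x ≤ Mp :=
    fun x hx => le_trans (le_max_left _ _) (hMp.2 ⟨x, hx, rfl⟩)
  have hMm_ge : ∀ x ∈ Set.Icc (-1:ℝ) 1, -(r' x) ≤ Mm :=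
    fun x hx => le_trans (le_max_left _ _) (hMm.2 ⟨x, hx, rfl⟩)
  have hcminpos : 0 < cmin := by rw [hcmin]; positivity
  have hcmin1 : cmin ≤ 1 := by
    rw [hcmin]
    refine le_trans (min_le_left _ _) ?_
    rw [Real.exp_le_one_iff]
    apply div_nonpos_of_nonpos_of_nonneg <;> nlinarith
  have hcmaxpos : 0 < cmax := by rw [hcmax]; exact inv_pos.mpr hcminpos
  -- the combination u
  obtain ⟨u, hu_def⟩ : ∃ f : ℝ → ℝ, f = fun x => wθ' η₀ * w x - w' η₀ * wθ x := ⟨_, rfl⟩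
  obtain ⟨u1, hu1_def⟩ : ∃ f : ℝ → ℝ, f = fun x => wθ' η₀ * w' x - w' η₀ * wθ' x := ⟨_, rfl⟩
  obtain ⟨u2, hu2_def⟩ : ∃ f : ℝ → ℝ, f = fun x => wθ' η₀ * w'' x - w' η₀ * wθ'' x := ⟨_, rfl⟩
  have hu : ∀ x ∈ Set.Icc (-1:ℝ) 1, HasDerivWithinAt u (u1 x) (Set.Icc (-1:ℝ) 1) x := by
    rw [hu_def, hu1_def]
    exact fun x hx => ((hw1 x hx).const_mul _).sub ((hwθ1 x hx).const_mul _)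
  have hu1 : ∀ x ∈ Set.Icc (-1:ℝ) 1, HasDerivWithinAt u1 (u2 x) (Set.Icc (-1:ℝ) 1) x := by
    rw [hu1_def, hu2_def]
    exact fun x hx => ((hw2 x hx).const_mul _).sub ((hwθ2 x hx).const_mul _)
  have huode : ∀ x ∈ Set.Icc (-1:ℝ) 1, u2 x = -(l * r x * u x) := by
    intro x hx
    have h1 := hwode x hx
    have h2 := hwθode x hx
    rw [hu2_def, hu_def]
    simp only
    linear_combination (-(wθ' η₀)) * h1 + (w' η₀) * h2
  -- Wronskian is constant
  have hW : ∀ x ∈ Set.Icc (-1:ℝ) 1,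
      HasDerivWithinAt (fun x => w x * wθ' x - w' x * wθ x) 0 (Set.Icc (-1:ℝ) 1) x := by
    intro x hx
    have h := ((hw1 x hx).mul (hwθ2 x hx)).sub ((hw2 x hx).mul (hwθ1 x hx))
    refine h.congr_deriv ?_; symm
    have h1 := hwode x hx
    have h2 := hwθode x hx
    linear_combination (-(wθ x)) * h1 + (w x) * h2
  have hWconst := myConstOn hW η₀ hη₀ 0 h0I
  have hs : 0 < Real.sqrt (l * r 0) := Real.sqrt_pos.mpr (mul_pos hl (hrpos 0 h0I))
  have huη0 : u η₀ = -(Real.sqrt (l * r 0)) := by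
    rw [hw0, hw'0, hwθ0, hwθ'0] at hWconst
    rw [hu_def]
    simp only
    linear_combination hWconst - Real.sqrt (l * r 0) * (Real.sin_sq_add_cos_sq θ)
  have hu1η0 : u1 η₀ = 0 := by rw [hu1_def]; simp only; ring
  -- energy comparison
  have hEE := energy_est r r' hr1 hrpos rmin Mp Mm cmin hrmin_le hrminpos hMp0 hMm0
    hMp_ge hMm_ge hcmin l hl u u1 u2 hu hu1 huode
  -- endgame
  have habspos : 0 < |u η₀| := by rw [huη0, abs_neg, abs_of_pos hs]; exact hs
  have habs : ∀ i, |u (η i)| ≤ Real.sqrt cmax * |u η₀| := by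
    intro i
    have hxi := hη i
    have hlr : 0 < l * r (η i) := mul_pos hl (hrpos _ hxi)
    have h1 : u (η i) * u (η i)
        ≤ u (η i) * u (η i) + u1 (η i) * u1 (η i) / (l * r (η i)) := by
      have : 0 ≤ u1 (η i) * u1 (η i) / (l * r (η i)) :=
        div_nonneg (mul_self_nonneg _) hlr.le
      linarith
    have h := hEE η₀ hη₀ (η i) hxi
    rw [hu1η0] at h
    simp only [mul_zero, zero_mul, zero_div, add_zero] at h
    have h2 : u (η i) * u (η i) + u1 (η i) * u1 (η i) / (l * r (η i))
        ≤ cmax * (u η₀ * u η₀) := by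
      rw [hcmax]
      calc u (η i) * u (η i) + u1 (η i) * u1 (η i) / (l * r (η i))
          = cmin⁻¹ * (cmin * (u (η i) * u (η i) + u1 (η i) * u1 (η i) / (l * r (η i)))) :=
            (inv_mul_cancel_left₀ hcminpos.ne' _).symm
        _ ≤ cmin⁻¹ * (u η₀ * u η₀) :=
            mul_le_mul_of_nonneg_left h (inv_nonneg.mpr hcminpos.le)
    have h3 : u (η i) * u (η i) ≤ cmax * (u η₀ * u η₀) := le_trans h1 h2
    calc |u (η i)| = Real.sqrt (u (η i) * u (η i)) := (Real.sqrt_mul_self_eq_abs _).symm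
      _ ≤ Real.sqrt (cmax * (u η₀ * u η₀)) := Real.sqrt_le_sqrt h3
      _ = Real.sqrt cmax * |u η₀| := by
          rw [Real.sqrt_mul hcmaxpos.le, Real.sqrt_mul_self_eq_abs]
  have hΓu : u η₀ = ∑ i, α i * u (η i) := by
    have e1 : w η₀ = ∑ i, α i * w (η i) := by linarith
    have e2 : wθ η₀ = ∑ i, α i * wθ (η i) := by linarith
    rw [hu_def]
    simp only
    rw [e1, e2, Finset.mul_sum, Finset.mul_sum, ← Finset.sum_sub_distrib]
    exact Finset.sum_congr rfl fun i _ => by ring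
  have hchain : |u η₀| ≤ (∑ i, |α i|) * (Real.sqrt cmax * |u η₀|) := by
    calc |u η₀| = |∑ i, α i * u (η i)| := by rw [hΓu]
      _ ≤ ∑ i, |α i * u (η i)| := Finset.abs_sum_le_sum_abs _ _
      _ ≤ ∑ i, |α i| * (Real.sqrt cmax * |u η₀|) :=
          Finset.sum_le_sum fun i _ => by
            rw [abs_mul]; exact mul_le_mul_of_nonneg_left (habs i) (abs_nonneg _)
      _ = (∑ i, |α i|) * (Real.sqrt cmax * |u η₀|) := (Finset.sum_mul _ _ _).symm
  have hsqrtcmax : 0 < Real.sqrt cmax := Real.sqrt_pos.mpr hcmaxpos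
  have hlt : (∑ i, |α i|) * (Real.sqrt cmax * |u η₀|) < a₁ * (Real.sqrt cmax * |u η₀|) :=
    mul_lt_mul_of_pos_right hα (by positivity)
  have hfin : a₁ * (Real.sqrt cmax * |u η₀|) ≤ |u η₀| := by
    have harg : 0 ≤ rmin * cmin / (rmax * cmax) := by positivity
    have h1 : a₁ * Real.sqrt cmax = Real.sqrt (rmin * cmin / (rmax * cmax) * cmax) := by
      rw [ha₁, ← Real.sqrt_mul harg]
    have h2 : rmin * cmin / (rmax * cmax) * cmax = rmin * cmin / rmax := by
      have hc : cmax ≠ 0 := hcmaxpos.ne'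
      field_simp
    have h3 : rmin * cmin / rmax ≤ 1 := by
      rw [div_le_one hrmaxpos]
      nlinarith
    have h4 : a₁ * Real.sqrt cmax ≤ 1 := by
      rw [h1, h2]
      calc Real.sqrt (rmin * cmin / rmax) ≤ Real.sqrt 1 := Real.sqrt_le_sqrt h3
        _ = 1 := Real.sqrt_one
    calc a₁ * (Real.sqrt cmax * |u η₀|) = (a₁ * Real.sqrt cmax) * |u η₀| := by ring
      _ ≤ 1 * |u η₀| := mul_le_mul_of_nonneg_right h4 (abs_nonneg _)
      _ = |u η₀| := one_mul _
  linarith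
end
end

section
/- Fix r : [-1,1] → ℝ continuously differentiable with r > 0, integers m⁻, m⁺ ≥ 1, and points η_i^± ∈ [-1,1] with η_i^+ ≠ 1, η_i^- ≠ −1. Then there exists Λ₄ > 0 such that: for all coefficients α_i^± ∈ ℝ with Σ_{i=1}^{m⁻}|α_i^-| ≤ 1/2 and Σ_{i=1}^{m⁺}|α_i^+| ≤ 1/2, if λ ≥ 0 and u is a twice continuously differentiable function on [-1,1], not identically zero, satisfying −u'' = λ r u on (−1,1) together with the multi-point boundary conditions, then λ ≥ Λ₄. -/
open Set Real

noncomputable section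

lemma poly_hasDerivAt (a b c x : ℝ) :
    HasDerivAt (fun y => a + b*y + c*y^2) (b + 2*c*x) x := by
  have h1 : HasDerivAt (fun y : ℝ => a + b*y + c*y^2)
      (0 + b*1 + c*(2*x^1)) x := by
    exact (((hasDerivAt_const x a)).add ((hasDerivAt_id x).const_mul b)).add
      (by simpa using (hasDerivAt_pow 2 x).const_mul c)
  convert h1 using 1; ring

lemma lin_hasDerivAt (b c x : ℝ) :
    HasDerivAt (fun y => b + 2*c*y) (2*c) x := by
  have h1 : HasDerivAt (fun y : ℝ => b + 2*c*y) (2*c*1) x :=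
    ((hasDerivAt_id x).const_mul (2*c)).const_add b
  simpa using h1

lemma aux_concave (f f' f'' : ℝ → ℝ)
    (h1 : ∀ x ∈ Icc (-1:ℝ) 1, HasDerivWithinAt f (f' x) (Icc (-1:ℝ) 1) x)
    (h2 : ∀ x ∈ Icc (-1:ℝ) 1, HasDerivWithinAt f' (f'' x) (Icc (-1:ℝ) 1) x)
    (h3 : ∀ x ∈ Ioo (-1:ℝ) 1, f'' x ≤ 0) :
    ∀ x ∈ Icc (-1:ℝ) 1, min (f (-1)) (f 1) ≤ f x := by
  have hconc : ConcaveOn ℝ (Icc (-1:ℝ) 1) f := by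
    apply concaveOn_of_hasDerivWithinAt2_nonpos (convex_Icc _ _)
      (fun x hx => (h1 x hx).continuousWithinAt)
    · simp only [interior_Icc]
      exact fun x hx => (h1 x (Ioo_subset_Icc_self hx)).mono Ioo_subset_Icc_self
    · simp only [interior_Icc]
      exact fun x hx => (h2 x (Ioo_subset_Icc_self hx)).mono Ioo_subset_Icc_self
    · simpa only [interior_Icc] using h3
  intro x hx
  exact hconc.ge_on_segment (left_mem_Icc.2 (by norm_num)) (right_mem_Icc.2 (by norm_num))
    (by rwa [segment_eq_Icc (by norm_num : (-1:ℝ) ≤ 1)])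

lemma barrier (u u' u'' : ℝ → ℝ)
    (h1 : ∀ x ∈ Icc (-1:ℝ) 1, HasDerivWithinAt u (u' x) (Icc (-1:ℝ) 1) x)
    (h2 : ∀ x ∈ Icc (-1:ℝ) 1, HasDerivWithinAt u' (u'' x) (Icc (-1:ℝ) 1) x)
    (K : ℝ) (hK : 0 ≤ K)
    (hbound : ∀ x ∈ Ioo (-1:ℝ) 1, |u'' x| ≤ K) :
    ∀ x ∈ Icc (-1:ℝ) 1,
      |u x - ((u 1 - u (-1))/2 * x + (u 1 + u (-1))/2)| ≤ K/2 := by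
  intro x hx
  have hg1 := aux_concave
      (fun y => u y + ((K/2 - (u 1 + u (-1))/2) + (u (-1) - u 1)/2*y + (-(K/2))*y^2))
      (fun y => u' y + ((u (-1) - u 1)/2 + 2*(-(K/2))*y))
      (fun y => u'' y + 2*(-(K/2)))
      (fun y hy => (h1 y hy).add ((poly_hasDerivAt _ _ _ y).hasDerivWithinAt))
      (fun y hy => (h2 y hy).add ((lin_hasDerivAt _ _ y).hasDerivWithinAt))
      (fun y hy => by have := abs_le.1 (hbound y hy); linarith [this.2])
      x hx
  have hg2 := aux_concave
      (fun y => -(u y) + ((K/2 + (u 1 + u (-1))/2) + (u 1 - u (-1))/2*y + (-(K/2))*y^2))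
      (fun y => -(u' y) + ((u 1 - u (-1))/2 + 2*(-(K/2))*y))
      (fun y => -(u'' y) + 2*(-(K/2)))
      (fun y hy => ((h1 y hy).neg).add ((poly_hasDerivAt _ _ _ y).hasDerivWithinAt))
      (fun y hy => ((h2 y hy).neg).add ((lin_hasDerivAt _ _ y).hasDerivWithinAt))
      (fun y hy => by have := abs_le.1 (hbound y hy); linarith [this.1])
      x hx
  have e1 : u (-1) + ((K/2 - (u 1 + u (-1))/2) + (u (-1) - u 1)/2*(-1) + (-(K/2))*(-1:ℝ)^2)
      = 0 := by ring
  have e2 : u 1 + ((K/2 - (u 1 + u (-1))/2) + (u (-1) - u 1)/2*1 + (-(K/2))*(1:ℝ)^2)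
      = 0 := by ring
  have e3 : -(u (-1)) + ((K/2 + (u 1 + u (-1))/2) + (u 1 - u (-1))/2*(-1) + (-(K/2))*(-1:ℝ)^2)
      = 0 := by ring
  have e4 : -(u 1) + ((K/2 + (u 1 + u (-1))/2) + (u 1 - u (-1))/2*1 + (-(K/2))*(1:ℝ)^2)
      = 0 := by ring
  rw [e1, e2, min_self] at hg1
  rw [e3, e4, min_self] at hg2
  rw [abs_le]
  constructor
  · nlinarith [sq_nonneg x, mul_nonneg hK (sq_nonneg x)]
  · nlinarith [sq_nonneg x, mul_nonneg hK (sq_nonneg x)]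

theorem stmt11
    (r r' : ℝ → ℝ) (hr : C1I r r') (hrpos : ∀ x ∈ Set.Icc (-1:ℝ) 1, 0 < r x)
    (mneg mpos : ℕ) (hmneg : 1 ≤ mneg) (hmpos : 1 ≤ mpos)
    (ηneg : Fin mneg → ℝ) (ηpos : Fin mpos → ℝ)
    (hηneg : ∀ i, ηneg i ∈ Set.Icc (-1:ℝ) 1 ∧ ηneg i ≠ -1)
    (hηpos : ∀ i, ηpos i ∈ Set.Icc (-1:ℝ) 1 ∧ ηpos i ≠ 1) :
    ∃ Λ₄ : ℝ, 0 < Λ₄ ∧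
      ∀ (αneg : Fin mneg → ℝ) (αpos : Fin mpos → ℝ),
        ∑ i, |αneg i| ≤ 1 / 2 → ∑ i, |αpos i| ≤ 1 / 2 →
        ∀ (l : ℝ), 0 ≤ l →
        ∀ u u' u'' : ℝ → ℝ, C2I u u' u'' →
          (∃ x ∈ Set.Icc (-1:ℝ) 1, u x ≠ 0) →
          (∀ x ∈ Set.Ioo (-1:ℝ) 1, -(u'' x) = l * r x * u x) →
          u (-1) = ∑ i, αneg i * u (ηneg i) →
          u 1 = ∑ i, αpos i * u (ηpos i) →
          Λ₄ ≤ l := by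
  have hrc : ContinuousOn r (Icc (-1:ℝ) 1) := fun x hx => (hr.1 x hx).continuousWithinAt
  obtain ⟨xr, hxr, hxrmax⟩ := isCompact_Icc.exists_isMaxOn
    (nonempty_Icc.2 (by norm_num)) hrc
  set R := r xr with hRdef
  have hRpos : 0 < R := hrpos xr hxr
  refine ⟨1/R, by positivity, ?_⟩
  intro αneg αpos hαn hαp l hl u u' u'' hu hune hode hbn hbp
  have huc : ContinuousOn u (Icc (-1:ℝ) 1) := fun x hx => (hu.1 x hx).continuousWithinAt
  obtain ⟨x₀, hx₀, hmax⟩ := isCompact_Icc.exists_isMaxOn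
    (nonempty_Icc.2 (by norm_num)) huc.abs
  set M := |u x₀| with hMdef
  have hMb : ∀ x ∈ Icc (-1:ℝ) 1, |u x| ≤ M := fun x hx => hmax hx
  have hMpos : 0 < M := by
    obtain ⟨x, hx, hne⟩ := hune
    exact lt_of_lt_of_le (abs_pos.2 hne) (hMb x hx)
  -- boundary bounds
  have bsum : ∀ (m : ℕ) (α : Fin m → ℝ) (η : Fin m → ℝ), (∀ i, η i ∈ Icc (-1:ℝ) 1) →
      ∑ i, |α i| ≤ 1/2 → |∑ i, α i * u (η i)| ≤ M/2 := by
    intro m α η hη hα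
    calc |∑ i, α i * u (η i)| ≤ ∑ i, |α i * u (η i)| := Finset.abs_sum_le_sum_abs _ _
    _ ≤ ∑ i, |α i| * M := by
        apply Finset.sum_le_sum; intro i _
        rw [abs_mul]
        exact mul_le_mul_of_nonneg_left (hMb _ (hη i)) (abs_nonneg _)
    _ = (∑ i, |α i|) * M := (Finset.sum_mul _ _ _).symm
    _ ≤ (1/2) * M := mul_le_mul_of_nonneg_right hα hMpos.le
    _ = M/2 := by ring
  have hbn' : |u (-1)| ≤ M/2 := by
    rw [hbn]; exact bsum _ _ _ (fun i => (hηneg i).1) hαn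
  have hbp' : |u 1| ≤ M/2 := by
    rw [hbp]; exact bsum _ _ _ (fun i => (hηpos i).1) hαp
  set K := l * R * M with hKdef
  have hK : 0 ≤ K := by positivity
  have hupp : ∀ x ∈ Ioo (-1:ℝ) 1, |u'' x| ≤ K := by
    intro x hx
    have hx' := Ioo_subset_Icc_self hx
    have h2 : |u x| ≤ M := hMb x hx'
    have h3 : 0 < r x := hrpos x hx'
    have h4 : r x ≤ R := hxrmax hx'
    have h5 : u'' x = -(l * r x * u x) := by linarith [hode x hx]
    rw [h5, abs_neg, abs_mul, abs_mul, abs_of_nonneg hl, abs_of_pos h3]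
    have h6 : l * r x * |u x| ≤ l * R * M :=
      mul_le_mul (mul_le_mul_of_nonneg_left h4 hl) h2 (abs_nonneg _)
        (mul_nonneg hl hRpos.le)
    linarith
  have hbar := barrier u u' u'' hu.1 hu.2.1 K hK hupp x₀ hx₀
  have h5 := abs_le.1 hbar
  have ha := abs_le.1 hbn'
  have hc := abs_le.1 hbp'
  have hx0 := hx₀
  rw [mem_Icc] at hx0
  have hfin : M ≤ M/2 + K/2 := by
    rcases abs_cases (u x₀) with ⟨he, _⟩ | ⟨he, _⟩
    · have hMe : M = u x₀ := hMdef.trans he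
      nlinarith [mul_nonneg (by linarith : (0:ℝ) ≤ 1 + x₀) (by linarith [hc.2] : 0 ≤ M/2 - u 1),
        mul_nonneg (by linarith : (0:ℝ) ≤ 1 - x₀) (by linarith [ha.2] : 0 ≤ M/2 - u (-1))]
    · have hMe : M = -(u x₀) := hMdef.trans he
      nlinarith [mul_nonneg (by linarith : (0:ℝ) ≤ 1 + x₀) (by linarith [hc.1] : 0 ≤ M/2 + u 1),
        mul_nonneg (by linarith : (0:ℝ) ≤ 1 - x₀) (by linarith [ha.1] : 0 ≤ M/2 + u (-1))]
  rw [div_le_iff₀ hRpos]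
  nlinarith [hfin, hMpos]
end
end
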